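/- arXiv:1709.06044 — 7 statements merged into one kernel-verified Lean document; each statement's English description precedes it below -/
import Mathlib

section
/- If D is a Steiner triple system on v points with 3-rank v - m where m ≥ 2, then v = 3^{m-1} · w where w ≡ 1 or 3 (mod 6). -/
/-- A Steiner triple system given by its block family: every block has 3 points
and every pair of distinct points lies in exactly one block. -/
def isSTS {α : Type*} (B : Finset (Finset α)) : Prop :=
  (∀ b ∈ B, b.card = 3) ∧ ∀ x y : α, x ≠ y → ∃! b, b ∈ B ∧ x ∈ b ∧ y ∈ b

/-- The GF(p)-code spanned by the rows of the block-point incidence matrix. -/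
noncomputable def stsCode (p : ℕ) {α : Type*} [DecidableEq α] (B : Finset (Finset α)) :
    Submodule (ZMod p) (α → ZMod p) :=
  Submodule.span (ZMod p)
    ((fun b : Finset α => (fun x : α => if x ∈ b then (1 : ZMod p) else 0)) '' ↑B)

lemma zmod3_cases : ∀ r : ZMod 3, r = 0 ∨ r = 1 ∨ r = 2 := by decide

section Aux
variable {α : Type*} [DecidableEq α] {B : Finset (Finset α)}

lemma triple_perm1 (x y z : α) : ({x, y, z} : Finset α) = {z, y, x} := by
  ext w; simp only [Finset.mem_insert, Finset.mem_singleton]; tauto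

lemma triple_perm2 (x y z : α) : ({x, y, z} : Finset α) = {x, z, y} := by
  ext w; simp only [Finset.mem_insert, Finset.mem_singleton]; tauto

lemma sts_block_shape (h : isSTS B) {b : Finset α} (hb : b ∈ B) {x y : α}
    (hxy : x ≠ y) (hx : x ∈ b) (hy : y ∈ b) :
    ∃ z, z ≠ x ∧ z ≠ y ∧ b = {x, y, z} := by
  have h3 := h.1 b hb
  have hy' : y ∈ b.erase x := Finset.mem_erase.2 ⟨hxy.symm, hy⟩
  have h1 : ((b.erase x).erase y).card = 1 := by
    rw [Finset.card_erase_of_mem hy', Finset.card_erase_of_mem hx, h3]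
  obtain ⟨z, hz⟩ := Finset.card_eq_one.1 h1
  have hzmem : z ∈ (b.erase x).erase y := hz ▸ Finset.mem_singleton_self z
  have hzy : z ≠ y := (Finset.mem_erase.1 hzmem).1
  have hzx : z ≠ x := (Finset.mem_erase.1 (Finset.mem_erase.1 hzmem).2).1
  have hzb : z ∈ b := (Finset.mem_erase.1 (Finset.mem_erase.1 hzmem).2).2
  refine ⟨z, hzx, hzy, ?_⟩
  ext w
  simp only [Finset.mem_insert, Finset.mem_singleton]
  constructor
  · intro hw
    by_cases h1 : w = x; · tauto
    by_cases h2 : w = y; · tauto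
    right; right
    have : w ∈ (b.erase x).erase y := by
      exact Finset.mem_erase.2 ⟨h2, Finset.mem_erase.2 ⟨h1, hw⟩⟩
    rw [hz] at this; simpa using this
  · rintro (rfl | rfl | rfl) <;> assumption

lemma sts_third (h : isSTS B) {x y : α} (hxy : x ≠ y) :
    ∃ z, z ≠ x ∧ z ≠ y ∧ ({x, y, z} : Finset α) ∈ B := by
  obtain ⟨b, ⟨hb, hx, hy⟩, -⟩ := h.2 x y hxy
  obtain ⟨z, h1, h2, rfl⟩ := sts_block_shape h hb hxy hx hy
  exact ⟨z, h1, h2, hb⟩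

lemma sts_third_unique (h : isSTS B) {x y z w : α} (hxy : x ≠ y)
    (hz : ({x, y, z} : Finset α) ∈ B) (hw : ({x, y, w} : Finset α) ∈ B)
    (hzx : z ≠ x) (hzy : z ≠ y) (hwx : w ≠ x) (hwy : w ≠ y) : z = w := by
  obtain ⟨b, -, hu⟩ := h.2 x y hxy
  have e1 : ({x, y, z} : Finset α) = b := hu _ ⟨hz, by simp, by simp⟩
  have e2 : ({x, y, w} : Finset α) = b := hu _ ⟨hw, by simp, by simp⟩
  have : z ∈ ({x, y, w} : Finset α) := by rw [e2, ← e1]; simp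
  simp only [Finset.mem_insert, Finset.mem_singleton] at this
  tauto

lemma sts_choice (h : isSTS B) : ∃ t : α → α → α,
    ∀ {x y : α}, x ≠ y → (t x y ≠ x ∧ t x y ≠ y ∧ ({x, y, t x y} : Finset α) ∈ B) := by
  classical
  refine ⟨fun x y => if hxy : x ≠ y then (sts_third h hxy).choose else x, ?_⟩
  intro x y hxy
  simp only [dif_pos hxy]
  exact (sts_third h hxy).choose_spec

end Aux

section Aux2
variable {α : Type*} [DecidableEq α] {B : Finset (Finset α)}

lemma sts_t_inv_left (h : isSTS B) {t : α → α → α}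
    (ht : ∀ {x y : α}, x ≠ y → (t x y ≠ x ∧ t x y ≠ y ∧ ({x, y, t x y} : Finset α) ∈ B))
    {x y : α} (hxy : x ≠ y) : t (t x y) y = x := by
  obtain ⟨h1, h2, h3⟩ := ht hxy
  obtain ⟨g1, g2, g3⟩ := ht h2
  rw [triple_perm1] at h3
  exact sts_third_unique h h2 g3 h3 g1 g2 (Ne.symm h1) hxy

lemma sts_t_inv_right (h : isSTS B) {t : α → α → α}
    (ht : ∀ {x y : α}, x ≠ y → (t x y ≠ x ∧ t x y ≠ y ∧ ({x, y, t x y} : Finset α) ∈ B))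
    {x y : α} (hxy : x ≠ y) : t x (t x y) = y := by
  obtain ⟨h1, h2, h3⟩ := ht hxy
  obtain ⟨g1, g2, g3⟩ := ht (Ne.symm h1)
  rw [triple_perm2] at h3
  exact sts_third_unique h (Ne.symm h1) g3 h3 g1 g2 (Ne.symm hxy) (Ne.symm h2)

lemma sts_sub_card (h : isSTS B) (P : Finset α) (hne : P.Nonempty)
    (hcl : ∀ b ∈ B, ∀ x ∈ P, ∀ y ∈ P, x ≠ y → x ∈ b → y ∈ b → b ⊆ P) :
    P.card % 6 = 1 ∨ P.card % 6 = 3 := by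
  classical
  obtain ⟨t, ht⟩ := sts_choice h
  have htP : ∀ x ∈ P, ∀ y ∈ P, x ≠ y → t x y ∈ P := by
    intro x hx y hy hxy
    exact hcl _ (ht hxy).2.2 x hx y hy hxy (by simp) (by simp) (by simp)
  obtain ⟨x0, hx0⟩ := hne
  -- parity
  have heven : Even (P.erase x0).card := by
    have hmem : ∀ y ∈ P.erase x0, ({y, t x0 y} : Finset α) ∈
        (P.erase x0).image (fun y => ({y, t x0 y} : Finset α)) :=
      fun y hy => Finset.mem_image_of_mem _ hy
    rw [Finset.card_eq_sum_card_fiberwise hmem]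
    rw [Finset.sum_const_nat (m := 2) ?hfib]
    · exact ⟨_, by ring⟩
    intro p hp
    obtain ⟨y1, hy1, rfl⟩ := Finset.mem_image.1 hp
    have hy1P : y1 ∈ P := (Finset.mem_erase.1 hy1).2
    have hy1x0 : y1 ≠ x0 := (Finset.mem_erase.1 hy1).1
    have hx0y1 : x0 ≠ y1 := hy1x0.symm
    obtain ⟨hz1, hz2, hz3⟩ := ht hx0y1
    have hzP : t x0 y1 ∈ P := htP x0 hx0 y1 hy1P hx0y1
    have hzs : t x0 y1 ∈ P.erase x0 := Finset.mem_erase.2 ⟨hz1, hzP⟩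
    have hinv : t x0 (t x0 y1) = y1 := sts_t_inv_right h ht hx0y1
    have hkey : (P.erase x0).filter
        (fun y => ({y, t x0 y} : Finset α) = {y1, t x0 y1}) = {y1, t x0 y1} := by
      ext y
      simp only [Finset.mem_filter, Finset.mem_insert, Finset.mem_singleton]
      constructor
      · rintro ⟨hy, hey⟩
        have hmy : y ∈ ({y, t x0 y} : Finset α) := by simp
        rw [hey] at hmy; simpa using hmy
      · rintro (rfl | rfl)
        · exact ⟨hy1, rfl⟩
        · exact ⟨hzs, by rw [hinv]; exact Finset.pair_comm _ _⟩
    rw [hkey]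
    exact Finset.card_pair (Ne.symm hz2)
  have h2 : 1 ≤ P.card := Finset.card_pos.2 ⟨x0, hx0⟩
  have hodd : P.card % 2 = 1 := by
    have h1 : (P.erase x0).card = P.card - 1 := Finset.card_erase_of_mem hx0
    obtain ⟨k, hk⟩ := heven
    omega
  -- mod 3
  have hdvd : (3:ℕ) ∣ P.card * P.card - P.card := by
    have hmem : ∀ p ∈ P.offDiag, ({p.1, p.2, t p.1 p.2} : Finset α) ∈
        P.offDiag.image (fun p => ({p.1, p.2, t p.1 p.2} : Finset α)) :=
      fun p hp => Finset.mem_image_of_mem _ hp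
    have hcard := Finset.card_eq_sum_card_fiberwise hmem
    rw [← Finset.offDiag_card, hcard, Finset.sum_const_nat (m := 6) ?hfib2]
    · exact ⟨(Finset.image (fun p => ({p.1, p.2, t p.1 p.2} : Finset α)) P.offDiag).card * 2, by ring⟩
    intro b hb
    obtain ⟨⟨x1, y1⟩, hp, rfl⟩ := Finset.mem_image.1 hb
    obtain ⟨hx1, hy1, hxy1⟩ := Finset.mem_offDiag.1 hp
    have hbB : ({x1, y1, t x1 y1} : Finset α) ∈ B := (ht hxy1).2.2
    have hbP : ({x1, y1, t x1 y1} : Finset α) ⊆ P :=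
      hcl _ hbB x1 hx1 y1 hy1 hxy1 (by simp) (by simp)
    have key : P.offDiag.filter
        (fun p => ({p.1, p.2, t p.1 p.2} : Finset α) = {x1, y1, t x1 y1})
        = ({x1, y1, t x1 y1} : Finset α).offDiag := by
      ext ⟨u, v⟩
      simp only [Finset.mem_filter, Finset.mem_offDiag]
      constructor
      · rintro ⟨⟨hu, hv, huv⟩, he⟩
        refine ⟨?_, ?_, huv⟩ <;> rw [← he] <;> simp
      · rintro ⟨hu, hv, huv⟩
        refine ⟨⟨hbP hu, hbP hv, huv⟩, ?_⟩
        obtain ⟨b', -, hu'⟩ := h.2 u v huv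
        have e1 := hu' _ ⟨(ht huv).2.2, by simp, by simp⟩
        have e2 := hu' _ ⟨hbB, hu, hv⟩
        exact e1.trans e2.symm
    rw [key, Finset.offDiag_card, h.1 _ hbB]
  have hring : ∀ w : ℕ, w * w - w = w * (w - 1) := by
    intro w
    rcases w with _ | n
    · simp
    · have : (n+1) * (n+1) = (n+1) * n + (n+1) := by ring
      simp only [Nat.succ_sub_one]
      omega
  rw [hring] at hdvd
  rcases (Nat.Prime.dvd_mul (by norm_num : Nat.Prime 3)).1 hdvd with h3 | h3 <;> omega
end Aux2

set_option maxHeartbeats 1000000 in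
theorem stmt12 {α : Type*} [Fintype α] [DecidableEq α] (B : Finset (Finset α))
    (hSTS : isSTS B) (m : ℕ) (hm : 2 ≤ m)
    (hdim : Module.finrank (ZMod 3) (stsCode 3 B) + m = Fintype.card α) :
    ∃ w : ℕ, Fintype.card α = 3 ^ (m - 1) * w ∧ (w % 6 = 1 ∨ w % 6 = 3) := by
  classical
  haveI : Fact (Nat.Prime 3) := ⟨by norm_num⟩
  -- the incidence matrix and the dual code K
  set M : Matrix {b // b ∈ B} α (ZMod 3) := fun b x => if x ∈ b.1 then 1 else 0 with hM
  set K : Submodule (ZMod 3) (α → ZMod 3) := LinearMap.ker M.mulVecLin with hK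
  have hKmem : ∀ f : α → ZMod 3, f ∈ K ↔ ∀ b ∈ B, ∑ x ∈ b, f x = 0 := by
    intro f
    have hv : ∀ b : {b // b ∈ B}, M.mulVecLin f b = ∑ x ∈ b.1, f x := by
      intro b
      rw [Matrix.mulVecLin_apply]
      simp [hM, Matrix.mulVec, dotProduct, ite_mul,
        Finset.sum_ite_mem]
    constructor
    · intro hf b hb
      have h0 := congrFun (LinearMap.mem_ker.1 hf) ⟨b, hb⟩
      rw [hv ⟨b, hb⟩] at h0
      exact h0
    · intro hf
      rw [hK, LinearMap.mem_ker]
      funext b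
      rw [hv b]
      exact hf b.1 b.2
  have hC : stsCode 3 B = LinearMap.range (Matrix.transpose M).mulVecLin := by
    rw [Matrix.range_mulVecLin, stsCode]
    apply congrArg
    ext f
    simp only [Set.mem_image, Set.mem_range, Finset.mem_coe]
    constructor
    · rintro ⟨b, hb, rfl⟩; exact ⟨⟨b, hb⟩, rfl⟩
    · rintro ⟨⟨b, hb⟩, rfl⟩; exact ⟨b, hb, rfl⟩
  have hrank : Module.finrank (ZMod 3) (stsCode 3 B)
      = Module.finrank (ZMod 3) (LinearMap.range M.mulVecLin) := by
    rw [hC]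
    exact Matrix.rank_transpose M
  have hKrank : Module.finrank (ZMod 3) K = m := by
    have hrn := LinearMap.finrank_range_add_finrank_ker M.mulVecLin
    rw [Module.finrank_pi (ZMod 3), ← hK] at hrn
    omega
  have hcardpos : 0 < Fintype.card α := by omega
  -- evaluation functionals
  haveI : FiniteDimensional (ZMod 3) ↥K := inferInstance
  set e : α → Module.Dual (ZMod 3) ↥K := fun x => (LinearMap.proj x).comp K.subtype with he_def
  have he : ∀ (x : α) (k : ↥K), e x k = (k : α → ZMod 3) x := fun _ _ => rfl
  have hc_mem : (fun _ : α => (1 : ZMod 3)) ∈ K := by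
    rw [hKmem]
    intro b hb
    rw [Finset.sum_const, hSTS.1 b hb]
    show (3 : ℕ) • (1 : ZMod 3) = 0
    rw [nsmul_eq_mul, ZMod.natCast_self, zero_mul]
  set c : ↥K := ⟨fun _ => 1, hc_mem⟩ with hc
  have hec : ∀ x : α, e x c = 1 := fun x => rfl
  obtain ⟨t, ht⟩ := sts_choice hSTS
  have hsum : ∀ x y : α, x ≠ y → e x + e y + e (t x y) = 0 := by
    intro x y hxy
    obtain ⟨h1, h2, h3⟩ := ht hxy
    apply LinearMap.ext; intro k
    have hk := (hKmem k).1 k.2 _ h3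
    rw [show ({x, y, t x y} : Finset α) = insert x (insert y {t x y}) from rfl] at hk
    rw [Finset.sum_insert (by simp [hxy, Ne.symm h1]),
      Finset.sum_insert (by simp [Ne.symm h2]), Finset.sum_singleton] at hk
    simpa [he, ← add_assoc] using hk
  have h3t : ∀ u : Module.Dual (ZMod 3) ↥K, u + u + u = 0 := by
    intro u
    have h0 : ((1 : ZMod 3) + 1 + 1) • u = u + u + u := by
      rw [add_smul, add_smul, one_smul]
    rw [show (1 : ZMod 3) + 1 + 1 = 0 from rfl, zero_smul] at h0
    exact h0.symm
  have hneg : ∀ u : Module.Dual (ZMod 3) ↥K, -u - u = u := by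
    intro u
    calc -u - u = -(u + u + u) + u := by abel
    _ = -0 + u := by rw [h3t u]
    _ = u := by rw [neg_zero, zero_add]
  have hthird : ∀ x y : α, x ≠ y → e (t x y) = - e x - e y := by
    intro x y hxy
    calc e (t x y) = (e x + e y + e (t x y)) - e x - e y := by abel
    _ = - e x - e y := by rw [hsum x y hxy]; abel
  have hspan : Submodule.span (ZMod 3) (Set.range e) = ⊤ := by
    apply Submodule.span_eq_top_of_ne_zero
    intro z hz0
    have hzne : (z : α → ZMod 3) ≠ 0 := fun h => hz0 (Subtype.ext h)
    obtain ⟨x, hx⟩ := Function.ne_iff.1 hzne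
    exact ⟨e x, ⟨x, rfl⟩, hx⟩
  have hα : Nonempty α := Fintype.card_pos_iff.1 hcardpos
  obtain ⟨x0⟩ := hα
  set a : Module.Dual (ZMod 3) ↥K := e x0 with ha
  set Λ : Module.Dual (ZMod 3) ↥K →ₗ[ZMod 3] ZMod 3 :=
    { toFun := fun φ => φ c, map_add' := fun φ ψ => rfl, map_smul' := fun r φ => rfl } with hΛ
  have hΛe : ∀ x, Λ (e x) = 1 := fun x => hec x
  have hΛa : Λ a = 1 := hΛe x0
  have hΛsurj : LinearMap.range Λ = ⊤ := by
    rw [LinearMap.range_eq_top]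
    intro r
    refine ⟨r • a, ?_⟩
    rw [map_smul, hΛa, smul_eq_mul, mul_one]
  have hdual : Module.finrank (ZMod 3) (Module.Dual (ZMod 3) ↥K) = m := by
    rw [Subspace.dual_finrank_eq, hKrank]
  have hkerΛ : Module.finrank (ZMod 3) (LinearMap.ker Λ) = m - 1 := by
    have h0 := LinearMap.finrank_range_add_finrank_ker Λ
    rw [hΛsurj, finrank_top, hdual, Module.finrank_self] at h0
    omega
  -- closure of the image under third-point operation
  have hclosure : ∀ u v : Module.Dual (ZMod 3) ↥K,
      u ∈ Set.range e → v ∈ Set.range e → -u - v ∈ Set.range e := by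
    rintro _ _ ⟨x, rfl⟩ ⟨y, rfl⟩
    by_cases hxy : x = y
    · subst hxy
      rw [hneg]
      exact ⟨x, rfl⟩
    · exact ⟨t x y, hthird x y hxy⟩
  have hDadd : ∀ ψ χ : Module.Dual (ZMod 3) ↥K, ψ + a ∈ Set.range e →
      χ + a ∈ Set.range e → (ψ + χ) + a ∈ Set.range e := by
    intro ψ χ hψ hχ
    have h1 := hclosure _ _ hψ hχ
    have h2 := hclosure _ _ h1 (⟨x0, rfl⟩ : a ∈ Set.range e)
    have h3 : -(-(ψ + a) - (χ + a)) - a = (ψ + χ) + a := by abel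
    rwa [h3] at h2
  set D : Submodule (ZMod 3) (Module.Dual (ZMod 3) ↥K) :=
    { carrier := {ψ | ψ + a ∈ Set.range e}
      add_mem' := fun hψ hχ => hDadd _ _ hψ hχ
      zero_mem' := by
        show (0 : Module.Dual (ZMod 3) ↥K) + a ∈ Set.range e
        rw [zero_add]; exact ⟨x0, rfl⟩
      smul_mem' := by
        intro r ψ hψ
        have hr := zmod3_cases r
        rcases hr with rfl | rfl | rfl
        · show (0 : ZMod 3) • ψ + a ∈ Set.range e
          rw [zero_smul, zero_add]; exact ⟨x0, rfl⟩
        · show (1 : ZMod 3) • ψ + a ∈ Set.range e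
          rw [one_smul]; exact hψ
        · show (2 : ZMod 3) • ψ + a ∈ Set.range e
          rw [two_smul]; exact hDadd _ _ hψ hψ } with hD
  have hDmem : ∀ ψ, ψ ∈ D ↔ ψ + a ∈ Set.range e := fun _ => Iff.rfl
  have hDle : D ≤ LinearMap.ker Λ := by
    intro ψ hψ
    obtain ⟨x, hx⟩ := (hDmem ψ).1 hψ
    have h1 : Λ (ψ + a) = 1 := by rw [← hx]; exact hΛe x
    rw [map_add, hΛa] at h1
    rw [LinearMap.mem_ker]
    have h2 : Λ ψ + 1 = 0 + 1 := by rw [h1, zero_add]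
    exact add_right_cancel h2
  have hsup : (⊤ : Submodule (ZMod 3) (Module.Dual (ZMod 3) ↥K))
      ≤ D ⊔ Submodule.span (ZMod 3) {a} := by
    rw [← hspan]
    apply Submodule.span_le.2
    rintro _ ⟨x, rfl⟩
    have h1 : e x - a ∈ D := by
      rw [hDmem, sub_add_cancel]; exact ⟨x, rfl⟩
    have h2 : a ∈ Submodule.span (ZMod 3) {a} := Submodule.mem_span_singleton_self a
    have h3 := Submodule.add_mem_sup h1 h2
    rwa [sub_add_cancel] at h3
  have hane : a ≠ 0 := by
    intro h
    have h1 := hΛa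
    rw [h, map_zero] at h1
    exact one_ne_zero h1.symm
  have hDrank : m - 1 ≤ Module.finrank (ZMod 3) D := by
    have h1 := Submodule.finrank_sup_add_finrank_inf_eq D (Submodule.span (ZMod 3) {a})
    have h2 : Module.finrank (ZMod 3) (Submodule.span (ZMod 3) {a}) = 1 :=
      finrank_span_singleton hane
    have h3 : m ≤ Module.finrank (ZMod 3) ↥(D ⊔ Submodule.span (ZMod 3) {a}) := by
      have h4 := Submodule.finrank_mono hsup
      rwa [finrank_top, hdual] at h4
    omega
  have hDker : D = LinearMap.ker Λ :=
    Submodule.eq_of_le_of_finrank_le hDle (by rw [hkerΛ]; exact hDrank)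
  have hrange_iff : ∀ φ, φ ∈ Set.range e ↔ Λ φ = 1 := by
    intro φ
    constructor
    · rintro ⟨x, rfl⟩; exact hΛe x
    · intro hφ
      have h1 : φ - a ∈ LinearMap.ker Λ := by
        rw [LinearMap.mem_ker, map_sub, hφ, hΛa, sub_self]
      rw [← hDker, hDmem, sub_add_cancel] at h1
      exact h1
  -- finiteness of the dual space
  haveI hfinD : Finite (Module.Dual (ZMod 3) ↥K) :=
    Finite.of_injective (fun φ => (φ : ↥K → ZMod 3)) DFunLike.coe_injective
  haveI : Fintype (Module.Dual (ZMod 3) ↥K) := Fintype.ofFinite _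
  set T : Finset (Module.Dual (ZMod 3) ↥K) := Finset.univ.image e with hT
  have hmemT : ∀ φ, φ ∈ T ↔ φ ∈ Set.range e := by
    intro φ
    rw [hT]
    simp only [Finset.mem_image, Finset.mem_univ, true_and, Set.mem_range]
  set fib : Module.Dual (ZMod 3) ↥K → Finset α :=
    fun φ => Finset.univ.filter (fun x => e x = φ) with hfib
  have hfibmem : ∀ φ x, x ∈ fib φ ↔ e x = φ := by
    intro φ x
    rw [hfib]
    simp only [Finset.mem_filter, Finset.mem_univ, true_and]
  have hpart : Fintype.card α = ∑ φ ∈ T, (fib φ).card := by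
    rw [← Finset.card_univ]
    exact Finset.card_eq_sum_card_fiberwise
      (fun x _ => Finset.mem_image_of_mem e (Finset.mem_univ x))
  have hstep : ∀ φ ψ, φ ∈ T → ψ ∈ T → φ ≠ ψ → (fib φ).card = (fib (-φ - ψ)).card := by
    intro φ ψ hφ hψ hne
    obtain ⟨y0, hy0⟩ : ∃ y0, e y0 = ψ := (hmemT ψ).1 hψ
    have hχψ : -φ - ψ ≠ ψ := by
      intro h
      apply hne
      have h1 : φ = -(-φ - ψ) - ψ := by abel
      rw [h] at h1
      rw [hneg] at h1
      exact h1
    apply Finset.card_nbij' (i := fun x => t x y0) (j := fun z => t z y0)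
    · intro x hx
      have hex : e x = φ := (hfibmem φ x).1 hx
      have hxy0 : x ≠ y0 := by
        intro h; apply hne; rw [← hex, h, hy0]
      rw [Finset.mem_coe, hfibmem, hthird x y0 hxy0, hex, hy0]
    · intro z hz
      have hez : e z = -φ - ψ := (hfibmem _ z).1 hz
      have hzy0 : z ≠ y0 := by
        intro h; apply hχψ; rw [← hez, h, hy0]
      rw [Finset.mem_coe, hfibmem, hthird z y0 hzy0, hez, hy0]
      abel
    · intro x hx
      have hex : e x = φ := (hfibmem φ x).1 hx
      have hxy0 : x ≠ y0 := by
        intro h; apply hne; rw [← hex, h, hy0]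
      exact sts_t_inv_left hSTS ht hxy0
    · intro z hz
      have hez : e z = -φ - ψ := (hfibmem _ z).1 hz
      have hzy0 : z ≠ y0 := by
        intro h; apply hχψ; rw [← hez, h, hy0]
      exact sts_t_inv_left hSTS ht hzy0
  have haT : a ∈ T := (hmemT a).2 ⟨x0, rfl⟩
  have hwconst : ∀ φ ∈ T, (fib φ).card = (fib a).card := by
    intro φ hφ
    by_cases h : φ = a
    · rw [h]
    · have h1 := hstep φ a hφ haT h
      have h2 := hstep a φ haT hφ (Ne.symm h)
      rw [show -φ - a = -a - φ by abel] at h1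
      rw [h1, ← h2]
  have hsum_w : Fintype.card α = T.card * (fib a).card := by
    rw [hpart, Finset.sum_const_nat (m := (fib a).card) hwconst]
  have hTcard : T.card = 3 ^ (m - 1) := by
    have hcardker : Fintype.card ↥(LinearMap.ker Λ) = 3 ^ (m - 1) := by
      have h0 := Module.card_eq_pow_finrank (K := ZMod 3) (V := ↥(LinearMap.ker Λ))
      rw [ZMod.card, hkerΛ] at h0
      exact h0
    rw [← hcardker, ← Fintype.card_coe T]
    apply Fintype.card_congr
    refine
      { toFun := fun φ => ⟨φ.1 - a, ?_⟩
        invFun := fun ψ => ⟨ψ.1 + a, ?_⟩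
        left_inv := ?_
        right_inv := ?_ }
    · have h1 := (hrange_iff φ.1).1 ((hmemT φ.1).1 φ.2)
      rw [LinearMap.mem_ker, map_sub, h1, hΛa, sub_self]
    · rw [hmemT, hrange_iff, map_add, hΛa, LinearMap.mem_ker.1 ψ.2, zero_add]
    · intro φ
      apply Subtype.ext
      simp only [sub_add_cancel]
    · intro ψ
      apply Subtype.ext
      simp only [add_sub_cancel_right]
  -- the fiber of a is a subsystem
  have hfib_x0 : x0 ∈ fib a := (hfibmem a x0).2 rfl
  have hclP : ∀ b ∈ B, ∀ x ∈ fib a, ∀ y ∈ fib a, x ≠ y → x ∈ b → y ∈ b → b ⊆ fib a := by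
    intro b hb x hx y hy hxy hxb hyb
    obtain ⟨z, hz1, hz2, rfl⟩ := sts_block_shape hSTS hb hxy hxb hyb
    have hex : e x = a := (hfibmem a x).1 hx
    have hey : e y = a := (hfibmem a y).1 hy
    have hzt : z = t x y :=
      sts_third_unique hSTS hxy hb (ht hxy).2.2 hz1 hz2 (ht hxy).1 (ht hxy).2.1
    have hez : e z = a := by
      rw [hzt, hthird x y hxy, hex, hey]
      exact hneg a
    intro u hu
    simp only [Finset.mem_insert, Finset.mem_singleton] at hu
    rcases hu with rfl | rfl | rfl
    · exact hx
    · exact hy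
    · exact (hfibmem a u).2 hez
  have hmod := sts_sub_card hSTS (fib a) ⟨x0, hfib_x0⟩ hclP
  exact ⟨(fib a).card, by rw [hsum_w, hTcard], hmod⟩
end

section
/- If D is a Steiner triple system on v points with 3-rank v - m, m ≥ 2, and C is its ternary code, then the dual code C⊥ consists of the scalar multiples of the all-one vector together with codewords of constant weight 2v/3 in which exactly half of the nonzero entries equal 1 and half equal 2. -/
theorem stmt13 {α : Type*} [Fintype α] [DecidableEq α] (B : Finset (Finset α))
    (hSTS : isSTS B) (m : ℕ) (hm : 2 ≤ m)
    (hdim : Module.finrank (ZMod 3) (stsCode 3 B) + m = Fintype.card α)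
    (c : α → ZMod 3) (hc : ∀ b ∈ B, ∑ x ∈ b, c x = 0) :
    (∃ a : ZMod 3, c = fun _ => a) ∨
      (3 * (Finset.univ.filter fun x => c x ≠ 0).card = 2 * Fintype.card α ∧
       (Finset.univ.filter fun x => c x = 1).card
         = (Finset.univ.filter fun x => c x = 2).card) := by
  classical
  obtain ⟨hcard3, hpair⟩ := hSTS
  have hz3 : ∀ a : ZMod 3, a = 0 ∨ a = 1 ∨ a = 2 := by decide
  set A : ZMod 3 → Finset α := fun i => Finset.univ.filter (fun x => c x = i) with hA
  set M : Finset (Finset α) :=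
    B.filter (fun b => ∃ x ∈ b, ∃ y ∈ b, c x ≠ c y) with hM
  -- every mixed block has exactly one point of each value
  have mixed_block : ∀ b ∈ M, ∀ i : ZMod 3, ∃! x, x ∈ b ∧ c x = i := by
    intro b hb i
    rw [hM, Finset.mem_filter] at hb
    obtain ⟨hbB, u, hu, v, hv, huv⟩ := hb
    obtain ⟨x, y, z, hxy, hxz, hyz, rfl⟩ := Finset.card_eq_three.mp (hcard3 _ hbB)
    have hsum : c x + c y + c z = 0 := by
      have h := hc _ hbB
      rw [Finset.sum_insert (by simp [hxy, hxz]),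
        Finset.sum_insert (by simp [hyz]), Finset.sum_singleton, ← add_assoc] at h
      exact h
    have hnotall : ¬ (c x = c y ∧ c y = c z) := by
      rintro ⟨h1, h2⟩
      apply huv
      simp only [Finset.mem_insert, Finset.mem_singleton] at hu hv
      rcases hu with rfl | rfl | rfl <;> rcases hv with rfl | rfl | rfl <;>
        simp [h1, h2, h1.trans h2]
    have hkey : ∀ a b d : ZMod 3, a + b + d = 0 → ¬(a = b ∧ b = d) →
        a ≠ b ∧ a ≠ d ∧ b ≠ d ∧ ∀ i : ZMod 3, i = a ∨ i = b ∨ i = d := by decide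
    obtain ⟨hd1, hd2, hd3, hall⟩ := hkey _ _ _ hsum hnotall
    have huniq : ∀ w ∈ ({x, y, z} : Finset α), ∀ w' ∈ ({x, y, z} : Finset α),
        c w = c w' → w = w' := by
      intro w hw w' hw' he
      simp only [Finset.mem_insert, Finset.mem_singleton] at hw hw'
      rcases hw with rfl | rfl | rfl <;> rcases hw' with rfl | rfl | rfl <;>
        first
          | rfl
          | exact absurd he hd1 | exact absurd he hd2 | exact absurd he hd3
          | exact absurd he.symm hd1 | exact absurd he.symm hd2 | exact absurd he.symm hd3
    rcases hall i with rfl | rfl | rfl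
    · exact ⟨x, ⟨by simp, rfl⟩, fun w ⟨hw, hwc⟩ => huniq w hw x (by simp) hwc⟩
    · exact ⟨y, ⟨by simp, rfl⟩, fun w ⟨hw, hwc⟩ => huniq w hw y (by simp) hwc⟩
    · exact ⟨z, ⟨by simp, rfl⟩, fun w ⟨hw, hwc⟩ => huniq w hw z (by simp) hwc⟩
  -- counting: for i ≠ j, |A i| * |A j| = |M|
  have key : ∀ i j : ZMod 3, i ≠ j → (A i).card * (A j).card = M.card := by
    intro i j hij
    rw [← Finset.card_product]
    have hmem : ∀ p : α × α, p ∈ (A i) ×ˢ (A j) → c p.1 = i ∧ c p.2 = j := by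
      intro p hp
      rw [Finset.mem_product, hA, Finset.mem_filter, Finset.mem_filter] at hp
      exact ⟨hp.1.2, hp.2.2⟩
    have hne : ∀ p : α × α, p ∈ (A i) ×ˢ (A j) → p.1 ≠ p.2 := by
      intro p hp h
      obtain ⟨h1, h2⟩ := hmem p hp
      exact hij (h1 ▸ h ▸ h2 ▸ rfl)
    refine Finset.card_bij (fun p hp => (hpair p.1 p.2 (hne p hp)).choose) ?_ ?_ ?_
    · intro p hp
      obtain ⟨h1, h2⟩ := hmem p hp
      obtain ⟨⟨hB', hm1, hm2⟩, _⟩ := (hpair p.1 p.2 (hne p hp)).choose_spec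
      rw [hM, Finset.mem_filter]
      exact ⟨hB', p.1, hm1, p.2, hm2, by rw [h1, h2]; exact hij⟩
    · intro p hp q hq heq
      obtain ⟨hp1, hp2⟩ := hmem p hp
      obtain ⟨hq1, hq2⟩ := hmem q hq
      obtain ⟨⟨hB', hm1, hm2⟩, _⟩ := (hpair p.1 p.2 (hne p hp)).choose_spec
      obtain ⟨⟨hB'', hn1, hn2⟩, _⟩ := (hpair q.1 q.2 (hne q hq)).choose_spec
      have heq' : (hpair p.1 p.2 (hne p hp)).choose = (hpair q.1 q.2 (hne q hq)).choose := heq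
      have hbM : (hpair p.1 p.2 (hne p hp)).choose ∈ M := by
        rw [hM, Finset.mem_filter]
        exact ⟨hB', p.1, hm1, p.2, hm2, by rw [hp1, hp2]; exact hij⟩
      have e1 : p.1 = q.1 :=
        (mixed_block _ hbM i).unique ⟨hm1, hp1⟩ ⟨heq' ▸ hn1, hq1⟩
      have e2 : p.2 = q.2 :=
        (mixed_block _ hbM j).unique ⟨hm2, hp2⟩ ⟨heq' ▸ hn2, hq2⟩
      exact Prod.ext e1 e2
    · intro b hb
      obtain ⟨x, ⟨hxb, hxc⟩, _⟩ := mixed_block b hb i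
      obtain ⟨y, ⟨hyb, hyc⟩, _⟩ := mixed_block b hb j
      have hbB : b ∈ B := (Finset.mem_filter.mp hb).1
      have hxyne : x ≠ y := fun h => hij (hxc ▸ h ▸ hyc ▸ rfl)
      have hpmem : (x, y) ∈ (A i) ×ˢ (A j) := by
        rw [Finset.mem_product, hA, Finset.mem_filter, Finset.mem_filter]
        exact ⟨⟨Finset.mem_univ _, hxc⟩, Finset.mem_univ _, hyc⟩
      refine ⟨(x, y), hpmem, ?_⟩
      exact ((hpair x y (hne _ hpmem)).choose_spec.2 b ⟨hbB, hxb, hyb⟩).symm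
  have h01 := key 0 1 (by decide)
  have h02 := key 0 2 (by decide)
  have h12 := key 1 2 (by decide)
  have hempty : ∀ i : ZMod 3, (A i).card = 0 → ∀ x, c x ≠ i := by
    intro i hi x hx
    have : x ∈ A i := by rw [hA, Finset.mem_filter]; exact ⟨Finset.mem_univ _, hx⟩
    rw [Finset.card_eq_zero.mp hi] at this
    exact Finset.notMem_empty _ this
  have hsplit : (Finset.univ.filter fun x => c x ≠ 0).card = (A 1).card + (A 2).card := by
    have hun : (Finset.univ.filter fun x => c x ≠ 0) = A 1 ∪ A 2 := by
      ext x
      rw [hA, Finset.mem_union, Finset.mem_filter, Finset.mem_filter, Finset.mem_filter]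
      rcases hz3 (c x) with h | h | h <;> simp [h] <;> decide
    rw [hun, Finset.card_union_of_disjoint]
    rw [Finset.disjoint_left]
    intro x hx1 hx2
    rw [hA, Finset.mem_filter] at hx1 hx2
    rw [hx1.2] at hx2
    exact absurd hx2.2 (by decide)
  have hcardα : Fintype.card α = (A 0).card + ((A 1).card + (A 2).card) := by
    have h' : (A 0).card + (Finset.univ.filter fun x => c x ≠ 0).card = Fintype.card α := by
      rw [← Finset.card_univ]
      exact Finset.card_filter_add_card_filter_not (fun x => c x = 0)
    rw [hsplit] at h'
    omega
  by_cases h1 : (A 1).card = 0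
  · by_cases h2 : (A 2).card = 0
    · left
      refine ⟨0, funext fun x => ?_⟩
      rcases hz3 (c x) with h | h | h
      · exact h
      · exact absurd h (hempty 1 h1 x)
      · exact absurd h (hempty 2 h2 x)
    · -- n1 = 0, n2 > 0 : then n0 = 0 and c is constantly 2
      have h0 : (A 0).card = 0 := by
        have : (A 0).card * (A 2).card = 0 := by rw [h02, ← h12, h1, zero_mul]
        exact (Nat.mul_eq_zero.mp this).resolve_right h2
      left
      refine ⟨2, funext fun x => ?_⟩
      rcases hz3 (c x) with h | h | h
      · exact absurd h (hempty 0 h0 x)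
      · exact absurd h (hempty 1 h1 x)
      · exact h
  · by_cases h2 : (A 2).card = 0
    · have h0 : (A 0).card = 0 := by
        have : (A 0).card * (A 1).card = 0 := by
          rw [h01, ← h12, h2, Nat.mul_zero]
        exact (Nat.mul_eq_zero.mp this).resolve_right h1
      left
      refine ⟨1, funext fun x => ?_⟩
      rcases hz3 (c x) with h | h | h
      · exact absurd h (hempty 0 h0 x)
      · exact h
      · exact absurd h (hempty 2 h2 x)
    · -- n1, n2 > 0; then n0 > 0 as well, and n0 = n1 = n2
      have h0 : (A 0).card ≠ 0 := by
        intro h0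
        have : (A 1).card * (A 2).card = 0 := by rw [h12, ← h01, h0, zero_mul]
        rcases Nat.mul_eq_zero.mp this with h | h
        · exact h1 h
        · exact h2 h
      have e12 : (A 1).card = (A 2).card :=
        Nat.eq_of_mul_eq_mul_left (Nat.pos_of_ne_zero h0) (h01.trans h02.symm)
      have e01 : (A 0).card = (A 1).card := by
        have : (A 1).card * (A 0).card = (A 1).card * (A 2).card := by
          rw [Nat.mul_comm, h01, h12]
        have := Nat.eq_of_mul_eq_mul_left (Nat.pos_of_ne_zero h1) this
        rw [this, e12]
      right
      constructor
      · rw [hsplit, hcardα]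
        omega
      · exact e12
end

section
/- The 3-rank of any Steiner triple system on 3^n points is at least 3^n - 1 - n, with equality if and only if the system is isomorphic to the design AG_1(n,3) of points and lines of the affine geometry AG(n,3). -/
namespace STS14



open Module Submodule Finset

lemma zmod3 (a : ZMod 3) : a + a + a = 0 := by revert a; decide

lemma h3 : (3 : ZMod 3) = 0 := by decide

variable {α : Type*} [DecidableEq α]

lemma exists_third {b : Finset α} (h3c : b.card = 3) {x y : α} (hx : x ∈ b) (hy : y ∈ b)
    (hxy : x ≠ y) : ∃ z, z ≠ x ∧ z ≠ y ∧ b = {x, y, z} := by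
  have hsub : ({x, y} : Finset α) ⊆ b := by
    intro t ht; simp only [mem_insert, mem_singleton] at ht; rcases ht with rfl | rfl <;> assumption
  have hcard : (b \ {x, y}).card = 1 := by
    rw [Finset.card_sdiff_of_subset hsub, h3c, Finset.card_insert_of_notMem (by simpa using hxy),
      Finset.card_singleton]
  obtain ⟨z, hz⟩ := Finset.card_eq_one.mp hcard
  have hzmem : z ∈ b \ ({x, y} : Finset α) := hz ▸ Finset.mem_singleton_self z
  rw [Finset.mem_sdiff, Finset.mem_insert, Finset.mem_singleton] at hzmem
  refine ⟨z, fun h => hzmem.2 (Or.inl h), fun h => hzmem.2 (Or.inr h), ?_⟩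
  have := Finset.sdiff_union_of_subset hsub
  rw [hz] at this
  ext t
  rw [← this]
  simp only [Finset.mem_union, Finset.mem_singleton, Finset.mem_insert]
  tauto

lemma sum_triple {x y z : α} (hxy : x ≠ y) (hxz : x ≠ z) (hyz : y ≠ z) (f : α → ZMod 3) :
    ∑ t ∈ ({x, y, z} : Finset α), f t = f x + f y + f z := by
  rw [Finset.sum_insert (by simp [hxy, hxz]), Finset.sum_insert (by simpa using hyz),
    Finset.sum_singleton, add_assoc]



open Module Submodule Finset

variable {α : Type*} [Fintype α] [DecidableEq α]

/-- incidence matrix -/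
noncomputable def incM (B : Finset (Finset α)) : Matrix {b // b ∈ B} α (ZMod 3) :=
  Matrix.of fun b x => if x ∈ b.1 then (1 : ZMod 3) else 0

/-- the dual code -/
noncomputable def dualW (B : Finset (Finset α)) : Submodule (ZMod 3) (α → ZMod 3) :=
  LinearMap.ker (incM B).mulVecLin

lemma mem_dualW {B : Finset (Finset α)} {f : α → ZMod 3} :
    f ∈ dualW B ↔ ∀ b ∈ B, ∑ x ∈ b, f x = 0 := by
  classical
  simp only [dualW, LinearMap.mem_ker, Matrix.mulVecLin_apply]
  constructor
  · intro h b hb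
    have := congr_fun h ⟨b, hb⟩
    simpa [incM, Matrix.mulVec, dotProduct, ite_mul, Finset.sum_ite_mem] using this
  · intro h
    funext b
    simpa [incM, Matrix.mulVec, dotProduct, ite_mul, Finset.sum_ite_mem] using h b.1 b.2

lemma rank_formula (B : Finset (Finset α)) :
    Module.finrank (ZMod 3) (stsCode 3 B) + Module.finrank (ZMod 3) (dualW B)
      = Fintype.card α := by
  classical
  have h1 : stsCode 3 B = Submodule.span (ZMod 3) (Set.range (incM B)) := by
    rw [stsCode]
    congr 1
    rw [Set.image_eq_range]
    rfl
  have h2 : Module.finrank (ZMod 3) (stsCode 3 B) = (incM B).rank := by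
    rw [h1, (incM B).rank_eq_finrank_span_row]; rfl
  rw [h2, dualW]
  have := LinearMap.finrank_range_add_finrank_ker (incM B).mulVecLin
  rw [Matrix.rank]
  rw [this, Module.finrank_pi]

/-- evaluation map into the dual of the dual code -/
noncomputable def ev (B : Finset (Finset α)) (x : α) : Module.Dual (ZMod 3) (dualW B) :=
  (LinearMap.proj x).comp (dualW B).subtype

@[simp] lemma ev_apply {B : Finset (Finset α)} (x : α) (f : dualW B) :
    ev B x f = (f : α → ZMod 3) x := rfl

lemma ev_triple_zero {B : Finset (Finset α)} {x y z : α} (hxy : x ≠ y) (hxz : x ≠ z)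
    (hyz : y ≠ z) (hb : ({x, y, z} : Finset α) ∈ B) :
    ev B x + ev B y + ev B z = 0 := by
  apply LinearMap.ext
  intro f
  have := (mem_dualW.mp f.2) _ hb
  rw [sum_triple hxy hxz hyz] at this
  simpa using this

lemma ev_block {B : Finset (Finset α)} (hSTS : isSTS B) {x y : α} (hxy : x ≠ y) :
    ∃ z, z ≠ x ∧ z ≠ y ∧ ({x, y, z} : Finset α) ∈ B ∧ ev B x + ev B y + ev B z = 0 := by
  obtain ⟨b, ⟨hbB, hxb, hyb⟩, -⟩ := hSTS.2 x y hxy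
  obtain ⟨z, hzx, hzy, rfl⟩ := exists_third (hSTS.1 b hbB) hxb hyb hxy
  exact ⟨z, hzx, hzy, hbB, ev_triple_zero hxy (Ne.symm hzx) (Ne.symm hzy) hbB⟩

lemma ev_exists {B : Finset (Finset α)} (hSTS : isSTS B) (x y : α) :
    ∃ z : α, ev B x + ev B y + ev B z = 0 := by
  by_cases hxy : x = y
  · subst hxy
    exact ⟨x, by apply LinearMap.ext; intro f; simpa using zmod3 _⟩
  · obtain ⟨z, -, -, -, hz⟩ := ev_block hSTS hxy
    exact ⟨z, hz⟩

lemma span_range_ev (B : Finset (Finset α)) :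
    Submodule.span (ZMod 3) (Set.range (ev B)) = ⊤ := by
  by_contra h
  obtain ⟨φ, hφ0, hφ⟩ := Submodule.exists_dual_map_eq_bot_of_lt_top
    (p := Submodule.span (ZMod 3) (Set.range (ev B))) (lt_top_iff_ne_top.mpr h) inferInstance
  set w := (Module.evalEquiv (ZMod 3) (dualW B)).symm φ with hw
  have hker : ∀ x : α, (w : α → ZMod 3) x = 0 := by
    intro x
    have hx : ev B x ∈ Submodule.span (ZMod 3) (Set.range (ev B)) :=
      Submodule.subset_span ⟨x, rfl⟩
    have hmem : φ (ev B x) ∈ (⊥ : Submodule (ZMod 3) (ZMod 3)) := by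
      rw [← hφ]; exact Submodule.mem_map_of_mem hx
    have h0 : φ (ev B x) = 0 := Submodule.mem_bot _ |>.mp hmem
    have := Module.apply_evalEquiv_symm_apply (ZMod 3) (dualW B) (ev B x) φ
    rw [← hw] at this
    rw [← this] at h0
    exact h0
  have hw0 : w = 0 := Subtype.ext (funext hker)
  apply hφ0
  have : φ = Module.evalEquiv (ZMod 3) (dualW B) w := (LinearEquiv.apply_symm_apply _ _).symm
  rw [this, hw0, map_zero]

lemma dual3 (v : Module.Dual (ZMod 3) (dualW (α := α) B)) : v + v + v = 0 := by
  apply LinearMap.ext; intro f; simpa using zmod3 (v f)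

/-- The subgroup of differences of evaluation functionals. -/
noncomputable def Vsub {B : Finset (Finset α)} (hSTS : isSTS B) (x₀ : α) :
    Submodule (ZMod 3) (Module.Dual (ZMod 3) (dualW B)) :=
  AddSubgroup.toZModSubmodule 3
  { carrier := {u | ∃ x, ev B x - ev B x₀ = u}
    zero_mem' := ⟨x₀, sub_self _⟩
    add_mem' := by
      rintro u v ⟨x, rfl⟩ ⟨y, rfl⟩
      obtain ⟨z, hz⟩ := ev_exists hSTS x y
      obtain ⟨w, hw⟩ := ev_exists hSTS z x₀
      refine ⟨w, ?_⟩
      have h1 : ev B w = ev B x + ev B y - ev B x₀ := by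
        have h2 : ev B z = -(ev B x) - ev B y := by
          rw [← sub_eq_zero] at hz ⊢
          rw [← hz]; abel
        rw [h2] at hw
        rw [← sub_eq_zero] at hw ⊢
        rw [← hw]; abel
      rw [h1]; abel
    neg_mem' := by
      rintro u ⟨x, rfl⟩
      obtain ⟨z, hz⟩ := ev_exists hSTS x x₀
      refine ⟨z, ?_⟩
      have h2 : ev B z = -(ev B x) - ev B x₀ := by
        rw [← sub_eq_zero] at hz ⊢
        rw [← hz]; abel
      rw [h2]
      have h30 := dual3 (ev B x₀)
      rw [← sub_eq_zero]
      rw [← sub_eq_zero] at h30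
      calc -(ev B x) - ev B x₀ - ev B x₀ - -(ev B x - ev B x₀) 
          = -(ev B x₀ + ev B x₀ + ev B x₀ - 0) := by abel
        _ = 0 := by rw [h30]; simp }

lemma mem_Vsub {B : Finset (Finset α)} {hSTS : isSTS B} {x₀ : α}
    {u : Module.Dual (ZMod 3) (dualW B)} :
    u ∈ Vsub hSTS x₀ ↔ ∃ x, ev B x - ev B x₀ = u := Iff.rfl

set_option maxHeartbeats 1000000 in
lemma key {B : Finset (Finset α)} (hSTS : isSTS B) (n : ℕ) (hv : Fintype.card α = 3 ^ n) :
    Module.finrank (ZMod 3) (dualW B) ≤ n + 1 ∧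
    (Module.finrank (ZMod 3) (dualW B) = n + 1 →
      ∃ e : α ≃ (Fin n → ZMod 3), ∀ b : Finset α, b ∈ B ↔
        ∃ x y z : Fin n → ZMod 3, x ≠ y ∧ y ≠ z ∧ x ≠ z ∧ x + y + z = 0 ∧
          b.image (fun a => e a) = {x, y, z}) := by
  classical
  have hne : Nonempty α := Fintype.card_pos_iff.mp (by rw [hv]; positivity)
  obtain ⟨x₀⟩ := hne
  haveI : Finite (Module.Dual (ZMod 3) (dualW B)) := Module.finite_of_finite (ZMod 3)
  haveI : Fintype (Module.Dual (ZMod 3) (dualW B)) :=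
    Fintype.ofFinite (Module.Dual (ZMod 3) (dualW B))
  set V := Vsub hSTS x₀ with hV
  haveI : Fintype V := Fintype.ofFinite V
  -- injection from V into α
  have hspec : ∀ u : V, ∃ x : α, ev B x - ev B x₀ = (u : Module.Dual (ZMod 3) (dualW B)) := fun u => mem_Vsub.mp u.2
  choose ψ hψ using hspec
  have hψinj : Function.Injective ψ := by
    intro u u' h
    apply Subtype.ext
    rw [← hψ u, ← hψ u', h]
  have hcard_le : Fintype.card V ≤ Fintype.card α := Fintype.card_le_of_injective ψ hψinj
  have hcardV : Fintype.card V = 3 ^ Module.finrank (ZMod 3) V := by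
    have := card_eq_pow_finrank (K := ZMod 3) (V := V)
    rwa [ZMod.card] at this
  have hfV : Module.finrank (ZMod 3) V ≤ n := by
    have : (3:ℕ) ^ Module.finrank (ZMod 3) V ≤ 3 ^ n := by rw [← hcardV, ← hv]; exact hcard_le
    exact (Nat.pow_le_pow_iff_right (by norm_num)).mp this
  -- sup
  have hsup : V ⊔ Submodule.span (ZMod 3) ({ev B x₀} : Set (Module.Dual (ZMod 3) (dualW B))) = ⊤ := by
    refine le_antisymm le_top ?_
    rw [← span_range_ev B]
    rw [Submodule.span_le]
    rintro _ ⟨x, rfl⟩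
    rw [SetLike.mem_coe, Submodule.mem_sup]
    exact ⟨ev B x - ev B x₀, mem_Vsub.mpr ⟨x, rfl⟩, ev B x₀,
      Submodule.subset_span rfl, by abel⟩
  have hDrank : Module.finrank (ZMod 3) (Module.Dual (ZMod 3) (dualW B))
      = Module.finrank (ZMod 3) (dualW B) :=
    Subspace.dual_finrank_eq
  have hs1 : Module.finrank (ZMod 3)
      (Submodule.span (ZMod 3) ({ev B x₀} : Set (Module.Dual (ZMod 3) (dualW B)))) ≤ 1 := by
    simpa using finrank_span_le_card ({ev B x₀} : Set (Module.Dual (ZMod 3) (dualW B)))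
  have hsum := Submodule.finrank_sup_add_finrank_inf_eq V
    (Submodule.span (ZMod 3) ({ev B x₀} : Set (Module.Dual (ZMod 3) (dualW B))))
  have htop : Module.finrank (ZMod 3)
      ↥(V ⊔ Submodule.span (ZMod 3) ({ev B x₀} : Set (Module.Dual (ZMod 3) (dualW B))))
      = Module.finrank (ZMod 3) (Module.Dual (ZMod 3) (dualW B)) := by
    rw [hsup]; exact finrank_top _ _
  have hb1 : Module.finrank (ZMod 3) (dualW B) ≤ Module.finrank (ZMod 3) V + 1 := by
    rw [← hDrank, ← htop]; omega
  refine ⟨by omega, ?_⟩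
  -- equality case
  intro heq
  have hfVn : Module.finrank (ZMod 3) V = n := by omega
  have hcards : Fintype.card α = Fintype.card V := by rw [hcardV, hfVn, hv]
  set ρ : α → V := fun x => ⟨ev B x - ev B x₀, mem_Vsub.mpr ⟨x, rfl⟩⟩ with hρ
  have hρsurj : Function.Surjective ρ := by
    intro u
    obtain ⟨x, hx⟩ := mem_Vsub.mp u.2
    exact ⟨x, Subtype.ext hx⟩
  have hρbij : Function.Bijective ρ :=
    (Fintype.bijective_iff_surjective_and_card ρ).mpr ⟨hρsurj, hcards⟩
  let bV : Basis (Fin n) (ZMod 3) V := Module.finBasisOfFinrankEq (ZMod 3) V hfVn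
  let φ : V ≃ₗ[ZMod 3] (Fin n → ZMod 3) := bV.equivFun
  let e : α ≃ (Fin n → ZMod 3) := (Equiv.ofBijective ρ hρbij).trans φ.toEquiv
  have he_def : ∀ x : α, e x = φ (ρ x) := fun x => rfl
  have hkey : ∀ x y z : α, (ev B x + ev B y + ev B z = 0) ↔ (e x + e y + e z = 0) := by
    intro x y z
    have hcoe : ((ρ x + ρ y + ρ z : V) : Module.Dual (ZMod 3) (dualW B))
        = ev B x + ev B y + ev B z - (ev B x₀ + ev B x₀ + ev B x₀) := by
      simp only [hρ, Submodule.coe_add]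
      abel
    have hρiff : (ρ x + ρ y + ρ z = 0) ↔ (ev B x + ev B y + ev B z = 0) := by
      rw [← Subtype.coe_inj, hcoe, dual3 (ev B x₀), sub_zero, ZeroMemClass.coe_zero]
    rw [← hρiff]
    simp only [he_def]
    constructor
    · intro h
      rw [← map_add φ, ← map_add φ, h, φ.map_zero]
    · intro h
      apply φ.injective
      rw [map_add φ, map_add φ, φ.map_zero]
      exact h
  refine ⟨e, fun b => ⟨?_, ?_⟩⟩
  · intro hb
    obtain ⟨x, y, z, hxy, hxz, hyz, rfl⟩ := Finset.card_eq_three.mp (hSTS.1 b hb)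
    refine ⟨e x, e y, e z, e.injective.ne hxy, e.injective.ne hyz, e.injective.ne hxz,
      (hkey x y z).mp (ev_triple_zero hxy hxz hyz hb), ?_⟩
    simp
  · rintro ⟨X, Y, Z, hXY, hYZ, hXZ, hsum0, himg⟩
    have hxy : e.symm X ≠ e.symm Y := fun h => hXY (e.symm.injective h)
    obtain ⟨z', hz'x, hz'y, hb', hev⟩ := ev_block hSTS hxy
    have h1 := (hkey _ _ z').mp hev
    rw [e.apply_symm_apply, e.apply_symm_apply] at h1
    have hez' : e z' = Z := add_left_cancel (h1.trans hsum0.symm)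
    have hz'' : e.symm Z = z' := by rw [← hez', Equiv.symm_apply_apply]
    have hb_eq : b = {e.symm X, e.symm Y, e.symm Z} := by
      have h2 := congrArg (Finset.image e.symm) himg
      rw [Finset.image_image] at h2
      simpa [Function.comp] using h2
    rw [hb_eq, hz'']
    exact hb'

lemma vec3 (v : Fin n → ZMod 3) : v + v + v = 0 := funext fun i => zmod3 (v i)

lemma finrank_dualW_of_iso {B : Finset (Finset α)} (n : ℕ)
    (e : α ≃ (Fin n → ZMod 3))
    (hiso : ∀ b : Finset α, b ∈ B ↔ ∃ x y z : Fin n → ZMod 3, x ≠ y ∧ y ≠ z ∧ x ≠ z ∧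
      x + y + z = 0 ∧ b.image (fun a => e a) = {x, y, z}) :
    Module.finrank (ZMod 3) (dualW B) = n + 1 := by
  classical
  set L : ((Fin n → ZMod 3) × ZMod 3) →ₗ[ZMod 3] (α → ZMod 3) :=
  { toFun := fun p => fun t => (∑ i, e t i * p.1 i) + p.2
    map_add' := by
      intro p q; funext t
      simp only [Prod.fst_add, Pi.add_apply, Prod.snd_add, mul_add, Finset.sum_add_distrib]
      ring
    map_smul' := by
      intro c p; funext t
      simp only [Prod.smul_fst, Prod.smul_snd, Pi.smul_apply, smul_eq_mul, RingHom.id_apply,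
        Finset.mul_sum]
      ring_nf
      rw [Finset.mul_sum]
      congr 1
      · apply Finset.sum_congr rfl; intro i _; ring } with hL
  -- blocks of B in terms of e
  have hmem : ∀ X Y Z : Fin n → ZMod 3, X ≠ Y → Y ≠ Z → X ≠ Z → X + Y + Z = 0 →
      ({e.symm X, e.symm Y, e.symm Z} : Finset α) ∈ B := by
    intro X Y Z h1 h2 h3' h4
    refine (hiso _).mpr ⟨X, Y, Z, h1, h2, h3', h4, ?_⟩
    have : ∀ W : Fin n → ZMod 3, e (e.symm W) = W := fun W => e.apply_symm_apply W
    simp [Finset.image_insert, this]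
  have hblock : ∀ b ∈ B, ∃ X Y Z : Fin n → ZMod 3, X ≠ Y ∧ Y ≠ Z ∧ X ≠ Z ∧ X + Y + Z = 0 ∧
      b = {e.symm X, e.symm Y, e.symm Z} := by
    intro b hb
    obtain ⟨X, Y, Z, h1, h2, h3', h4, himg⟩ := (hiso b).mp hb
    refine ⟨X, Y, Z, h1, h2, h3', h4, ?_⟩
    have h5 := congrArg (Finset.image e.symm) himg
    rw [Finset.image_image] at h5
    simpa [Function.comp] using h5
  -- range L ≤ dualW
  have hsub1 : LinearMap.range L ≤ dualW B := by
    rintro _ ⟨⟨a, c⟩, rfl⟩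
    rw [mem_dualW]
    intro b hb
    obtain ⟨X, Y, Z, h1, h2, h3', h4, rfl⟩ := hblock b hb
    rw [sum_triple (fun h => h1 (e.symm.injective h)) (fun h => h3' (e.symm.injective h))
      (fun h => h2 (e.symm.injective h))]
    show ((∑ i, e (e.symm X) i * a i) + c) + ((∑ i, e (e.symm Y) i * a i) + c)
        + ((∑ i, e (e.symm Z) i * a i) + c) = 0
    simp only [e.apply_symm_apply]
    have hsum' : (∑ i, X i * a i) + (∑ i, Y i * a i) + (∑ i, Z i * a i) = 0 := by
      rw [← Finset.sum_add_distrib, ← Finset.sum_add_distrib]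
      apply Finset.sum_eq_zero; intro i _
      have : X i + Y i + Z i = 0 := by
        have := congrFun h4 i; simpa using this
      rw [← add_mul, ← add_mul, this, zero_mul]
    linear_combination hsum' + c * h3
  -- dualW ≤ range L
  have hsub2 : dualW B ≤ LinearMap.range L := by
    intro f hf
    set g : (Fin n → ZMod 3) → ZMod 3 := fun v => f (e.symm v) with hg
    have hS0 : ∀ X Y Z : Fin n → ZMod 3, X ≠ Y → Y ≠ Z → X ≠ Z → X + Y + Z = 0 →
        g X + g Y + g Z = 0 := by
      intro X Y Z h1 h2 h3' h4
      have hb := hmem X Y Z h1 h2 h3' h4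
      have := mem_dualW.mp hf _ hb
      rwa [sum_triple (fun h => h1 (e.symm.injective h)) (fun h => h3' (e.symm.injective h))
        (fun h => h2 (e.symm.injective h))] at this
    have hneg : ∀ w : Fin n → ZMod 3, g (-w) + g w + g 0 = 0 := by
      intro w
      by_cases hw : w = 0
      · subst hw; rw [neg_zero]; exact zmod3 (g 0)
      · have hww : -w ≠ w := by
          intro hcon
          apply hw
          have h1' : w + w = 0 := by rw [← neg_add_cancel w, hcon]
          have h2' := vec3 w
          rwa [h1', zero_add] at h2'
        exact hS0 (-w) w 0 hww hw (neg_ne_zero.mpr hw) (by simp)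
    have hadd : ∀ u v : Fin n → ZMod 3, g (u + v) - g 0 = (g u - g 0) + (g v - g 0) := by
      intro u v
      by_cases huv : u = v
      · subst huv
        have hvv : u + u = -u := by
          funext i
          simp only [Pi.add_apply, Pi.neg_apply]
          linear_combination zmod3 (u i)
        rw [hvv]
        linear_combination hneg u - g u * h3
      · have h1 : u ≠ -(u + v) := by
          intro hcon
          apply huv
          funext i
          have hci := congrFun hcon i
          simp only [Pi.neg_apply, Pi.add_apply] at hci
          linear_combination zmod3 (u i) - hci
        have h2 : v ≠ -(u + v) := by
          intro hcon
          apply huv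
          funext i
          have hci := congrFun hcon i
          simp only [Pi.neg_apply, Pi.add_apply] at hci
          linear_combination hci - zmod3 (v i)
        have hS := hS0 u v (-(u + v)) huv h2 h1 (add_neg_cancel _)
        have hN := hneg (u + v)
        linear_combination hN - hS
    let H : (Fin n → ZMod 3) →+ ZMod 3 :=
      { toFun := fun v => g v - g 0
        map_zero' := sub_self _
        map_add' := hadd }
    let Hl : (Fin n → ZMod 3) →ₗ[ZMod 3] ZMod 3 := H.toZModLinearMap 3
    set a : Fin n → ZMod 3 := fun i => Hl (fun j => if i = j then 1 else 0) with ha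
    have hrep : ∀ v : Fin n → ZMod 3, Hl v = ∑ i, v i * a i := by
      intro v
      conv_lhs => rw [pi_eq_sum_univ v]
      rw [map_sum]
      apply Finset.sum_congr rfl
      intro i _
      rw [map_smul, smul_eq_mul]
    refine ⟨(a, g 0), ?_⟩
    funext t
    show (∑ i, e t i * a i) + g 0 = f t
    have hv := hrep (e t)
    have hgt : g (e t) = f t := by rw [hg]; simp
    have hHl : Hl (e t) = g (e t) - g 0 := rfl
    rw [← hv, hHl, hgt]
    ring
  have hrange : LinearMap.range L = dualW B := le_antisymm hsub1 hsub2
  have hinj : Function.Injective L := by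
    rw [← LinearMap.ker_eq_bot, eq_bot_iff]
    rintro ⟨a, c⟩ hp
    have hp' : L (a, c) = 0 := hp
    have h0 : (∑ i, e (e.symm 0) i * a i) + c = 0 := congrFun hp' (e.symm 0)
    simp only [e.apply_symm_apply, Pi.zero_apply, zero_mul, Finset.sum_const_zero,
      zero_add] at h0
    have ha' : ∀ j, a j = 0 := by
      intro j
      have hj : (∑ i, e (e.symm fun i => if i = j then (1 : ZMod 3) else 0) i * a i) + c = 0 :=
        congrFun hp' (e.symm fun i => if i = j then 1 else 0)
      simp only [e.apply_symm_apply, ite_mul, one_mul, zero_mul, Finset.sum_ite_eq,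
        Finset.sum_ite_eq', Finset.mem_univ, if_true, h0, add_zero] at hj
      exact hj
    simp only [Submodule.mem_bot, Prod.mk_eq_zero]
    exact ⟨funext ha', h0⟩
  rw [← hrange, LinearMap.finrank_range_of_inj hinj, Module.finrank_prod, Module.finrank_pi,
    Module.finrank_self, Fintype.card_fin]

end STS14

theorem stmt14 {α : Type*} [Fintype α] [DecidableEq α] (B : Finset (Finset α))
    (hSTS : isSTS B) (n : ℕ) (hv : Fintype.card α = 3 ^ n) :
    3 ^ n - 1 - n ≤ Module.finrank (ZMod 3) (stsCode 3 B) ∧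
    (Module.finrank (ZMod 3) (stsCode 3 B) = 3 ^ n - 1 - n ↔
      ∃ e : α ≃ (Fin n → ZMod 3), ∀ b : Finset α, b ∈ B ↔
        ∃ x y z : Fin n → ZMod 3, x ≠ y ∧ y ≠ z ∧ x ≠ z ∧ x + y + z = 0 ∧
          b.image (fun a => e a) = {x, y, z}) := by
  classical
  obtain ⟨hle, heq⟩ := STS14.key hSTS n hv
  have hrf := STS14.rank_formula B
  rw [hv] at hrf
  have hn1 : n < 3 ^ n := Nat.lt_pow_self (by norm_num : 1 < 3)
  refine ⟨by omega, ?_, ?_⟩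
  · intro h
    exact heq (by omega)
  · rintro ⟨e, he⟩
    have := STS14.finrank_dualW_of_iso n e he
    omega
end

section
/- The triple system D whose blocks are the supports of weight-3 codewords with nonzero entries 1 in the ternary code with parity check matrix H_{n,t} is a group divisible design with M = 3^{n-t} groups of size T = 3^t, in which two points of the same group lie in exactly T - 2 common blocks and two points of different groups lie in exactly T common blocks. -/
/-- Column indices of the ternary parity check matrix `H_{n,t}`: for each vector
of GF(3)^{n-t} (point of `AG(n-t,3)`) a group of `3^t` identical columns;
the column at index `j` is `j.1` (plus an all-one first row). -/
abbrev terIdx (n t : ℕ) := (Fin (n - t) → ZMod 3) × Fin (3 ^ t)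

private lemma zmod3_lem1 : ∀ a b : ZMod 3, -(a + b) = a → b = a := by decide
private lemma zmod3_lem2 : ∀ a b : ZMod 3, -(a + b) = b → a = b := by decide
private lemma zmod3_lem3 : ∀ a : ZMod 3, -(a + a) = a := by decide

theorem stmt16 (n t : ℕ) (ht1 : 1 ≤ t) (ht2 : t ≤ n - 1)
    (x y : terIdx n t) (hxy : x ≠ y) :
    Nat.card {b : Finset (terIdx n t) //
        b.card = 3 ∧ (∑ j ∈ b, j.1) = 0 ∧ x ∈ b ∧ y ∈ b} =
      if x.1 = y.1 then 3 ^ t - 2 else 3 ^ t := by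
  classical
  set s : Fin (n - t) → ZMod 3 := -(x.1 + y.1) with hs
  have hcard3 : ∀ z : terIdx n t, z ≠ x → z ≠ y →
      ({x, y, z} : Finset _).card = 3 := by
    intro z hzx hzy
    rw [Finset.card_insert_of_notMem (by simp [hxy, hzx.symm]),
        Finset.card_insert_of_notMem (by simp [hzy.symm]),
        Finset.card_singleton]
  have hsum : ∀ z : terIdx n t, z ≠ x → z ≠ y →
      (∑ j ∈ ({x, y, z} : Finset _), j.1) = x.1 + y.1 + z.1 := by
    intro z hzx hzy
    rw [Finset.sum_insert (by simp [hxy, hzx.symm]),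
        Finset.sum_insert (by simp [hzy.symm]), Finset.sum_singleton, add_assoc]
  let f : {z : terIdx n t // z.1 = s ∧ z ≠ x ∧ z ≠ y} →
      {b : Finset (terIdx n t) //
        b.card = 3 ∧ (∑ j ∈ b, j.1) = 0 ∧ x ∈ b ∧ y ∈ b} := fun z =>
    ⟨{x, y, z.1}, hcard3 z.1 z.2.2.1 z.2.2.2, by
      rw [hsum z.1 z.2.2.1 z.2.2.2, z.2.1, hs]; ring, by simp, by simp⟩
  have hf : Function.Bijective f := by
    constructor
    · rintro ⟨z, hz⟩ ⟨w, hw⟩ h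
      simp only [f, Subtype.mk.injEq] at h ⊢
      have hm : z ∈ ({x, y, w} : Finset _) := by rw [← h]; simp
      simp only [Finset.mem_insert, Finset.mem_singleton] at hm
      rcases hm with h1 | h1 | h1
      · exact absurd h1 hz.2.1
      · exact absurd h1 hz.2.2
      · exact h1
    · rintro ⟨b, hb3, hbsum, hbx, hby⟩
      have hsub : ({x, y} : Finset _) ⊆ b := by
        intro a ha
        simp only [Finset.mem_insert, Finset.mem_singleton] at ha
        rcases ha with rfl | rfl <;> assumption
      have hc2 : ({x, y} : Finset (terIdx n t)).card = 2 := by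
        rw [Finset.card_insert_of_notMem (by simp [hxy]), Finset.card_singleton]
      have h1 : (b \ {x, y}).card = 1 := by
        rw [Finset.card_sdiff_of_subset hsub, hb3, hc2]
      obtain ⟨z, hz⟩ := Finset.card_eq_one.mp h1
      have hzmem : z ∈ b \ ({x, y} : Finset _) := by rw [hz]; simp
      rw [Finset.mem_sdiff, Finset.mem_insert, Finset.mem_singleton] at hzmem
      push_neg at hzmem
      have hbeq : b = {x, y, z} := by
        have hu := Finset.sdiff_union_of_subset hsub
        rw [hz] at hu
        rw [← hu]
        ext a
        simp only [Finset.mem_union, Finset.mem_insert, Finset.mem_singleton]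
        tauto
      have hzs : z.1 = s := by
        rw [hbeq, hsum z hzmem.2.1 hzmem.2.2] at hbsum
        rw [hs]
        exact eq_neg_of_add_eq_zero_right hbsum
      exact ⟨⟨z, hzs, hzmem.2.1, hzmem.2.2⟩, by
        simp only [f, Subtype.mk.injEq]; exact hbeq.symm⟩
  rw [← Nat.card_congr (Equiv.ofBijective f hf)]
  by_cases h : x.1 = y.1
  · rw [if_pos h]
    have hsx : s = x.1 := by
      funext i
      show -(x.1 + y.1) i = x.1 i
      simp only [Pi.neg_apply, Pi.add_apply]
      rw [congrFun h i]
      exact zmod3_lem3 _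
    have hx2y2 : x.2 ≠ y.2 := fun hc => hxy (Prod.ext h hc)
    have e : {z : terIdx n t // z.1 = s ∧ z ≠ x ∧ z ≠ y} ≃
        {c : Fin (3 ^ t) // c ≠ x.2 ∧ c ≠ y.2} :=
      { toFun := fun z => ⟨z.1.2,
          fun hc => z.2.2.1 (Prod.ext (z.2.1.trans hsx) hc),
          fun hc => z.2.2.2 (Prod.ext (z.2.1.trans (hsx.trans h)) hc)⟩
        invFun := fun c => ⟨(s, c.1), rfl,
          fun hc => c.2.1 ((congrArg Prod.snd hc : _)),
          fun hc => c.2.2 ((congrArg Prod.snd hc : _))⟩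
        left_inv := fun z => Subtype.ext (Prod.ext z.2.1.symm rfl)
        right_inv := fun c => rfl }
    rw [Nat.card_congr e, Nat.card_eq_fintype_card, Fintype.card_subtype]
    have hfilter : Finset.filter (fun c => c ≠ x.2 ∧ c ≠ y.2) Finset.univ =
        Finset.univ \ {x.2, y.2} := by
      ext c
      simp only [Finset.mem_filter, Finset.mem_sdiff, Finset.mem_univ,
        Finset.mem_insert, Finset.mem_singleton, true_and]
      tauto
    rw [hfilter, Finset.card_sdiff_of_subset (by simp), Finset.card_univ, Fintype.card_fin,
      Finset.card_insert_of_notMem (by simp [hx2y2]), Finset.card_singleton]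
  · rw [if_neg h]
    have hsx : s ≠ x.1 := fun hc =>
      h (funext fun i => (zmod3_lem1 (x.1 i) (y.1 i) (congrFun hc i)).symm)
    have hsy : s ≠ y.1 := fun hc =>
      h (funext fun i => zmod3_lem2 (x.1 i) (y.1 i) (congrFun hc i))
    have e : {z : terIdx n t // z.1 = s ∧ z ≠ x ∧ z ≠ y} ≃ Fin (3 ^ t) :=
      { toFun := fun z => z.1.2
        invFun := fun c => ⟨(s, c), rfl,
          fun hc => hsx ((congrArg Prod.fst hc : _)),
          fun hc => hsy ((congrArg Prod.fst hc : _))⟩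
        left_inv := fun z => Subtype.ext (Prod.ext z.2.1.symm rfl)
        right_inv := fun c => rfl }
    rw [Nat.card_congr e, Nat.card_eq_fintype_card, Fintype.card_fin]
end

section
/- The number of distinct Steiner triple systems on 3^n points whose blocks are supports of weight-3 codewords (with nonzero entries 1) of the ternary code with parity check matrix H_{n,t} equals N_1(T)^M · N_3(T)^{M(M-1)/6}, where T = 3^t and M = 3^{n-t}, for 1 ≤ t ≤ n-1. -/
/-- `N₁ v`: the number of distinct (labeled) Steiner triple systems on a fixed `v`-set. -/
noncomputable def N1 (v : ℕ) : ℕ := Nat.card {B : Finset (Finset (Fin v)) // isSTS B}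

/-- A 1-factor (perfect matching) of the complete graph on `V`. -/
def isOneFactor {V : Type*} (f : Finset (Finset V)) : Prop :=
  (∀ e ∈ f, e.card = 2) ∧ ∀ x : V, ∃! e, e ∈ f ∧ x ∈ e

/-- A 1-factorization of the complete graph on `V`. -/
def isOneFactorization {V : Type*} (F : Finset (Finset (Finset V))) : Prop :=
  (∀ f ∈ F, isOneFactor f) ∧ ∀ e : Finset V, e.card = 2 → ∃! f, f ∈ F ∧ e ∈ f

/-- `N₂ m`: the number of distinct 1-factorizations of the complete graph `K_m`. -/
noncomputable def N2 (m : ℕ) : ℕ :=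
  Nat.card {F : Finset (Finset (Finset (Fin m))) // isOneFactorization F}

/-- A Latin square of order `g` (equivalently, a transversal design `TD[3;g]`). -/
def isLatin {g : ℕ} (L : Fin g → Fin g → Fin g) : Prop :=
  (∀ i, Function.Bijective (L i)) ∧ (∀ j, Function.Bijective fun i => L i j)

/-- `N₃ g`: the number of Latin squares of order `g`. -/
noncomputable def N3 (g : ℕ) : ℕ := Nat.card {L : Fin g → Fin g → Fin g // isLatin L}

open Finset Function

namespace STS17

variable {V : Type*} [AddCommGroup V] [DecidableEq V]
set_option linter.unusedSectionVars false

lemma neg2 (hV : ∀ x : V, x + x + x = 0) (x : V) : -x - x = x := by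
  have h : x + x = -x := eq_neg_of_add_eq_zero_left (hV x)
  rw [sub_eq_add_neg, ← neg_add, h, neg_neg]

lemma third_ne_left (hV : ∀ x : V, x + x + x = 0) {x y : V} (hxy : x ≠ y) : -x - y ≠ x := by
  intro h
  apply hxy
  have h' : -x = x + y := by rwa [sub_eq_iff_eq_add] at h
  have : y = -x - x := by rw [h']; abel
  rw [this, neg2 hV]

lemma third_ne_right (hV : ∀ x : V, x + x + x = 0) {x y : V} (hxy : x ≠ y) : -x - y ≠ y := by
  intro h
  apply hxy
  have h' : -x = y + y := by rwa [sub_eq_iff_eq_add] at h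
  have h2 : x = -y - y := by
    have := congrArg Neg.neg h'
    rw [neg_neg] at this
    rw [this]; abel
  rw [h2, neg2 hV]

/-- Lines of the affine space: 3-subsets summing to zero. -/
def Lines (V : Type*) [AddCommGroup V] [DecidableEq V] : Type _ :=
  {s : Finset V // s.card = 3 ∧ ∑ x ∈ s, x = 0}

instance [Fintype V] : Fintype (Lines V) := Subtype.fintype _

/-- Canonical enumeration of the three points of a line. -/
noncomputable def pt (ℓ : Lines V) (i : Fin 3) : V :=
  (ℓ.1.equivFin.symm (Fin.cast ℓ.2.1.symm i) : V)

lemma pt_mem (ℓ : Lines V) (i : Fin 3) : pt ℓ i ∈ ℓ.1 :=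
  (ℓ.1.equivFin.symm (Fin.cast ℓ.2.1.symm i)).2

lemma pt_injective (ℓ : Lines V) : Function.Injective (pt ℓ) := by
  intro i j h
  have := Subtype.ext h
  have := ℓ.1.equivFin.symm.injective this
  simpa [Fin.ext_iff] using this

lemma pt_surj (ℓ : Lines V) {v : V} (hv : v ∈ ℓ.1) : ∃ i : Fin 3, pt ℓ i = v := by
  obtain ⟨j, hj⟩ := ℓ.1.equivFin.symm.surjective ⟨v, hv⟩
  exact ⟨Fin.cast ℓ.2.1 j, by simpa [pt] using congrArg Subtype.val hj⟩

lemma line_eq_triple (ℓ : Lines V) : ℓ.1 = {pt ℓ 0, pt ℓ 1, pt ℓ 2} := by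
  ext v
  simp only [mem_insert, mem_singleton]
  constructor
  · intro hv
    obtain ⟨i, hi⟩ := pt_surj ℓ hv
    fin_cases i <;> simp_all
  · rintro (rfl | rfl | rfl) <;> exact pt_mem _ _
lemma pt_sum (ℓ : Lines V) : pt ℓ 0 + pt ℓ 1 + pt ℓ 2 = 0 := by
  have h := ℓ.2.2
  rw [line_eq_triple ℓ] at h
  have h01 : pt ℓ 0 ≠ pt ℓ 1 := fun h => by simpa using pt_injective ℓ h
  have h02 : pt ℓ 0 ≠ pt ℓ 2 := fun h => by simpa using pt_injective ℓ h
  have h12 : pt ℓ 1 ≠ pt ℓ 2 := fun h => by simpa using pt_injective ℓ h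
  rw [sum_insert (by simp [h01, h02]), sum_insert (by simp [h12]), sum_singleton] at h
  rwa [← add_assoc] at h

/-- The line through two distinct points. -/
def lineThrough (hV : ∀ x : V, x + x + x = 0) {x y : V} (hxy : x ≠ y) : Lines V := by
  refine ⟨{x, y, -x - y}, ?_, ?_⟩
  · rw [card_insert_of_notMem (by simp [hxy, (third_ne_left hV hxy).symm]),
      card_insert_of_notMem (by simp [(third_ne_right hV hxy).symm]), card_singleton]
  · rw [sum_insert (by simp [hxy, (third_ne_left hV hxy).symm]),
      sum_insert (by simp [(third_ne_right hV hxy).symm]), sum_singleton]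
    abel

lemma mem_lineThrough_left (hV : ∀ x : V, x + x + x = 0) {x y : V} (hxy : x ≠ y) :
    x ∈ (lineThrough hV hxy).1 := by simp [lineThrough]

lemma mem_lineThrough_right (hV : ∀ x : V, x + x + x = 0) {x y : V} (hxy : x ≠ y) :
    y ∈ (lineThrough hV hxy).1 := by simp [lineThrough]

/-- A 3-set containing two given distinct elements. -/
lemma exists_third {s : Finset V} (hs : s.card = 3) {x y : V} (hx : x ∈ s) (hy : y ∈ s)
    (hxy : x ≠ y) : ∃ z, z ≠ x ∧ z ≠ y ∧ s = {x, y, z} := by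
  have hsub : ({x, y} : Finset V) ⊆ s := by
    intro v hv; simp only [mem_insert, mem_singleton] at hv
    rcases hv with rfl | rfl <;> assumption
  have hc2 : ({x, y} : Finset V).card = 2 := by
    rw [card_insert_of_notMem (by simp [hxy]), card_singleton]
  have hne : (s \ {x, y}).Nonempty := by
    rw [← card_pos, card_sdiff_of_subset hsub, hs, hc2]; norm_num
  obtain ⟨z, hz⟩ := hne
  rw [mem_sdiff, mem_insert, mem_singleton] at hz
  push_neg at hz
  refine ⟨z, hz.2.1, hz.2.2, ?_⟩
  refine (eq_of_subset_of_card_le ?_ ?_).symm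
  · intro v hv; simp only [mem_insert, mem_singleton] at hv
    rcases hv with rfl | rfl | rfl
    exacts [hx, hy, hz.1]
  · rw [hs, card_insert_of_notMem (by simp [hxy, Ne.symm hz.2.1]),
      card_insert_of_notMem (by simp [Ne.symm hz.2.2]), card_singleton]

/-- Uniqueness of the line through two distinct points. -/
lemma line_unique (hV : ∀ x : V, x + x + x = 0) {x y : V} (hxy : x ≠ y) (ℓ : Lines V)
    (hx : x ∈ ℓ.1) (hy : y ∈ ℓ.1) : ℓ = lineThrough hV hxy := by
  obtain ⟨z, hzx, hzy, hz⟩ := exists_third ℓ.2.1 hx hy hxy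
  have hsum := ℓ.2.2
  rw [hz, sum_insert (by simp [hxy, Ne.symm hzx]), sum_insert (by simp [Ne.symm hzy]),
    sum_singleton] at hsum
  have hzval : z = -x - y := by
    have h' : x + y + z = 0 := by rwa [← add_assoc] at hsum
    have := eq_neg_of_add_eq_zero_right h'
    rw [this]; abel
  apply Subtype.ext
  rw [hz, hzval]; rfl

section LatinKey
variable {G : Type*} [Fintype G] [DecidableEq G]

lemma funext3 {w w' : Fin 3 → G} (h0 : w 0 = w' 0) (h1 : w 1 = w' 1) (h2 : w 2 = w' 2) :
    w = w' := by funext i; fin_cases i <;> assumption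

lemma latin_key {L : G → G → G} (hL1 : ∀ i, Bijective (L i))
    (hL2 : ∀ j, Bijective fun i => L i j) (a b : Fin 3) (hab : a ≠ b) (g h : G) :
    ∃! w : Fin 3 → G, L (w 0) (w 1) = w 2 ∧ w a = g ∧ w b = h := by
  fin_cases a <;> fin_cases b
  · exact absurd rfl hab
  · -- a = 0, b = 1
    refine ⟨![g, h, L g h], ⟨by simp, by simp, by simp⟩, ?_⟩
    rintro w ⟨hw, ha, hb⟩
    refine funext3 ?_ ?_ ?_
    · simpa using ha
    · simpa using hb
    · simp only [Matrix.cons_val_two, Matrix.tail_cons, Matrix.head_cons]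
      rw [← hw]; rw [show w 0 = g from ha, show w 1 = h from hb]
  · -- a = 0, b = 2
    obtain ⟨j, hj, hju⟩ := (hL1 g).existsUnique h
    refine ⟨![g, j, h], ⟨by simpa using hj, by simp, by simp⟩, ?_⟩
    rintro w ⟨hw, ha, hb⟩
    have h0 : w 0 = g := ha
    have h2 : w 2 = h := hb
    have h1 : w 1 = j := hju _ (by show L _ (w 1) = _; rw [← h0, hw, h2])
    exact funext3 (by simpa using h0) (by simpa using h1) (by simpa using h2)
  · -- a = 1, b = 0
    refine ⟨![h, g, L h g], ⟨by simp, by simp, by simp⟩, ?_⟩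
    rintro w ⟨hw, ha, hb⟩
    refine funext3 (by simpa using hb) (by simpa using ha) ?_
    simp only [Matrix.cons_val_two, Matrix.tail_cons, Matrix.head_cons]
    rw [← hw, show w 0 = h from hb, show w 1 = g from ha]
  · exact absurd rfl hab
  · -- a = 1, b = 2
    obtain ⟨i, hi, hiu⟩ := (hL2 g).existsUnique h
    refine ⟨![i, g, h], ⟨by simpa using hi, by simp, by simp⟩, ?_⟩
    rintro w ⟨hw, ha, hb⟩
    have h1 : w 1 = g := ha
    have h2 : w 2 = h := hb
    have h0 : w 0 = i := hiu _ (by show L (w 0) _ = _; rw [← h1, hw, h2])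
    exact funext3 (by simpa using h0) (by simpa using h1) (by simpa using h2)
  · -- a = 2, b = 0
    obtain ⟨j, hj, hju⟩ := (hL1 h).existsUnique g
    refine ⟨![h, j, g], ⟨by simpa using hj, by simp, by simp⟩, ?_⟩
    rintro w ⟨hw, ha, hb⟩
    have h0 : w 0 = h := hb
    have h2 : w 2 = g := ha
    have h1 : w 1 = j := hju _ (by show L _ (w 1) = _; rw [← h0, hw, h2])
    exact funext3 (by simpa using h0) (by simpa using h1) (by simpa using h2)
  · -- a = 2, b = 1
    obtain ⟨i, hi, hiu⟩ := (hL2 h).existsUnique g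
    refine ⟨![i, h, g], ⟨by simpa using hi, by simp, by simp⟩, ?_⟩
    rintro w ⟨hw, ha, hb⟩
    have h1 : w 1 = h := hb
    have h2 : w 2 = g := ha
    have h0 : w 0 = i := hiu _ (by show L (w 0) _ = _; rw [← h1, hw, h2])
    exact funext3 (by simpa using h0) (by simpa using h1) (by simpa using h2)
  · exact absurd rfl hab

end LatinKey

section Blocks
variable {V : Type*} [AddCommGroup V] [DecidableEq V]
variable {G : Type*} [Fintype G] [DecidableEq G]

/-- The block over line `ℓ` with fiber entries `w`. -/
noncomputable def blockOf (ℓ : Lines V) (w : Fin 3 → G) : Finset (V × G) :=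
  (univ : Finset (Fin 3)).image fun i => (pt ℓ i, w i)

lemma mem_blockOf {ℓ : Lines V} {w : Fin 3 → G} {p : V × G} :
    p ∈ blockOf ℓ w ↔ ∃ i, p = (pt ℓ i, w i) := by
  simp [blockOf, eq_comm]

lemma blockOf_card (ℓ : Lines V) (w : Fin 3 → G) : (blockOf ℓ w).card = 3 := by
  rw [blockOf, card_image_of_injective _ fun i j h => pt_injective ℓ (congrArg Prod.fst h)]
  simp

lemma blockOf_same_fst {ℓ : Lines V} {w : Fin 3 → G} {p q : V × G}
    (hp : p ∈ blockOf ℓ w) (hq : q ∈ blockOf ℓ w) (h : p.1 = q.1) : p = q := by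
  obtain ⟨i, rfl⟩ := mem_blockOf.mp hp
  obtain ⟨j, rfl⟩ := mem_blockOf.mp hq
  obtain rfl := pt_injective ℓ h
  rfl

lemma blockOf_w_eq {ℓ : Lines V} {w w' : Fin 3 → G} (h : blockOf ℓ w = blockOf ℓ w') :
    w = w' := by
  funext i
  have : (pt ℓ i, w i) ∈ blockOf ℓ w' := h ▸ mem_blockOf.mpr ⟨i, rfl⟩
  obtain ⟨j, hj⟩ := mem_blockOf.mp this
  obtain rfl := pt_injective ℓ (congrArg Prod.fst hj)
  exact congrArg Prod.snd hj

lemma blockOf_sum (ℓ : Lines V) (w : Fin 3 → G) : ∑ p ∈ blockOf ℓ w, p.1 = 0 := by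
  rw [blockOf, sum_image (fun i _ j _ h => pt_injective ℓ (congrArg Prod.fst h))]
  simpa [Fin.sum_univ_three] using pt_sum ℓ

/-- The block over a single point `x` with fiber `s`. -/
def pureBlock (x : V) (s : Finset G) : Finset (V × G) := s.image fun g => (x, g)

lemma mem_pureBlock {x : V} {s : Finset G} {p : V × G} :
    p ∈ pureBlock x s ↔ p.1 = x ∧ p.2 ∈ s := by
  simp only [pureBlock, mem_image]
  constructor
  · rintro ⟨g, hg, rfl⟩; exact ⟨rfl, hg⟩
  · rintro ⟨h1, h2⟩; exact ⟨p.2, h2, by rw [← h1]⟩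

lemma pureBlock_card {x : V} {s : Finset G} : (pureBlock x s).card = s.card :=
  card_image_of_injective _ fun g g' h => congrArg Prod.snd h

lemma pureBlock_snd {x : V} {s : Finset G} : (pureBlock x s).image Prod.snd = s := by
  ext g; simp [pureBlock]

lemma pureBlock_of_const {x : V} {c : Finset (V × G)} (hc : ∀ p ∈ c, p.1 = x) :
    pureBlock x (c.image Prod.snd) = c := by
  ext p
  simp only [mem_pureBlock, mem_image]
  constructor
  · rintro ⟨h1, q, hq, h2⟩
    have : p = q := Prod.ext (by rw [h1, hc q hq]) h2.symm
    rwa [this]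
  · intro hp; exact ⟨hc p hp, p, hp, rfl⟩

lemma blockOf_sum_pure (hV : ∀ x : V, x + x + x = 0) {x : V} {s : Finset G}
    (hs : s.card = 3) : ∑ p ∈ pureBlock x s, p.1 = 0 := by
  rw [pureBlock, sum_image (fun g _ g' _ h => congrArg Prod.snd h)]
  rw [sum_const, hs]
  have : (3 : ℕ) • x = x + x + x := by abel
  rw [this, hV]

variable [Fintype V]

def pureBlocks (A : V → Finset (Finset G)) : Finset (Finset (V × G)) :=
  univ.biUnion fun x => (A x).image (pureBlock x)

noncomputable def lineBlocks (F : Lines V → G → G → G) : Finset (Finset (V × G)) :=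
  univ.biUnion fun ℓ : Lines V =>
    ((univ : Finset (Fin 3 → G)).filter fun w => F ℓ (w 0) (w 1) = w 2).image (blockOf ℓ)

noncomputable def buildB (A : V → Finset (Finset G)) (F : Lines V → G → G → G) :
    Finset (Finset (V × G)) := pureBlocks A ∪ lineBlocks F

lemma mem_pureBlocks {A : V → Finset (Finset G)} {b : Finset (V × G)} :
    b ∈ pureBlocks A ↔ ∃ x s, s ∈ A x ∧ b = pureBlock x s := by
  simp [pureBlocks, eq_comm]

lemma mem_lineBlocks {F : Lines V → G → G → G} {b : Finset (V × G)} :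
    b ∈ lineBlocks F ↔ ∃ ℓ w, F ℓ (w 0) (w 1) = w 2 ∧ b = blockOf ℓ w := by
  simp [lineBlocks, eq_comm]

lemma mem_buildB {A : V → Finset (Finset G)} {F : Lines V → G → G → G} {b : Finset (V × G)} :
    b ∈ buildB A F ↔ b ∈ pureBlocks A ∨ b ∈ lineBlocks F := mem_union

/-- Structure of a 3-block with zero first-coordinate sum. -/
lemma block_cases (hV : ∀ x : V, x + x + x = 0) {b : Finset (V × G)} (hcard : b.card = 3)
    (hsum : ∑ p ∈ b, p.1 = 0) :
    (∃ x : V, ∀ p ∈ b, p.1 = x) ∨ (∃ ℓ : Lines V, ∃ w : Fin 3 → G, b = blockOf ℓ w) := by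
  obtain ⟨p, q, r, hpq, hpr, hqr, rfl⟩ := card_eq_three.mp hcard
  rw [sum_insert (by simp [hpq, hpr]), sum_insert (by simp [hqr]), sum_singleton] at hsum
  have hsum' : p.1 + q.1 + r.1 = 0 := by rwa [← add_assoc] at hsum
  by_cases h1 : p.1 = q.1
  · left
    refine ⟨p.1, fun u hu => ?_⟩
    have hr : r.1 = p.1 := by
      have : r.1 = -p.1 - q.1 := by
        have := eq_neg_of_add_eq_zero_right hsum'
        rw [this]; abel
      rw [this, ← h1, neg2 hV]
    simp only [mem_insert, mem_singleton] at hu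
    rcases hu with rfl | rfl | rfl
    exacts [rfl, h1.symm, hr]
  · by_cases h2 : p.1 = r.1
    · -- then q.1 = p.1, contradiction
      exfalso
      apply h1
      have : q.1 = -p.1 - r.1 := by
        have h' : p.1 + r.1 + q.1 = 0 := by rw [← hsum']; abel
        have := eq_neg_of_add_eq_zero_right h'
        rw [this]; abel
      rw [this, ← h2, neg2 hV]
    · by_cases h3 : q.1 = r.1
      · exfalso
        apply h1
        have : p.1 = -q.1 - r.1 := by
          have h' : q.1 + r.1 + p.1 = 0 := by rw [← hsum']; abel
          have := eq_neg_of_add_eq_zero_right h'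
          rw [this]; abel
        rw [this, ← h3, neg2 hV]
      · -- all first coordinates distinct
        right
        have hcard3 : ({p.1, q.1, r.1} : Finset V).card = 3 := by
          rw [card_insert_of_notMem (by simp [h1, h2]),
            card_insert_of_notMem (by simp [h3]), card_singleton]
        have hsum3 : ∑ x ∈ ({p.1, q.1, r.1} : Finset V), x = 0 := by
          rw [sum_insert (by simp [h1, h2]), sum_insert (by simp [h3]), sum_singleton,
            ← add_assoc]
          exact hsum'
        refine ⟨⟨{p.1, q.1, r.1}, hcard3, hsum3⟩, fun i =>
          if pt ⟨{p.1, q.1, r.1}, hcard3, hsum3⟩ i = p.1 then p.2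
          else if pt ⟨{p.1, q.1, r.1}, hcard3, hsum3⟩ i = q.1 then q.2 else r.2, ?_⟩
        set ℓ : Lines V := ⟨{p.1, q.1, r.1}, hcard3, hsum3⟩ with hℓ
        refine (eq_of_subset_of_card_le ?_ (by rw [blockOf_card, hcard])).symm
        intro u hu
        obtain ⟨i, rfl⟩ := mem_blockOf.mp hu
        have hmem : pt ℓ i ∈ ({p.1, q.1, r.1} : Finset V) := pt_mem ℓ i
        simp only [mem_insert, mem_singleton] at hmem
        rcases hmem with hp | hq | hr
        · have he : (pt ℓ i, if pt ℓ i = p.1 then p.2 else if pt ℓ i = q.1 then q.2 else r.2)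
              = p := by rw [if_pos hp]; exact Prod.ext hp rfl
          rw [he]; simp
        · rcases eq_or_ne (pt ℓ i) p.1 with h | h
          · have he : (pt ℓ i, if pt ℓ i = p.1 then p.2 else if pt ℓ i = q.1 then q.2 else r.2)
                = p := by rw [if_pos h]; exact Prod.ext h rfl
            rw [he]; simp
          · have he : (pt ℓ i, if pt ℓ i = p.1 then p.2 else if pt ℓ i = q.1 then q.2 else r.2)
                = q := by rw [if_neg h, if_pos hq]; exact Prod.ext hq rfl
            rw [he]; simp
        · rcases eq_or_ne (pt ℓ i) p.1 with h | h
          · have he : (pt ℓ i, if pt ℓ i = p.1 then p.2 else if pt ℓ i = q.1 then q.2 else r.2)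
                = p := by rw [if_pos h]; exact Prod.ext h rfl
            rw [he]; simp
          · rcases eq_or_ne (pt ℓ i) q.1 with h' | h'
            · have he : (pt ℓ i, if pt ℓ i = p.1 then p.2 else if pt ℓ i = q.1 then q.2 else r.2)
                  = q := by rw [if_neg h, if_pos h']; exact Prod.ext h' rfl
              rw [he]; simp
            · have he : (pt ℓ i, if pt ℓ i = p.1 then p.2 else if pt ℓ i = q.1 then q.2 else r.2)
                  = r := by rw [if_neg h, if_neg h']; exact Prod.ext hr rfl
              rw [he]; simp

end Blocks

section Build
variable {V : Type*} [AddCommGroup V] [DecidableEq V] [Fintype V]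
variable {G : Type*} [Fintype G] [DecidableEq G]
variable {A : V → Finset (Finset G)} {F : Lines V → G → G → G}

lemma buildB_card (hA : ∀ x, ∀ s ∈ A x, s.card = 3) :
    ∀ b ∈ buildB A F, b.card = 3 := by
  intro b hb
  rcases mem_buildB.mp hb with h | h
  · obtain ⟨x, s, hs, rfl⟩ := mem_pureBlocks.mp h
    rw [pureBlock_card, hA x s hs]
  · obtain ⟨ℓ, w, _, rfl⟩ := mem_lineBlocks.mp h
    exact blockOf_card ℓ w

lemma buildB_sum (hV : ∀ x : V, x + x + x = 0) (hA : ∀ x, ∀ s ∈ A x, s.card = 3) :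
    ∀ b ∈ buildB A F, ∑ p ∈ b, p.1 = 0 := by
  intro b hb
  rcases mem_buildB.mp hb with h | h
  · obtain ⟨x, s, hs, rfl⟩ := mem_pureBlocks.mp h
    exact blockOf_sum_pure hV (hA x s hs)
  · obtain ⟨ℓ, w, _, rfl⟩ := mem_lineBlocks.mp h
    exact blockOf_sum ℓ w

lemma buildB_pair (hV : ∀ x : V, x + x + x = 0) (hA : ∀ x, isSTS (A x))
    (hF : ∀ ℓ, (∀ i, Bijective (F ℓ i)) ∧ ∀ j, Bijective fun i => F ℓ i j) :
    ∀ p q : V × G, p ≠ q → ∃! b, b ∈ buildB A F ∧ p ∈ b ∧ q ∈ b := by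
  intro p q hpq
  by_cases hfst : p.1 = q.1
  · -- same fiber
    have hsnd : p.2 ≠ q.2 := fun h => hpq (Prod.ext hfst h)
    obtain ⟨s, ⟨hs, hps, hqs⟩, hsu⟩ := (hA p.1).2 p.2 q.2 hsnd
    refine ⟨pureBlock p.1 s, ⟨mem_buildB.mpr (Or.inl (mem_pureBlocks.mpr ⟨p.1, s, hs, rfl⟩)),
      mem_pureBlock.mpr ⟨rfl, hps⟩, mem_pureBlock.mpr ⟨hfst.symm, hqs⟩⟩, ?_⟩
    rintro c ⟨hc, hpc, hqc⟩
    rcases mem_buildB.mp hc with h | h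
    · obtain ⟨x', s', hs', rfl⟩ := mem_pureBlocks.mp h
      obtain ⟨hx1, hp2⟩ := mem_pureBlock.mp hpc
      obtain ⟨hx2, hq2⟩ := mem_pureBlock.mp hqc
      have : s' = s := hsu s' ⟨hx1 ▸ hs', hp2, hq2⟩
      rw [this, ← hx1]
    · obtain ⟨ℓ, w, _, rfl⟩ := mem_lineBlocks.mp h
      exact absurd (blockOf_same_fst hpc hqc hfst) hpq
  · -- different fibers
    set ℓ : Lines V := lineThrough hV hfst with hℓdef
    obtain ⟨a, ha⟩ := pt_surj ℓ (mem_lineThrough_left hV hfst)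
    obtain ⟨b, hb⟩ := pt_surj ℓ (mem_lineThrough_right hV hfst)
    have hab : a ≠ b := fun h => hfst (by rw [← ha, ← hb, h])
    obtain ⟨w, ⟨hw, hwa, hwb⟩, hwu⟩ := latin_key (hF ℓ).1 (hF ℓ).2 a b hab p.2 q.2
    refine ⟨blockOf ℓ w, ⟨mem_buildB.mpr (Or.inr (mem_lineBlocks.mpr ⟨ℓ, w, hw, rfl⟩)),
      mem_blockOf.mpr ⟨a, Prod.ext ha.symm hwa.symm⟩,
      mem_blockOf.mpr ⟨b, Prod.ext hb.symm hwb.symm⟩⟩, ?_⟩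
    rintro c ⟨hc, hpc, hqc⟩
    rcases mem_buildB.mp hc with h | h
    · obtain ⟨x', s', _, rfl⟩ := mem_pureBlocks.mp h
      exact absurd ((mem_pureBlock.mp hpc).1.trans (mem_pureBlock.mp hqc).1.symm) hfst
    · obtain ⟨ℓ', w', hw', rfl⟩ := mem_lineBlocks.mp h
      obtain ⟨i, hi⟩ := mem_blockOf.mp hpc
      obtain ⟨j, hj⟩ := mem_blockOf.mp hqc
      have hpl : p.1 ∈ ℓ'.1 := by rw [hi]; exact pt_mem ℓ' i
      have hql : q.1 ∈ ℓ'.1 := by rw [hj]; exact pt_mem ℓ' j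
      have hll : ℓ' = ℓ := line_unique hV hfst ℓ' hpl hql
      subst hll
      have hia : i = a := pt_injective ℓ
        (by rw [show pt ℓ i = p.1 from (congrArg Prod.fst hi).symm, ha])
      have hjb : j = b := pt_injective ℓ
        (by rw [show pt ℓ j = q.1 from (congrArg Prod.fst hj).symm, hb])
      have hwa' : w' a = p.2 := by rw [← hia]; exact (congrArg Prod.snd hi).symm
      have hwb' : w' b = q.2 := by rw [← hjb]; exact (congrArg Prod.snd hj).symm
      rw [hwu w' ⟨hw', hwa', hwb'⟩]

lemma buildB_isSTS (hV : ∀ x : V, x + x + x = 0) (hA : ∀ x, isSTS (A x))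
    (hF : ∀ ℓ, (∀ i, Bijective (F ℓ i)) ∧ ∀ j, Bijective fun i => F ℓ i j) :
    isSTS (buildB A F) :=
  ⟨buildB_card (fun x => (hA x).1), buildB_pair hV hA hF⟩

end Build

section Extract
variable {V : Type*} [AddCommGroup V] [DecidableEq V] [Fintype V]
variable {G : Type*} [Fintype G] [DecidableEq G]
variable {B : Finset (Finset (V × G))}

lemma pt_ne (ℓ : Lines V) {i j : Fin 3} (h : i ≠ j) : pt ℓ i ≠ pt ℓ j :=
  fun he => h (pt_injective ℓ he)

lemma line_eq_of_two (hV : ∀ x : V, x + x + x = 0) {x y : V} (hxy : x ≠ y) {ℓ ℓ' : Lines V}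
    (hx : x ∈ ℓ.1) (hy : y ∈ ℓ.1) (hx' : x ∈ ℓ'.1) (hy' : y ∈ ℓ'.1) : ℓ = ℓ' := by
  rw [line_unique hV hxy ℓ hx hy, line_unique hV hxy ℓ' hx' hy']

lemma blockOf_eval {ℓ : Lines V} {w : Fin 3 → G} {a : Fin 3} {g : G}
    (h : (pt ℓ a, g) ∈ blockOf ℓ w) : w a = g := by
  obtain ⟨i, hi⟩ := mem_blockOf.mp h
  obtain rfl : i = a := (pt_injective ℓ (congrArg Prod.fst hi)).symm
  exact (congrArg Prod.snd hi).symm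

lemma block_pure_of_same_fst (hV : ∀ x : V, x + x + x = 0) (hS : isSTS B)
    (hsum : ∀ b ∈ B, ∑ p ∈ b, p.1 = 0) {c : Finset (V × G)} (hc : c ∈ B) {p q : V × G}
    (hp : p ∈ c) (hq : q ∈ c) (hne : p ≠ q) (hfst : p.1 = q.1) : ∀ r ∈ c, r.1 = p.1 := by
  rcases block_cases hV (hS.1 c hc) (hsum c hc) with ⟨x, hx⟩ | ⟨ℓ, w, rfl⟩
  · intro r hr; rw [hx r hr, hx p hp]
  · exact absurd (blockOf_same_fst hp hq hfst) hne

lemma block_line_of_ne_fst (hV : ∀ x : V, x + x + x = 0) (hS : isSTS B)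
    (hsum : ∀ b ∈ B, ∑ p ∈ b, p.1 = 0) {c : Finset (V × G)} (hc : c ∈ B) {p q : V × G}
    (hp : p ∈ c) (hq : q ∈ c) (hfst : p.1 ≠ q.1) :
    ∃ ℓ w, c = blockOf ℓ w ∧ p.1 ∈ ℓ.1 ∧ q.1 ∈ ℓ.1 := by
  rcases block_cases hV (hS.1 c hc) (hsum c hc) with ⟨x, hx⟩ | ⟨ℓ, w, rfl⟩
  · exact absurd ((hx p hp).trans (hx q hq).symm) hfst
  · refine ⟨ℓ, w, rfl, ?_, ?_⟩
    · obtain ⟨i, hi⟩ := mem_blockOf.mp hp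
      rw [show p.1 = pt ℓ i from congrArg Prod.fst hi]; exact pt_mem ℓ i
    · obtain ⟨j, hj⟩ := mem_blockOf.mp hq
      rw [show q.1 = pt ℓ j from congrArg Prod.fst hj]; exact pt_mem ℓ j

lemma exists_lineblock (hV : ∀ x : V, x + x + x = 0) (hS : isSTS B)
    (hsum : ∀ b ∈ B, ∑ p ∈ b, p.1 = 0) (ℓ : Lines V) (i j : G) :
    ∃ g, blockOf ℓ ![i, j, g] ∈ B := by
  have hne : ((pt ℓ 0, i) : V × G) ≠ (pt ℓ 1, j) :=
    fun h => pt_ne ℓ (by decide : (0 : Fin 3) ≠ 1) (congrArg Prod.fst h)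
  obtain ⟨c, ⟨hcB, h0, h1⟩, -⟩ := hS.2 _ _ hne
  obtain ⟨ℓ', w, rfl, hm0, hm1⟩ :=
    block_line_of_ne_fst hV hS hsum hcB h0 h1 (pt_ne ℓ (by decide : (0 : Fin 3) ≠ 1))
  obtain rfl : ℓ' = ℓ :=
    line_eq_of_two hV (pt_ne ℓ (by decide : (0 : Fin 3) ≠ 1)) hm0 hm1 (pt_mem ℓ 0) (pt_mem ℓ 1)
  have hw0 : w 0 = i := blockOf_eval h0
  have hw1 : w 1 = j := blockOf_eval h1
  refine ⟨w 2, ?_⟩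
  have hwe : ![i, j, w 2] = w := (funext3 (by simp [hw0]) (by simp [hw1]) (by simp)).symm
  rw [hwe]; exact hcB

lemma build_surj (hV : ∀ x : V, x + x + x = 0) (hS : isSTS B)
    (hsum : ∀ b ∈ B, ∑ p ∈ b, p.1 = 0) :
    ∃ (A : V → Finset (Finset G)) (F : Lines V → G → G → G),
      (∀ x, isSTS (A x)) ∧
      (∀ ℓ, (∀ i, Bijective (F ℓ i)) ∧ ∀ j, Bijective fun i => F ℓ i j) ∧
      buildB A F = B := by
  classical
  choose F hF using fun (ℓ : Lines V) (i j : G) => exists_lineblock hV hS hsum ℓ i j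
  refine ⟨fun x => (B.filter fun c => ∀ p ∈ c, p.1 = x).image (Finset.image Prod.snd),
    F, ?_, ?_, ?_⟩
  · -- each fiber system is an STS
    intro x
    constructor
    · intro s hs
      simp only [mem_image, mem_filter] at hs
      obtain ⟨c, ⟨hcB, hcx⟩, rfl⟩ := hs
      rw [card_image_of_injOn fun p hp q hq h => Prod.ext ((hcx p hp).trans (hcx q hq).symm) h]
      exact hS.1 c hcB
    · intro g h hgh
      have hne : ((x, g) : V × G) ≠ (x, h) := fun he => hgh (congrArg Prod.snd he)
      obtain ⟨c, ⟨hcB, hgc, hhc⟩, hcu⟩ := hS.2 (x, g) (x, h) hne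
      have hpure : ∀ r ∈ c, r.1 = x := block_pure_of_same_fst hV hS hsum hcB hgc hhc hne rfl
      refine ⟨c.image Prod.snd,
        ⟨mem_image.mpr ⟨c, mem_filter.mpr ⟨hcB, hpure⟩, rfl⟩,
         mem_image.mpr ⟨(x, g), hgc, rfl⟩, mem_image.mpr ⟨(x, h), hhc, rfl⟩⟩, ?_⟩
      rintro s ⟨hs, hgs, hhs⟩
      simp only [mem_image, mem_filter] at hs
      obtain ⟨c', ⟨hc'B, hc'x⟩, rfl⟩ := hs
      obtain ⟨p, hp, hp2⟩ := mem_image.mp hgs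
      obtain ⟨q, hq, hq2⟩ := mem_image.mp hhs
      have hpg : p = (x, g) := Prod.ext (hc'x p hp) hp2
      have hqh : q = (x, h) := Prod.ext (hc'x q hq) hq2
      have : c' = c := hcu c' ⟨hc'B, hpg ▸ hp, hqh ▸ hq⟩
      rw [this]
  · -- Latin property
    intro ℓ
    constructor
    · intro i
      rw [← Finite.injective_iff_bijective]
      intro j j' he
      have hnept : ((pt ℓ 0, i) : V × G) ≠ (pt ℓ 2, F ℓ i j) :=
        fun h => pt_ne ℓ (by decide : (0 : Fin 3) ≠ 2) (congrArg Prod.fst h)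
      obtain ⟨c, -, hcu⟩ := hS.2 _ _ hnept
      have e1 := hcu _ ⟨hF ℓ i j, mem_blockOf.mpr ⟨0, by simp⟩, mem_blockOf.mpr ⟨2, by simp⟩⟩
      have e2 := hcu _ ⟨hF ℓ i j', mem_blockOf.mpr ⟨0, by simp⟩,
        mem_blockOf.mpr ⟨2, by simp [he]⟩⟩
      have hww := blockOf_w_eq (e1.trans e2.symm)
      simpa using congrFun hww 1
    · intro j
      rw [← Finite.injective_iff_bijective]
      intro i i' he
      simp only at he
      have hnept : ((pt ℓ 1, j) : V × G) ≠ (pt ℓ 2, F ℓ i j) :=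
        fun h => pt_ne ℓ (by decide : (1 : Fin 3) ≠ 2) (congrArg Prod.fst h)
      obtain ⟨c, -, hcu⟩ := hS.2 _ _ hnept
      have e1 := hcu _ ⟨hF ℓ i j, mem_blockOf.mpr ⟨1, by simp⟩, mem_blockOf.mpr ⟨2, by simp⟩⟩
      have e2 := hcu _ ⟨hF ℓ i' j, mem_blockOf.mpr ⟨1, by simp⟩,
        mem_blockOf.mpr ⟨2, by simp [he]⟩⟩
      have hww := blockOf_w_eq (e1.trans e2.symm)
      simpa using congrFun hww 0
  · -- the built system equals B
    apply Finset.Subset.antisymm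
    · intro b hb
      rcases mem_buildB.mp hb with h | h
      · obtain ⟨x, s, hs, rfl⟩ := mem_pureBlocks.mp h
        simp only [mem_image, mem_filter] at hs
        obtain ⟨c, ⟨hcB, hcx⟩, rfl⟩ := hs
        rw [pureBlock_of_const hcx]; exact hcB
      · obtain ⟨ℓ, w, hw, rfl⟩ := mem_lineBlocks.mp h
        have hwe : w = ![w 0, w 1, F ℓ (w 0) (w 1)] :=
          funext3 (by simp) (by simp) (by simp [hw])
        rw [hwe]; exact hF ℓ (w 0) (w 1)
    · intro c hc
      rcases block_cases hV (hS.1 c hc) (hsum c hc) with ⟨x, hx⟩ | ⟨ℓ, w, rfl⟩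
      · refine mem_buildB.mpr (Or.inl (mem_pureBlocks.mpr ⟨x, c.image Prod.snd,
          mem_image.mpr ⟨c, mem_filter.mpr ⟨hc, hx⟩, rfl⟩, (pureBlock_of_const hx).symm⟩))
      · refine mem_buildB.mpr (Or.inr (mem_lineBlocks.mpr ⟨ℓ, w, ?_, rfl⟩))
        have hne : ((pt ℓ 0, w 0) : V × G) ≠ (pt ℓ 1, w 1) :=
          fun h => pt_ne ℓ (by decide : (0 : Fin 3) ≠ 1) (congrArg Prod.fst h)
        obtain ⟨c', -, hcu⟩ := hS.2 _ _ hne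
        have e1 := hcu _ ⟨hF ℓ (w 0) (w 1), mem_blockOf.mpr ⟨0, by simp⟩,
          mem_blockOf.mpr ⟨1, by simp⟩⟩
        have e2 := hcu _ ⟨hc, mem_blockOf.mpr ⟨0, rfl⟩, mem_blockOf.mpr ⟨1, rfl⟩⟩
        have hww := blockOf_w_eq (e1.trans e2.symm)
        simpa using congrFun hww 2

end Extract

section Inj
variable {V : Type*} [AddCommGroup V] [DecidableEq V] [Fintype V]
variable {G : Type*} [Fintype G] [DecidableEq G]
variable {A A' : V → Finset (Finset G)} {F F' : Lines V → G → G → G}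

lemma pureBlock_ne_blockOf {x : V} {s : Finset G} {ℓ : Lines V} {w : Fin 3 → G} :
    pureBlock x s ≠ blockOf ℓ w := by
  intro he
  have h0 : (pt ℓ 0, w 0) ∈ pureBlock x s := by rw [he]; exact mem_blockOf.mpr ⟨0, rfl⟩
  have h1 : (pt ℓ 1, w 1) ∈ pureBlock x s := by rw [he]; exact mem_blockOf.mpr ⟨1, rfl⟩
  exact absurd (((mem_pureBlock.mp h0).1).trans ((mem_pureBlock.mp h1).1).symm)
    (pt_ne ℓ (by decide : (0 : Fin 3) ≠ 1))

lemma buildA_subset (hE : buildB A F = buildB A' F')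
    (hA : ∀ x, ∀ s ∈ A x, s.Nonempty) : ∀ x, A x ⊆ A' x := by
  intro x s hs
  have hb : pureBlock x s ∈ buildB A' F' := by
    rw [← hE]; exact mem_buildB.mpr (Or.inl (mem_pureBlocks.mpr ⟨x, s, hs, rfl⟩))
  rcases mem_buildB.mp hb with h | h
  · obtain ⟨x', s', hs', he⟩ := mem_pureBlocks.mp h
    obtain ⟨g, hg⟩ := hA x s hs
    have hgmem : (x, g) ∈ pureBlock x' s' := by rw [← he]; exact mem_pureBlock.mpr ⟨rfl, hg⟩
    obtain rfl : x = x' := (mem_pureBlock.mp hgmem).1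
    have hss : s = s' := by
      rw [← pureBlock_snd (x := x) (s := s), he, pureBlock_snd]
    rw [hss]; exact hs'
  · obtain ⟨ℓ, w, _, he⟩ := mem_lineBlocks.mp h
    exact absurd he pureBlock_ne_blockOf

lemma buildF_eq (hV : ∀ x : V, x + x + x = 0) (hE : buildB A F = buildB A' F') :
    ∀ ℓ i j, F ℓ i j = F' ℓ i j := by
  intro ℓ i j
  have hb : blockOf ℓ ![i, j, F ℓ i j] ∈ buildB A' F' := by
    rw [← hE]
    exact mem_buildB.mpr (Or.inr (mem_lineBlocks.mpr ⟨ℓ, ![i, j, F ℓ i j], by simp, rfl⟩))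
  rcases mem_buildB.mp hb with h | h
  · obtain ⟨x', s', _, he⟩ := mem_pureBlocks.mp h
    exact absurd he.symm pureBlock_ne_blockOf
  · obtain ⟨ℓ', w', hw', he⟩ := mem_lineBlocks.mp h
    have hm0 : pt ℓ 0 ∈ ℓ'.1 := by
      have : ((pt ℓ 0, i) : V × G) ∈ blockOf ℓ' w' := by
        rw [← he]; exact mem_blockOf.mpr ⟨0, by simp⟩
      obtain ⟨a, ha⟩ := mem_blockOf.mp this
      rw [show pt ℓ 0 = pt ℓ' a from congrArg Prod.fst ha]; exact pt_mem ℓ' a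
    have hm1 : pt ℓ 1 ∈ ℓ'.1 := by
      have : ((pt ℓ 1, j) : V × G) ∈ blockOf ℓ' w' := by
        rw [← he]; exact mem_blockOf.mpr ⟨1, by simp⟩
      obtain ⟨a, ha⟩ := mem_blockOf.mp this
      rw [show pt ℓ 1 = pt ℓ' a from congrArg Prod.fst ha]; exact pt_mem ℓ' a
    obtain rfl : ℓ = ℓ' := line_eq_of_two hV (pt_ne ℓ (by decide : (0 : Fin 3) ≠ 1))
      (pt_mem ℓ 0) (pt_mem ℓ 1) hm0 hm1
    have hww : w' = ![i, j, F ℓ i j] := blockOf_w_eq he.symm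
    rw [hww] at hw'
    simpa using hw'.symm

end Inj

section Count
variable {V : Type*} [AddCommGroup V] [DecidableEq V] [Fintype V]
variable {G : Type*} [Fintype G] [DecidableEq G]

lemma six_mul_card_lines (hV : ∀ x : V, x + x + x = 0) :
    6 * Nat.card (Lines V) = Fintype.card V * Fintype.card V - Fintype.card V := by
  classical
  set L : Finset (Finset V) :=
    (univ : Finset (Finset V)).filter (fun s => s.card = 3 ∧ ∑ x ∈ s, x = 0) with hL
  have hcard : Nat.card (Lines V) = L.card := by
    rw [Nat.card_eq_fintype_card]
    exact Fintype.card_subtype _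
  have hmap : ∀ p ∈ (univ : Finset V).offDiag,
      ({p.1, p.2, -p.1 - p.2} : Finset V) ∈ L := by
    rintro ⟨x, y⟩ hp
    have hxy : x ≠ y := (Finset.mem_offDiag.mp hp).2.2
    exact mem_filter.mpr ⟨mem_univ _, (lineThrough hV hxy).2⟩
  have hfib := card_eq_sum_card_fiberwise hmap
  have hfiber : ∀ s ∈ L,
      ((univ : Finset V).offDiag.filter
        (fun p => ({p.1, p.2, -p.1 - p.2} : Finset V) = s)).card = 6 := by
    intro s hs
    obtain ⟨-, hs3, hs0⟩ := mem_filter.mp hs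
    have : ((univ : Finset V).offDiag.filter
        (fun p => ({p.1, p.2, -p.1 - p.2} : Finset V) = s)) = s.offDiag := by
      ext ⟨x, y⟩
      simp only [mem_filter, Finset.mem_offDiag, mem_univ, true_and]
      constructor
      · rintro ⟨hxy, rfl⟩
        exact ⟨by simp, by simp, hxy⟩
      · rintro ⟨hx, hy, hxy⟩
        refine ⟨hxy, ?_⟩
        have := line_unique hV hxy ⟨s, hs3, hs0⟩ hx hy
        exact (congrArg Subtype.val this).symm
    rw [this, offDiag_card, hs3]
  have hoff : (univ : Finset V).offDiag.card = L.card * 6 := by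
    rw [hfib, Finset.sum_congr rfl hfiber, sum_const, smul_eq_mul]
  rw [hcard, mul_comm 6 L.card, ← hoff, offDiag_card, card_univ]


lemma card_lines (hV : ∀ x : V, x + x + x = 0) :
    Nat.card (Lines V) = Fintype.card V * (Fintype.card V - 1) / 6 := by
  have h6 := six_mul_card_lines (V := V) hV
  have h : Fintype.card V * (Fintype.card V - 1) = 6 * Nat.card (Lines V) := by
    rw [h6, Nat.mul_sub, mul_one]
  rw [h, Nat.mul_div_cancel_left _ (by norm_num)]

theorem abstract_count (hV : ∀ x : V, x + x + x = 0) :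
    Nat.card {B : Finset (Finset (V × G)) // isSTS B ∧ ∀ b ∈ B, ∑ p ∈ b, p.1 = 0} =
      Nat.card {A : Finset (Finset G) // isSTS A} ^ Fintype.card V *
      Nat.card {L : G → G → G //
        (∀ i, Bijective (L i)) ∧ ∀ j, Bijective fun i => L i j} ^
        (Fintype.card V * (Fintype.card V - 1) / 6) := by
  classical
  set D := (V → {A : Finset (Finset G) // isSTS A}) ×
    (Lines V → {L : G → G → G // (∀ i, Bijective (L i)) ∧ ∀ j, Bijective fun i => L i j})
    with hD
  have key : Nat.card D =
      Nat.card {B : Finset (Finset (V × G)) // isSTS B ∧ ∀ b ∈ B, ∑ p ∈ b, p.1 = 0} := by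
    apply Nat.card_eq_of_bijective (fun d : D =>
      (⟨buildB (fun x => (d.1 x).1) (fun ℓ => (d.2 ℓ).1),
        buildB_isSTS hV (fun x => (d.1 x).2) (fun ℓ => (d.2 ℓ).2),
        buildB_sum hV (fun x s hs => ((d.1 x).2).1 s hs)⟩ :
        {B : Finset (Finset (V × G)) // isSTS B ∧ ∀ b ∈ B, ∑ p ∈ b, p.1 = 0}))
    constructor
    · intro d d' h
      have hbb : buildB (fun x => (d.1 x).1) (fun ℓ => (d.2 ℓ).1)
          = buildB (fun x => (d'.1 x).1) (fun ℓ => (d'.2 ℓ).1) := congrArg Subtype.val h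
      have hne : ∀ (dd : D) (x : V), ∀ s ∈ (dd.1 x).1, s.Nonempty := fun dd x s hs =>
        Finset.card_pos.mp (by rw [((dd.1 x).2).1 s hs]; norm_num)
      have hA : d.1 = d'.1 := funext fun x => Subtype.ext
        (Finset.Subset.antisymm (buildA_subset hbb (hne d) x) (buildA_subset hbb.symm (hne d') x))
      have hF : d.2 = d'.2 := funext fun ℓ => Subtype.ext
        (funext fun i => funext fun j => buildF_eq hV hbb ℓ i j)
      exact Prod.ext hA hF
    · rintro ⟨B, hS, hsum⟩
      obtain ⟨A, F, hA, hF, hbuild⟩ := build_surj hV hS hsum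
      exact ⟨(fun x => ⟨A x, hA x⟩, fun ℓ => ⟨F ℓ, hF ℓ⟩), Subtype.ext hbuild⟩
  rw [← key, hD, Nat.card_prod, Nat.card_fun, Nat.card_fun,
    Nat.card_eq_fintype_card (α := V), card_lines hV]

end Count

end STS17

theorem stmt17 (n t : ℕ) (ht1 : 1 ≤ t) (ht2 : t ≤ n - 1) :
    Nat.card {B : Finset (Finset (terIdx n t)) //
        isSTS B ∧ ∀ b ∈ B, ∑ j ∈ b, j.1 = 0} =
      N1 (3 ^ t) ^ (3 ^ (n - t)) *
        N3 (3 ^ t) ^ (3 ^ (n - t) * (3 ^ (n - t) - 1) / 6) := by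
  have hV : ∀ x : Fin (n - t) → ZMod 3, x + x + x = 0 := fun x => funext fun i => by
    have h3 : ∀ a : ZMod 3, a + a + a = 0 := by decide
    exact h3 (x i)
  have habs := STS17.abstract_count (V := Fin (n - t) → ZMod 3) (G := Fin (3 ^ t)) hV
  have hcV : Fintype.card (Fin (n - t) → ZMod 3) = 3 ^ (n - t) := by
    rw [Fintype.card_fun, ZMod.card, Fintype.card_fin]
  rw [hcV] at habs
  have h1 : Nat.card {A : Finset (Finset (Fin (3 ^ t))) // isSTS A} = N1 (3 ^ t) := rfl
  have h3 : Nat.card {L : Fin (3 ^ t) → Fin (3 ^ t) → Fin (3 ^ t) //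
      (∀ i, Function.Bijective (L i)) ∧
        ∀ j, Function.Bijective fun i => L i j} = N3 (3 ^ t) := rfl
  rw [h1, h3] at habs
  exact habs
end

section
/- The number of distinct Steiner triple systems on 3^n points contained in the ternary code with parity check matrix H_{n,1} equals 12^{3^{n-2}(3^{n-1}-1)/2}, for n ≥ 2. -/
set_option maxRecDepth 10000
set_option maxHeartbeats 1000000

namespace Stmt18

variable {m : ℕ}

abbrev X (m : ℕ) := Fin m → ZMod 3
abbrev P (m : ℕ) := X m × Fin 3

def good (B : Finset (Finset (P m))) : Prop :=
  isSTS B ∧ ∀ b ∈ B, ∑ j ∈ b, j.1 = 0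

def fiber (x : X m) : Finset (P m) := {x} ×ˢ Finset.univ

def T (m : ℕ) : Finset (Finset (X m)) :=
  Finset.univ.filter (fun s => s.card = 3 ∧ ∑ x ∈ s, x = 0)

def LtProp (t : Finset (X m)) (D : Finset (Finset (P m))) : Prop :=
  (∀ b ∈ D, Finset.image Prod.fst b = t ∧ b.card = 3) ∧
  ∀ p q : P m, p.1 ∈ t → q.1 ∈ t → p.1 ≠ q.1 →
    ∃! b, b ∈ D ∧ p ∈ b ∧ q ∈ b

lemma mem_T {t : Finset (X m)} : t ∈ T m ↔ t.card = 3 ∧ ∑ x ∈ t, x = 0 := by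
  simp [T]

-- ZMod 3 facts lifted to X m
lemma third_ne_left {x y : X m} (h : x ≠ y) : -x - y ≠ x := by
  intro he
  apply h
  funext i
  have := congrFun he i
  have : ∀ a b : ZMod 3, -a - b = a → a = b := by decide
  exact this _ _ (congrFun he i)

lemma third_ne_right {x y : X m} (h : x ≠ y) : -x - y ≠ y := by
  intro he
  apply h
  funext i
  have : ∀ a b : ZMod 3, -a - b = b → a = b := by decide
  exact this _ _ (congrFun he i)

lemma two_smul_self (x : X m) : x + x = -x := by
  funext i
  have : ∀ a : ZMod 3, a + a = -a := by decide
  exact this _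

lemma fiber_mem (p : P m) (x : X m) : p ∈ fiber x ↔ p.1 = x := by
  simp [fiber, Prod.ext_iff, eq_comm]

lemma fiber_card (x : X m) : (fiber x).card = 3 := by
  simp [fiber]

lemma sum_fiber (x : X m) : ∑ j ∈ fiber x, j.1 = 0 := by
  rw [fiber, Finset.sum_product]
  simp only [Finset.sum_const, Finset.sum_singleton]
  have h : ∀ a : ZMod 3, (Finset.univ : Finset (Fin 3)).card • a = 0 := by decide
  funext i
  rw [Pi.smul_apply, Pi.zero_apply]
  exact h (x i)

-- triple of distinct elements summing to zero
lemma sum_triple {a b c : X m} (hab : a ≠ b) (hac : a ≠ c) (hbc : b ≠ c) :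
    ∑ x ∈ ({a, b, c} : Finset (X m)), x = a + b + c := by
  rw [Finset.sum_insert (by simp [hab, hac]), Finset.sum_insert (by simp [hbc]),
    Finset.sum_singleton, add_assoc]

lemma triple_mem_T {a b : X m} (hab : a ≠ b) : ({a, b, -a - b} : Finset (X m)) ∈ T m := by
  rw [mem_T]
  have h1 : a ≠ -a - b := (third_ne_left hab).symm
  have h2 : b ≠ -a - b := (third_ne_right hab).symm
  constructor
  · rw [Finset.card_insert_of_notMem (by simp [hab, h1]),
      Finset.card_insert_of_notMem (by simp [h2]), Finset.card_singleton]
  · rw [sum_triple hab h1 h2]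
    abel

/-- a 3-element set with sum zero containing two given distinct elements is determined -/
lemma triple_det {t : Finset (X m)} (ht : t ∈ T m) {a b : X m} (ha : a ∈ t) (hb : b ∈ t)
    (hab : a ≠ b) : t = {a, b, -a - b} := by
  obtain ⟨hc, hs⟩ := mem_T.mp ht
  obtain ⟨x, y, z, hxy, hxz, hyz, rfl⟩ := Finset.card_eq_three.mp hc
  have hsum : x + y + z = 0 := by rwa [sum_triple hxy hxz hyz] at hs
  simp only [Finset.mem_insert, Finset.mem_singleton] at ha hb
  have key : ∀ u v w : X m, u ≠ v → u ≠ w → v ≠ w → u + v + w = 0 →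
      ({u, v, w} : Finset (X m)) = {u, v, -u - v} := by
    intro u v w _ _ _ h
    have : w = -u - v := by
      have : u + v + w = 0 := h
      linear_combination this
    rw [this]
  have e1 : ({x, y, z} : Finset (X m)) = {x, z, y} := by rw [Finset.pair_comm y z]
  have e2 : ({x, y, z} : Finset (X m)) = {y, x, z} := Finset.insert_comm x y {z}
  have e3 : ({x, y, z} : Finset (X m)) = {y, z, x} := by
    rw [Finset.insert_comm x y, Finset.pair_comm x z]
  have e4 : ({x, y, z} : Finset (X m)) = {z, x, y} := by
    rw [Finset.pair_comm y z, Finset.insert_comm x z]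
  have e5 : ({x, y, z} : Finset (X m)) = {z, y, x} := by
    rw [Finset.insert_comm x y, Finset.pair_comm x z, Finset.insert_comm y z]
  rcases ha with rfl | rfl | rfl <;> rcases hb with rfl | rfl | rfl
  · exact absurd rfl hab
  · exact key a b z hxy hxz hyz hsum
  · rw [e1]; exact key a b y hxz hxy (Ne.symm hyz) (by linear_combination hsum)
  · rw [e2]; exact key a b z (Ne.symm hxy) hyz hxz (by linear_combination hsum)
  · exact absurd rfl hab
  · rw [e3]; exact key a b x hyz (Ne.symm hxy) (Ne.symm hxz) (by linear_combination hsum)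
  · rw [e4]; exact key a b y (Ne.symm hxz) (Ne.symm hyz) hxy (by linear_combination hsum)
  · rw [e5]; exact key a b x (Ne.symm hyz) (Ne.symm hxz) (Ne.symm hxy) (by linear_combination hsum)
  · exact absurd rfl hab

/-- extract the three elements of a 3-set containing two given distinct points -/
lemma eq_triple {α : Type*} [DecidableEq α] {b : Finset α} (h3 : b.card = 3) {p q : α}
    (hp : p ∈ b) (hq : q ∈ b) (hpq : p ≠ q) : ∃ r, r ≠ p ∧ r ≠ q ∧ b = {p, q, r} := by
  have h1 : ((b.erase p).erase q).card = 1 := by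
    rw [Finset.card_erase_of_mem (Finset.mem_erase.mpr ⟨Ne.symm hpq, hq⟩),
      Finset.card_erase_of_mem hp, h3]
  obtain ⟨r, hr⟩ := Finset.card_eq_one.mp h1
  have hrm : r ∈ (b.erase p).erase q := hr ▸ Finset.mem_singleton_self r
  have hrq : r ≠ q := (Finset.mem_erase.mp hrm).1
  have hrp : r ≠ p := (Finset.mem_erase.mp (Finset.mem_erase.mp hrm).2).1
  have hrb : r ∈ b := Finset.mem_of_mem_erase (Finset.mem_of_mem_erase hrm)
  refine ⟨r, hrp, hrq, ?_⟩
  apply Finset.eq_of_superset_of_card_ge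
  · intro c hc
    simp only [Finset.mem_insert, Finset.mem_singleton] at hc
    rcases hc with rfl | rfl | rfl <;> assumption
  · rw [h3, Finset.card_insert_of_notMem (by simp [hpq, Ne.symm hrp]),
      Finset.card_insert_of_notMem (by simp [Ne.symm hrq]), Finset.card_singleton]

section Good
variable {B : Finset (Finset (P m))} (hB : good B)
include hB

lemma fiber_mem_good (x : X m) : fiber x ∈ B := by
  obtain ⟨⟨hcard, hcov⟩, hsum⟩ := id hB
  have hne : ((x, 0) : P m) ≠ (x, 1) := by
    intro h
    have h2 : (0 : Fin 3) = 1 := congrArg Prod.snd h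
    exact absurd h2 (by decide)
  obtain ⟨b, ⟨hbB, hp, hq⟩, -⟩ := hcov (x, 0) (x, 1) hne
  obtain ⟨r, hrp, hrq, rfl⟩ := eq_triple (hcard b hbB) hp hq hne
  have hs : (x, (0 : Fin 3)).1 + (x, (1 : Fin 3)).1 + r.1 = 0 := by
    have := hsum _ hbB
    rwa [Finset.sum_insert (by simp [hne, Ne.symm hrp]),
      Finset.sum_insert (by simp [Ne.symm hrq]), Finset.sum_singleton, ← add_assoc] at this
  have hr1 : r.1 = x := by
    have : r.1 = -x - x := by linear_combination hs
    rw [this, ← two_smul_self x]; abel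
  have hsub : ({((x,(0:Fin 3)) : P m), (x,1), r} : Finset (P m)) ⊆ fiber x := by
    intro c hc
    simp only [Finset.mem_insert, Finset.mem_singleton] at hc
    rcases hc with rfl | rfl | rfl
    · exact (fiber_mem _ _).mpr rfl
    · exact (fiber_mem _ _).mpr rfl
    · exact (fiber_mem _ _).mpr hr1
  have heq := Finset.eq_of_subset_of_card_le hsub (by rw [fiber_card, hcard _ hbB])
  rwa [← heq]

/-- every block of a good system is a fiber or has a zero-sum triple as fst-image -/
lemma block_classify {b : Finset (P m)} (hb : b ∈ B) :
    (∃ x, b = fiber x) ∨ (b.image Prod.fst ∈ T m) := by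
  obtain ⟨⟨hcard, hcov⟩, hsum⟩ := id hB
  by_cases h : ∃ p ∈ b, ∃ q ∈ b, p ≠ q ∧ p.1 = q.1
  · obtain ⟨p, hp, q, hq, hpq, h1⟩ := h
    left
    refine ⟨p.1, ?_⟩
    obtain ⟨c, ⟨hcB, hpc, hqc⟩, hu⟩ := hcov p q hpq
    have e1 := hu b ⟨hb, hp, hq⟩
    have e2 := hu (fiber p.1) ⟨fiber_mem_good hB p.1, (fiber_mem _ _).mpr rfl,
      (fiber_mem _ _).mpr h1.symm⟩
    rw [e1, e2]
  · right
    push_neg at h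
    have hinj : Set.InjOn Prod.fst (↑b : Set (P m)) := by
      intro p hp q hq hpq
      by_contra hne
      exact h p hp q hq hne hpq
    rw [mem_T]
    constructor
    · rw [Finset.card_image_of_injOn hinj, hcard b hb]
    · rw [Finset.sum_image (fun p hp q hq he => hinj hp hq he)]
      exact hsum b hb

lemma filter_LtProp {t : Finset (X m)} (ht : t ∈ T m) :
    LtProp t (B.filter (fun b => b.image Prod.fst = t)) := by
  obtain ⟨⟨hcard, hcov⟩, hsum⟩ := id hB
  constructor
  · intro b hb
    rw [Finset.mem_filter] at hb
    exact ⟨hb.2, hcard b hb.1⟩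
  · intro p q hpt hqt hpq
    have hpq' : p ≠ q := fun he => hpq (congrArg Prod.fst he)
    obtain ⟨b, ⟨hbB, hp, hq⟩, hu⟩ := hcov p q hpq'
    have himg : b.image Prod.fst = t := by
      rcases block_classify hB hbB with ⟨x, rfl⟩ | hT
      · exact absurd (((fiber_mem _ _).mp hp).trans ((fiber_mem _ _).mp hq).symm) hpq
      · have h1 : p.1 ∈ b.image Prod.fst := Finset.mem_image.mpr ⟨p, hp, rfl⟩
        have h2 : q.1 ∈ b.image Prod.fst := Finset.mem_image.mpr ⟨q, hq, rfl⟩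
        rw [triple_det hT h1 h2 hpq, ← triple_det ht hpt hqt hpq]
    refine ⟨b, ⟨Finset.mem_filter.mpr ⟨hbB, himg⟩, hp, hq⟩, ?_⟩
    intro b' ⟨hb', hp', hq'⟩
    exact hu b' ⟨(Finset.mem_filter.mp hb').1, hp', hq'⟩

end Good
def build (Dfam : {t // t ∈ T m} → Finset (Finset (P m))) : Finset (Finset (P m)) :=
  (Finset.univ.image fun x : X m => fiber x) ∪ Finset.univ.biUnion fun t => Dfam t

lemma mem_build {Dfam : {t // t ∈ T m} → Finset (Finset (P m))} {b : Finset (P m)} :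
    b ∈ build Dfam ↔ (∃ x, b = fiber x) ∨ ∃ t, b ∈ Dfam t := by
  simp [build, eq_comm]

lemma fiber_image (x : X m) : (fiber x).image Prod.fst = {x} := by
  ext a
  simp only [Finset.mem_image, Finset.mem_singleton]
  constructor
  · rintro ⟨p, hp, rfl⟩; exact (fiber_mem _ _).mp hp
  · rintro rfl; exact ⟨(a, 0), (fiber_mem _ _).mpr rfl, rfl⟩

section Build
variable {Dfam : {t // t ∈ T m} → Finset (Finset (P m))}
  (hD : ∀ t, LtProp t.1 (Dfam t))
include hD

lemma block_fst_mem {t : {t // t ∈ T m}} {b : Finset (P m)} (hb : b ∈ Dfam t) {p : P m}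
    (hp : p ∈ b) : p.1 ∈ t.1 :=
  ((hD t).1 b hb).1 ▸ Finset.mem_image.mpr ⟨p, hp, rfl⟩

lemma block_injOn {t : {t // t ∈ T m}} {b : Finset (P m)} (hb : b ∈ Dfam t) :
    Set.InjOn Prod.fst (↑b : Set (P m)) := by
  apply Finset.injOn_of_card_image_eq
  rw [((hD t).1 b hb).1, ((hD t).1 b hb).2, (mem_T.mp t.2).1]

lemma build_good : good (build Dfam) := by
  have hcard : ∀ b ∈ build Dfam, b.card = 3 := by
    intro b hb
    rcases mem_build.mp hb with ⟨x, rfl⟩ | ⟨t, ht⟩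
    · exact fiber_card x
    · exact ((hD t).1 b ht).2
  refine ⟨⟨hcard, ?_⟩, ?_⟩
  · -- covering
    intro p q hpq
    by_cases h1 : p.1 = q.1
    · refine ⟨fiber p.1, ⟨mem_build.mpr (Or.inl ⟨p.1, rfl⟩), (fiber_mem _ _).mpr rfl,
        (fiber_mem _ _).mpr h1.symm⟩, ?_⟩
      rintro b' ⟨hb', hp', hq'⟩
      rcases mem_build.mp hb' with ⟨x, rfl⟩ | ⟨t, ht⟩
      · rw [(fiber_mem _ _).mp hp']
      · exact absurd (block_injOn hD ht hp' hq' h1) hpq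
    · set t0 : {t // t ∈ T m} := ⟨{p.1, q.1, -p.1 - q.1}, triple_mem_T h1⟩ with ht0
      have hp1 : p.1 ∈ t0.1 := Finset.mem_insert_self _ _
      have hq1 : q.1 ∈ t0.1 := Finset.mem_insert.mpr (Or.inr (Finset.mem_insert_self _ _))
      obtain ⟨b, ⟨hbD, hpb, hqb⟩, hu⟩ := (hD t0).2 p q hp1 hq1 h1
      refine ⟨b, ⟨mem_build.mpr (Or.inr ⟨t0, hbD⟩), hpb, hqb⟩, ?_⟩
      rintro b' ⟨hb', hp', hq'⟩
      rcases mem_build.mp hb' with ⟨x, rfl⟩ | ⟨t, ht⟩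
      · exact absurd (((fiber_mem _ _).mp hp').trans ((fiber_mem _ _).mp hq').symm) h1
      · have hteq : t = t0 := by
          apply Subtype.ext
          rw [triple_det t.2 (block_fst_mem hD ht hp') (block_fst_mem hD ht hq') h1]
        rw [hteq] at ht
        exact hu b' ⟨ht, hp', hq'⟩
  · -- sums
    intro b hb
    rcases mem_build.mp hb with ⟨x, rfl⟩ | ⟨t, ht⟩
    · exact sum_fiber x
    · calc ∑ j ∈ b, j.1 = ∑ x ∈ b.image Prod.fst, x := by
            rw [Finset.sum_image (fun p hp q hq he => block_injOn hD ht hp hq he)]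
        _ = ∑ x ∈ t.1, x := by rw [((hD t).1 b ht).1]
        _ = 0 := (mem_T.mp t.2).2

lemma build_filter (t : {t // t ∈ T m}) :
    (build Dfam).filter (fun b => b.image Prod.fst = t.1) = Dfam t := by
  ext b
  rw [Finset.mem_filter]
  constructor
  · rintro ⟨hb, himg⟩
    rcases mem_build.mp hb with ⟨x, rfl⟩ | ⟨t', ht'⟩
    · exfalso
      have h1 : ({x} : Finset (X m)).card = 3 := by
        rw [← fiber_image x, himg, (mem_T.mp t.2).1]
      simp at h1
    · have : t' = t := Subtype.ext (by rw [← ((hD t').1 b ht').1, himg])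
      rwa [← this]
  · intro hb
    exact ⟨mem_build.mpr (Or.inr ⟨t, hb⟩), ((hD t).1 b hb).1⟩

end Build

lemma build_eq {B : Finset (Finset (P m))} (hB : good B) :
    build (fun t => B.filter (fun b => b.image Prod.fst = t.1)) = B := by
  ext b
  rw [mem_build]
  constructor
  · rintro (⟨x, rfl⟩ | ⟨t, ht⟩)
    · exact fiber_mem_good hB x
    · exact (Finset.mem_filter.mp ht).1
  · intro hb
    rcases block_classify hB hb with ⟨x, rfl⟩ | hT
    · exact Or.inl ⟨x, rfl⟩
    · exact Or.inr ⟨⟨_, hT⟩, Finset.mem_filter.mpr ⟨hb, rfl⟩⟩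

/-- the main equivalence -/
noncomputable def mainEquiv (m : ℕ) :
    {B : Finset (Finset (P m)) // good B} ≃
      ((t : {t // t ∈ T m}) → {D : Finset (Finset (P m)) // LtProp t.1 D}) where
  toFun B t := ⟨(B.1).filter (fun b => b.image Prod.fst = t.1), filter_LtProp B.2 t.2⟩
  invFun Dfam := ⟨build (fun t => (Dfam t).1), build_good (fun t => (Dfam t).2)⟩
  left_inv B := Subtype.ext (build_eq B.2)
  right_inv Dfam := funext fun t => Subtype.ext (build_filter (fun t => (Dfam t).2) t)


abbrev V9 := Fin 3×Fin 3×Fin 3×Fin 3×Fin 3×Fin 3×Fin 3×Fin 3×Fin 3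
def latin9 (v : V9) : Prop :=
  match v with
  | (a,b,c,d,e,f,g,h,i) =>
    a≠b ∧ a≠c ∧ b≠c ∧ d≠e ∧ d≠f ∧ e≠f ∧ g≠h ∧ g≠i ∧ h≠i ∧
    a≠d ∧ a≠g ∧ d≠g ∧ b≠e ∧ b≠h ∧ e≠h ∧ c≠f ∧ c≠i ∧ f≠i
instance : DecidablePred latin9 := fun v => by unfold latin9; exact inferInstance

theorem card9 : Fintype.card {v : V9 // latin9 v} = 12 := by decide

def LatinFun : Type :=
  {f : Fin 3 → Fin 3 → Fin 3 // (∀ i k, ∃! j, f i j = k) ∧ (∀ j k, ∃! i, f i j = k)}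

/-- an injective function `Fin 3 → Fin 3` hits everything uniquely -/
lemma inj_exu (g : Fin 3 → Fin 3) (hg : Function.Injective g) (k : Fin 3) :
    ∃! j, g j = k := by
  obtain ⟨j, hj⟩ := (Finite.injective_iff_surjective.mp hg) k
  exact ⟨j, hj, fun j' hj' => hg (hj'.trans hj.symm)⟩

lemma inj3 (g : Fin 3 → Fin 3) (h01 : g 0 ≠ g 1) (h02 : g 0 ≠ g 2) (h12 : g 1 ≠ g 2) :
    Function.Injective g := by
  intro a b hab
  fin_cases a <;> fin_cases b <;> simp_all

def enc (f : LatinFun) : {v : V9 // latin9 v} := by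
  refine ⟨(f.1 0 0, f.1 0 1, f.1 0 2, f.1 1 0, f.1 1 1, f.1 1 2, f.1 2 0, f.1 2 1, f.1 2 2), ?_⟩
  obtain ⟨f, hrow, hcol⟩ := f
  have hr : ∀ i, Function.Injective (f i) := by
    intro i a b hab
    obtain ⟨j, _, hu⟩ := hrow i (f i b)
    rw [hu a hab, hu b rfl]
  have hc : ∀ j, Function.Injective (fun i => f i j) := by
    intro j a b hab
    obtain ⟨i, _, hu⟩ := hcol j (f b j)
    rw [hu a hab, hu b rfl]
  refine ⟨?_,?_,?_,?_,?_,?_,?_,?_,?_,?_,?_,?_,?_,?_,?_,?_,?_,?_⟩ <;>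
    first
      | (intro h; exact absurd ((hr _) h) (by decide))
      | (intro h; exact absurd ((hc _) h) (by decide))

lemma enc_bij : Function.Bijective enc := by
  constructor
  · rintro ⟨f, hf⟩ ⟨g, hg⟩ h
    simp only [enc, Subtype.mk.injEq, Prod.mk.injEq] at h
    refine Subtype.ext (funext fun i => funext fun j => ?_)
    fin_cases i <;> fin_cases j <;> tauto
  · rintro ⟨⟨a,b,c,d,e,f,g,h,i⟩, hv⟩
    obtain ⟨h1,h2,h3,h4,h5,h6,h7,h8,h9,h10,h11,h12,h13,h14,h15,h16,h17,h18⟩ := hv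
    refine ⟨⟨fun x y => (![![a,b,c],![d,e,f],![g,h,i]] : Fin 3 → Fin 3 → Fin 3) x y, ?_, ?_⟩, ?_⟩
    · intro x k
      apply inj_exu
      apply inj3 <;> fin_cases x <;> simp_all
    · intro y k
      apply inj_exu (fun x => _)
      apply inj3 (fun x => ![![a,b,c],![d,e,f],![g,h,i]] x y) <;> fin_cases y <;> simp_all
    · simp [enc]

theorem card_LatinFun : Nat.card LatinFun = 12 := by
  have : Nat.card {v : V9 // latin9 v} = 12 := by
    rw [Nat.card_eq_fintype_card, card9]
  rw [← this]
  exact Nat.card_eq_of_bijective enc enc_bij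


section Phi
variable {x y z : X m}

def blk (x y z : X m) (i j k : Fin 3) : Finset (P m) := {(x,i),(y,j),(z,k)}

variable (hxy : x ≠ y) (hxz : x ≠ z) (hyz : y ≠ z)

section MemLemmas
include hxy hxz

lemma memx {i' i j k : Fin 3} : ((x,i') ∈ blk x y z i j k) ↔ i' = i := by
  simp only [blk, Finset.mem_insert, Finset.mem_singleton, Prod.mk.injEq, hxy, hxz,
    false_and, or_false, true_and]

end MemLemmas

section MemLemmas2
include hxy hyz

lemma memy {j' i j k : Fin 3} : ((y,j') ∈ blk x y z i j k) ↔ j' = j := by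
  have h1 : y ≠ x := Ne.symm hxy
  simp only [blk, Finset.mem_insert, Finset.mem_singleton, Prod.mk.injEq, h1, hyz,
    false_and, false_or, or_false, true_and]

end MemLemmas2

section MemLemmas3
include hxz hyz

lemma memz {k' i j k : Fin 3} : ((z,k') ∈ blk x y z i j k) ↔ k' = k := by
  have h1 : z ≠ x := Ne.symm hxz
  have h2 : z ≠ y := Ne.symm hyz
  simp only [blk, Finset.mem_insert, Finset.mem_singleton, Prod.mk.injEq, h1, h2,
    false_and, false_or, true_and]

end MemLemmas3

include hxy hxz hyz

lemma blk_card {i j k : Fin 3} : (blk x y z i j k).card = 3 := by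
  rw [blk, Finset.card_insert_of_notMem, Finset.card_insert_of_notMem,
    Finset.card_singleton]
  · simp only [Finset.mem_singleton, Prod.mk.injEq, hyz, false_and, not_false_iff]
  · simp only [Finset.mem_insert, Finset.mem_singleton, Prod.mk.injEq, hxy, hxz,
      false_and, or_false, not_false_iff]

omit hxy hxz hyz in
lemma blk_image {i j k : Fin 3} :
    (blk x y z i j k).image Prod.fst = ({x, y, z} : Finset (X m)) := by
  rw [blk, Finset.image_insert, Finset.image_insert, Finset.image_singleton]

lemma blk_inj {i j k i' j' k' : Fin 3} (h : blk x y z i j k = blk x y z i' j' k') :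
    i = i' ∧ j = j' ∧ k = k' := by
  refine ⟨?_, ?_, ?_⟩
  · exact (memx hxy hxz).mp (h ▸ (memx hxy hxz (i := i)).mpr rfl)
  · exact (memy hxy hyz).mp (h ▸ (memy hxy hyz (j := j)).mpr rfl)
  · exact (memz hxz hyz).mp (h ▸ (memz hxz hyz (k := k)).mpr rfl)

omit hxy hxz hyz

def Phi (x y z : X m) (f : LatinFun) : Finset (Finset (P m)) :=
  Finset.univ.image (fun ij : Fin 3 × Fin 3 => blk x y z ij.1 ij.2 (f.1 ij.1 ij.2))

lemma mem_Phi {f : LatinFun} {b : Finset (P m)} :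
    b ∈ Phi x y z f ↔ ∃ i j, b = blk x y z i j (f.1 i j) := by
  simp only [Phi, Finset.mem_image, Finset.mem_univ, true_and, Prod.exists, eq_comm]

lemma exu_swap {D : Finset (Finset (P m))} {p q : P m}
    (h : ∃! b, b ∈ D ∧ p ∈ b ∧ q ∈ b) : ∃! b, b ∈ D ∧ q ∈ b ∧ p ∈ b := by
  obtain ⟨b, ⟨h1, h2, h3⟩, hu⟩ := h
  exact ⟨b, ⟨h1, h3, h2⟩, fun b' ⟨g1, g2, g3⟩ => hu b' ⟨g1, g3, g2⟩⟩

include hxy hxz hyz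

lemma cover_xy (f : LatinFun) (i j : Fin 3) :
    ∃! b, b ∈ Phi x y z f ∧ (x,i) ∈ b ∧ (y,j) ∈ b := by
  refine ⟨blk x y z i j (f.1 i j), ⟨mem_Phi.mpr ⟨i, j, rfl⟩,
    (memx hxy hxz).mpr rfl, (memy hxy hyz).mpr rfl⟩, ?_⟩
  rintro b' ⟨hb', hx', hy'⟩
  obtain ⟨i', j', rfl⟩ := mem_Phi.mp hb'
  obtain rfl := (memx hxy hxz).mp hx'
  obtain rfl := (memy hxy hyz).mp hy'
  rfl

lemma cover_xz (f : LatinFun) (i k : Fin 3) :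
    ∃! b, b ∈ Phi x y z f ∧ (x,i) ∈ b ∧ (z,k) ∈ b := by
  obtain ⟨j, hj, hju⟩ := f.2.1 i k
  refine ⟨blk x y z i j (f.1 i j), ⟨mem_Phi.mpr ⟨i, j, rfl⟩,
    (memx hxy hxz).mpr rfl, (memz hxz hyz).mpr hj.symm⟩, ?_⟩
  rintro b' ⟨hb', hx', hz'⟩
  obtain ⟨i', j', rfl⟩ := mem_Phi.mp hb'
  obtain rfl := (memx hxy hxz).mp hx'
  obtain rfl := hju j' ((memz hxz hyz).mp hz').symm
  rfl

lemma cover_yz (f : LatinFun) (j k : Fin 3) :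
    ∃! b, b ∈ Phi x y z f ∧ (y,j) ∈ b ∧ (z,k) ∈ b := by
  obtain ⟨i, hi, hiu⟩ := f.2.2 j k
  refine ⟨blk x y z i j (f.1 i j), ⟨mem_Phi.mpr ⟨i, j, rfl⟩,
    (memy hxy hyz).mpr rfl, (memz hxz hyz).mpr hi.symm⟩, ?_⟩
  rintro b' ⟨hb', hy', hz'⟩
  obtain ⟨i', j', rfl⟩ := mem_Phi.mp hb'
  obtain rfl := (memy hxy hyz).mp hy'
  obtain rfl := hiu i' ((memz hxz hyz).mp hz').symm
  rfl

lemma Phi_LtProp (f : LatinFun) : LtProp ({x, y, z} : Finset (X m)) (Phi x y z f) := by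
  constructor
  · intro b hb
    obtain ⟨i, j, rfl⟩ := mem_Phi.mp hb
    exact ⟨blk_image, blk_card hxy hxz hyz⟩
  · rintro ⟨px, pi⟩ ⟨qx, qj⟩ hp hq hpq
    simp only [Finset.mem_insert, Finset.mem_singleton] at hp hq
    rcases hp with rfl | rfl | rfl <;> rcases hq with rfl | rfl | rfl
    · exact absurd rfl hpq
    · exact cover_xy hxy hxz hyz f pi qj
    · exact cover_xz hxy hxz hyz f pi qj
    · exact exu_swap (cover_xy hxy hxz hyz f qj pi)
    · exact absurd rfl hpq
    · exact cover_yz hxy hxz hyz f pi qj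
    · exact exu_swap (cover_xz hxy hxz hyz f qj pi)
    · exact exu_swap (cover_yz hxy hxz hyz f qj pi)
    · exact absurd rfl hpq

lemma Phi_inj : Function.Injective (Phi x y z (m := m)) := by
  intro f g h
  apply Subtype.ext
  funext i j
  have h1 : blk x y z i j (f.1 i j) ∈ Phi x y z g := by
    rw [← h]; exact mem_Phi.mpr ⟨i, j, rfl⟩
  obtain ⟨i', j', he⟩ := mem_Phi.mp h1
  obtain ⟨rfl, rfl, hk⟩ := blk_inj hxy hxz hyz he
  exact hk

lemma block_decomp {D : Finset (Finset (P m))} (hD : LtProp ({x, y, z} : Finset (X m)) D)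
    {b : Finset (P m)} (hb : b ∈ D) : ∃ i j k, b = blk x y z i j k := by
  obtain ⟨himg, hcard⟩ := hD.1 b hb
  have hx : x ∈ b.image Prod.fst := himg ▸ Finset.mem_insert_self _ _
  have hy : y ∈ b.image Prod.fst := himg ▸ Finset.mem_insert.mpr
    (Or.inr (Finset.mem_insert_self _ _))
  have hz : z ∈ b.image Prod.fst := himg ▸ Finset.mem_insert.mpr
    (Or.inr (Finset.mem_insert.mpr (Or.inr (Finset.mem_singleton_self _))))
  obtain ⟨p, hp, hp1⟩ := Finset.mem_image.mp hx
  obtain ⟨q, hq, hq1⟩ := Finset.mem_image.mp hy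
  obtain ⟨r, hr, hr1⟩ := Finset.mem_image.mp hz
  refine ⟨p.2, q.2, r.2, ?_⟩
  have hpe : p = (x, p.2) := Prod.ext hp1 rfl
  have hqe : q = (y, q.2) := Prod.ext hq1 rfl
  have hre : r = (z, r.2) := Prod.ext hr1 rfl
  symm
  apply Finset.eq_of_subset_of_card_le
  · intro c hc
    simp only [blk, Finset.mem_insert, Finset.mem_singleton] at hc
    rcases hc with rfl | rfl | rfl
    · exact hpe ▸ hp
    · exact hqe ▸ hq
    · exact hre ▸ hr
  · rw [hcard, blk_card hxy hxz hyz]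

lemma Phi_surj {D : Finset (Finset (P m))} (hD : LtProp ({x, y, z} : Finset (X m)) D) :
    ∃ f : LatinFun, Phi x y z f = D := by
  classical
  have hxm : x ∈ ({x, y, z} : Finset (X m)) := Finset.mem_insert_self _ _
  have hym : y ∈ ({x, y, z} : Finset (X m)) :=
    Finset.mem_insert.mpr (Or.inr (Finset.mem_insert_self _ _))
  have hzm : z ∈ ({x, y, z} : Finset (X m)) :=
    Finset.mem_insert.mpr (Or.inr (Finset.mem_insert.mpr (Or.inr (Finset.mem_singleton_self _))))
  have key : ∀ i j : Fin 3, ∃ k, ∃ b ∈ D, b = blk x y z i j k ∧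
      ∀ b' ∈ D, (x,i) ∈ b' → (y,j) ∈ b' → b' = b := by
    intro i j
    obtain ⟨b, ⟨hbD, hxb, hyb⟩, hu⟩ := hD.2 (x,i) (y,j) hxm hym hxy
    obtain ⟨i', j', k, rfl⟩ := block_decomp hxy hxz hyz hD hbD
    obtain rfl := (memx hxy hxz).mp hxb
    obtain rfl := (memy hxy hyz).mp hyb
    exact ⟨k, _, hbD, rfl, fun b' hb' h1 h2 => hu b' ⟨hb', h1, h2⟩⟩
  choose f hf using key
  have hblk : ∀ i j, blk x y z i j (f i j) ∈ D := fun i j => by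
    obtain ⟨b, hbD, hbe, -⟩ := hf i j; exact hbe ▸ hbD
  have huniq : ∀ i j, ∀ b' ∈ D, (x,i) ∈ b' → (y,j) ∈ b' → b' = blk x y z i j (f i j) := by
    intro i j b' hb' h1 h2
    obtain ⟨b, hbD, hbe, hu⟩ := hf i j
    rw [hu b' hb' h1 h2, hbe]
  have hrow : ∀ i k, ∃! j, f i j = k := by
    intro i k
    obtain ⟨b, ⟨hbD, hxb, hzb⟩, hu⟩ := hD.2 (x,i) (z,k) hxm hzm hxz
    obtain ⟨i', j', k', rfl⟩ := block_decomp hxy hxz hyz hD hbD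
    obtain rfl := (memx hxy hxz).mp hxb
    obtain rfl := (memz hxz hyz).mp hzb
    have hj' : f i j' = k := by
      have := huniq i j' _ hbD ((memx hxy hxz).mpr rfl) ((memy hxy hyz).mpr rfl)
      exact ((blk_inj hxy hxz hyz this).2.2).symm
    refine ⟨j', hj', ?_⟩
    intro j hj
    have hb2 := hblk i j
    have := hu _ ⟨hb2, (memx hxy hxz).mpr rfl, (memz hxz hyz).mpr hj.symm⟩
    exact (blk_inj hxy hxz hyz this).2.1
  have hcol : ∀ j k, ∃! i, f i j = k := by
    intro j k
    obtain ⟨b, ⟨hbD, hyb, hzb⟩, hu⟩ := hD.2 (y,j) (z,k) hym hzm hyz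
    obtain ⟨i', j', k', rfl⟩ := block_decomp hxy hxz hyz hD hbD
    obtain rfl := (memy hxy hyz).mp hyb
    obtain rfl := (memz hxz hyz).mp hzb
    have hi' : f i' j = k := by
      have := huniq i' j _ hbD ((memx hxy hxz).mpr rfl) ((memy hxy hyz).mpr rfl)
      exact ((blk_inj hxy hxz hyz this).2.2).symm
    refine ⟨i', hi', ?_⟩
    intro i hi
    have hb2 := hblk i j
    have := hu _ ⟨hb2, (memy hxy hyz).mpr rfl, (memz hxz hyz).mpr hi.symm⟩
    exact (blk_inj hxy hxz hyz this).1
  refine ⟨⟨f, hrow, hcol⟩, ?_⟩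
  apply Finset.Subset.antisymm
  · intro b hb
    obtain ⟨i, j, rfl⟩ := mem_Phi.mp hb
    exact hblk i j
  · intro b hb
    obtain ⟨i, j, k, rfl⟩ := block_decomp hxy hxz hyz hD hb
    have := huniq i j _ hb ((memx hxy hxz).mpr rfl) ((memy hxy hyz).mpr rfl)
    rw [this]
    exact mem_Phi.mpr ⟨i, j, rfl⟩

end Phi

lemma card_Lt {t : Finset (X m)} (ht3 : t.card = 3) :
    Nat.card {D : Finset (Finset (P m)) // LtProp t D} = 12 := by
  obtain ⟨x, y, z, hxy, hxz, hyz, rfl⟩ := Finset.card_eq_three.mp ht3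
  rw [← card_LatinFun]
  symm
  apply Nat.card_eq_of_bijective
    (fun f => (⟨Phi x y z f, Phi_LtProp hxy hxz hyz f⟩ :
      {D : Finset (Finset (P m)) // LtProp ({x,y,z} : Finset (X m)) D}))
  constructor
  · intro f g h
    exact Phi_inj hxy hxz hyz (congrArg Subtype.val h)
  · rintro ⟨D, hD⟩
    obtain ⟨f, hf⟩ := Phi_surj hxy hxz hyz hD
    exact ⟨f, Subtype.ext hf⟩

lemma count_good (m : ℕ) :
    Nat.card {B : Finset (Finset (P m)) // good B} = 12 ^ (T m).card := by
  rw [Nat.card_congr (mainEquiv m), Nat.card_pi]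
  have h : ∀ t : {t // t ∈ T m}, Nat.card {D : Finset (Finset (P m)) // LtProp t.1 D} = 12 :=
    fun t => card_Lt (mem_T.mp t.2).1
  calc ∏ t : {t // t ∈ T m}, Nat.card {D : Finset (Finset (P m)) // LtProp t.1 D}
      = ∏ _t : {t // t ∈ T m}, 12 := Finset.prod_congr rfl (fun t _ => h t)
    _ = 12 ^ (T m).card := by rw [Finset.prod_const, Finset.card_univ, Fintype.card_coe]

lemma card_univ_X (m : ℕ) : Fintype.card (X m) = 3 ^ m := by
  rw [Fintype.card_fun]
  simp

lemma card_T (m : ℕ) : (T m).card * 6 = 3 ^ m * 3 ^ m - 3 ^ m := by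
  classical
  have key : ∀ p ∈ (Finset.univ : Finset (X m × X m)).filter (fun p => p.1 ≠ p.2),
      ({p.1, p.2, -p.1 - p.2} : Finset (X m)) ∈ T m := by
    intro p hp
    exact triple_mem_T (Finset.mem_filter.mp hp).2
  have h1 := Finset.card_eq_sum_card_fiberwise key
  have h2 : ∀ t ∈ T m, (((Finset.univ : Finset (X m × X m)).filter (fun p => p.1 ≠ p.2)).filter
      (fun p : X m × X m => ({p.1, p.2, -p.1 - p.2} : Finset (X m)) = t)).card = 6 := by
    intro t ht
    have he : (((Finset.univ : Finset (X m × X m)).filter (fun p => p.1 ≠ p.2)).filter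
        (fun p : X m × X m => ({p.1, p.2, -p.1 - p.2} : Finset (X m)) = t)) = t.offDiag := by
      ext p
      rw [Finset.mem_filter, Finset.mem_filter, Finset.mem_offDiag]
      constructor
      · rintro ⟨⟨-, hne⟩, he⟩
        refine ⟨he ▸ Finset.mem_insert_self _ _,
          he ▸ Finset.mem_insert.mpr (Or.inr (Finset.mem_insert_self _ _)), hne⟩
      · rintro ⟨hp1, hp2, hne⟩
        exact ⟨⟨Finset.mem_univ _, hne⟩, (triple_det ht hp1 hp2 hne).symm⟩
    rw [he, Finset.offDiag_card, (mem_T.mp ht).1]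
  rw [Finset.sum_congr rfl h2, Finset.sum_const, smul_eq_mul] at h1
  have h3 : ((Finset.univ : Finset (X m × X m)).filter (fun p => p.1 ≠ p.2)).card
      = 3 ^ m * 3 ^ m - 3 ^ m := by
    have : ((Finset.univ : Finset (X m × X m)).filter (fun p => p.1 ≠ p.2))
        = (Finset.univ : Finset (X m)).offDiag := by
      ext p
      rw [Finset.mem_filter, Finset.mem_offDiag]
      exact ⟨fun h => ⟨Finset.mem_univ _, Finset.mem_univ _, h.2⟩, fun h => ⟨Finset.mem_univ _, h.2.2⟩⟩
    rw [this, Finset.offDiag_card, Finset.card_univ, card_univ_X]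
  rw [h3] at h1
  omega

end Stmt18

theorem stmt18 (n : ℕ) (hn : 2 ≤ n) :
    Nat.card {B : Finset (Finset (terIdx n 1)) //
        isSTS B ∧ ∀ b ∈ B, ∑ j ∈ b, j.1 = 0} =
      12 ^ (3 ^ (n - 2) * (3 ^ (n - 1) - 1) / 2) := by
  have main : Nat.card {B : Finset (Finset (Stmt18.P (n - 1))) // Stmt18.good B} =
      12 ^ (Stmt18.T (n - 1)).card := Stmt18.count_good (n - 1)
  rw [show ({B : Finset (Finset (terIdx n 1)) //
        isSTS B ∧ ∀ b ∈ B, ∑ j ∈ b, j.1 = 0} : Type) =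
      {B : Finset (Finset (Stmt18.P (n - 1))) // Stmt18.good B} from rfl, main]
  congr 1
  -- exponent arithmetic
  have hcard := Stmt18.card_T (n - 1)
  set c := (Stmt18.T (n - 1)).card with hc
  set p := (3 : ℕ) ^ (n - 2) with hp
  have h3 : (3 : ℕ) ^ (n - 1) = 3 * p := by
    rw [hp, show n - 1 = (n - 2) + 1 by omega, pow_succ]
    ring
  rw [h3] at hcard ⊢
  have hp1 : 1 ≤ p := Nat.one_le_iff_ne_zero.mpr (pow_ne_zero _ (by norm_num))
  have hs : (3 * p - 1) + 1 = 3 * p := by omega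
  have hb : p * (3 * p) = p * (3 * p - 1) + p := by
    conv_lhs => rw [← hs]
    rw [Nat.mul_succ]
  have ha : 3 * p * (3 * p) = 3 * (p * (3 * p)) := by ring
  rw [ha] at hcard
  omega
end

section
/- The number of distinct sub-Steiner-triple-systems isomorphic to AG_1(n,3) (i.e., of 3-rank exactly 3^n - n - 1) contained in the ternary code with parity check matrix H_{n,1} equals 6^{3^{n-1}} / (2·3^n). -/
namespace S19

lemma three_add {M : Type*} [AddCommGroup M] [Module (ZMod 3) M] (x : M) :
    x + x + x = 0 := by
  have h : ((3 : ℕ) : ZMod 3) • x = (3 : ℕ) • x := Nat.cast_smul_eq_nsmul _ _ _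
  have h3 : ((3 : ℕ) : ZMod 3) = 0 := by decide
  rw [h3, zero_smul] at h
  have h2 : (3 : ℕ) • x = x + x + x := by
    rw [show (3:ℕ) = 2 + 1 from rfl, add_nsmul, two_nsmul, one_nsmul]
  rw [h2] at h; exact h.symm

lemma neg_two_eq {M : Type*} [AddCommGroup M] [Module (ZMod 3) M] (x : M) :
    -x - x = x := by
  have h := three_add x
  have : -x - x - x = -(x + x + x) := by abel
  rw [h, neg_zero] at this
  exact sub_eq_zero.mp this

/-- Core lemma: a function killing all sum-zero triples is "affine". -/
lemma affine_core {M N : Type*} [AddCommGroup M] [Module (ZMod 3) M]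
    [AddCommGroup N] [Module (ZMod 3) N]
    (q : M → N) (h : ∀ x y : M, x ≠ y → q x + q y + q (-x - y) = 0) :
    ∀ x y : M, q (x + y) = q x + q y - q 0 := by
  have h' : ∀ x y : M, q x + q y + q (-x - y) = 0 := by
    intro x y
    by_cases hxy : x = y
    · subst hxy
      rw [neg_two_eq x]
      exact three_add (q x)
    · exact h x y hxy
  have hneg : ∀ x : M, q (-x) = -q x - q 0 := by
    intro x
    have e := h' x 0
    rw [sub_zero] at e
    have e2 : q (-x) - (-q x - q 0) = 0 := by
      rw [show q (-x) - (-q x - q 0) = q x + q 0 + q (-x) by abel, e]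
    exact sub_eq_zero.mp e2
  intro x y
  have e1 := h' x y
  have e2 := hneg (x + y)
  rw [show -(x+y) = -x - y by abel] at e2
  rw [e2] at e1
  have e3 : q x + q y - q 0 - q (x + y) = 0 := by rw [← e1]; abel
  exact (sub_eq_zero.mp e3).symm

/-- The additive-hom version. -/
noncomputable def affineHom {M N : Type*} [AddCommGroup M] [Module (ZMod 3) M]
    [AddCommGroup N] [Module (ZMod 3) N]
    (q : M → N) (h : ∀ x y : M, x ≠ y → q x + q y + q (-x - y) = 0) : M →+ N :=
  AddMonoidHom.mk' (fun x => q x - q 0) (by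
    intro a b
    show q (a + b) - q 0 = (q a - q 0) + (q b - q 0)
    rw [affine_core q h a b]; abel)

lemma affineHom_apply {M N : Type*} [AddCommGroup M] [Module (ZMod 3) M]
    [AddCommGroup N] [Module (ZMod 3) N]
    (q : M → N) (h) (x : M) : affineHom q h x = q x - q 0 := rfl

lemma addhom_zmod_smul {M : Type*} [AddCommGroup M] [Module (ZMod 3) M]
    (p : M →+ ZMod 3) (c : ZMod 3) (x : M) : p (c • x) = c * p x := by
  have hc : c • x = c.val • x := by
    rw [← Nat.cast_smul_eq_nsmul (ZMod 3), ZMod.natCast_val, ZMod.cast_id]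
  rw [hc, AddMonoidHom.map_nsmul, nsmul_eq_mul]
  congr 1
  rw [ZMod.natCast_val, ZMod.cast_id]

lemma addhom_zmod_smul' {M N : Type*} [AddCommGroup M] [Module (ZMod 3) M]
    [AddCommGroup N] [Module (ZMod 3) N]
    (p : M →+ N) (c : ZMod 3) (x : M) : p (c • x) = c • p x := by
  have hc : c • x = c.val • x := by
    rw [← Nat.cast_smul_eq_nsmul (ZMod 3), ZMod.natCast_val, ZMod.cast_id]
  have hc2 : c • p x = c.val • p x := by
    rw [← Nat.cast_smul_eq_nsmul (ZMod 3), ZMod.natCast_val, ZMod.cast_id]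
  rw [hc, hc2, AddMonoidHom.map_nsmul]

/-- third point of a 3-element block containing two given distinct points -/
lemma exists_third {γ : Type*} [DecidableEq γ] {b : Finset γ} {x y : γ}
    (h3 : b.card = 3) (hx : x ∈ b) (hy : y ∈ b) (hxy : x ≠ y) :
    ∃ z, z ≠ x ∧ z ≠ y ∧ b = {x, y, z} := by
  have hsub : ({x, y} : Finset γ) ⊆ b := by
    intro a ha; simp at ha; rcases ha with h | h <;> subst h <;> assumption
  have hc2 : ({x, y} : Finset γ).card = 2 := by
    rw [Finset.card_insert_of_notMem (by simpa using hxy), Finset.card_singleton]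
  have hcd : (b \ {x, y}).card = 1 := by
    rw [Finset.card_sdiff_of_subset hsub, h3, hc2]
  obtain ⟨z, hz⟩ := Finset.card_eq_one.mp hcd
  have hzmem : z ∈ b \ ({x, y} : Finset γ) := by rw [hz]; simp
  rw [Finset.mem_sdiff, Finset.mem_insert, Finset.mem_singleton] at hzmem
  push_neg at hzmem
  refine ⟨z, hzmem.2.1, hzmem.2.2, ?_⟩
  have := Finset.union_sdiff_of_subset hsub
  rw [hz] at this
  rw [← this]
  ext a; simp [or_assoc]

lemma sum_triple {γ M : Type*} [DecidableEq γ] [AddCommMonoid M] {x y z : γ}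
    (hxy : x ≠ y) (hxz : x ≠ z) (hyz : y ≠ z) (f : γ → M) :
    ∑ j ∈ ({x, y, z} : Finset γ), f j = f x + f y + f z := by
  rw [Finset.sum_insert (by simp [hxy, hxz]), Finset.sum_insert (by simp [hyz]),
    Finset.sum_singleton, add_assoc]


section Dual
variable {α : Type*} [Fintype α] [DecidableEq α]

/-- dot product bilinear form on α → ZMod 3 -/
noncomputable def dotF (α : Type*) [Fintype α] :
    LinearMap.BilinForm (ZMod 3) (α → ZMod 3) :=
  LinearMap.mk₂ (ZMod 3) (fun f g => ∑ j, f j * g j)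
    (fun f f' g => by simp [add_mul, Finset.sum_add_distrib])
    (fun c f g => by simp [Finset.mul_sum, mul_assoc])
    (fun f g g' => by simp [mul_add, Finset.sum_add_distrib])
    (fun c f g => by
      simp [Finset.mul_sum]
      congr 1; ext j; ring)

omit [DecidableEq α] in
lemma dotF_apply (f g : α → ZMod 3) : dotF α f g = ∑ j, f j * g j := rfl

omit [DecidableEq α] in
lemma dotF_symm : (dotF α).IsSymm := by
  refine ⟨fun f g => ?_⟩
  simp only [dotF_apply, RingHom.id_apply]
  congr 1; ext j; ring

lemma dotF_single (f : α → ZMod 3) (j : α) : dotF α f (Pi.single j 1) = f j := by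
  rw [dotF_apply]
  rw [Finset.sum_eq_single j]
  · simp
  · intro i _ hij; simp [Pi.single_apply, hij]
  · intro hj; exact absurd (Finset.mem_univ j) hj

lemma dotF_nondeg : (dotF α).Nondegenerate := by
  have hL : LinearMap.SeparatingLeft (dotF α) := by
    intro f hf
    funext j
    have := hf (Pi.single j 1)
    rw [dotF_single] at this
    simpa using this
  exact ⟨hL, fun g hg => hL g fun f => by rw [dotF_symm.eq]; exact hg f⟩

/-- The "dual" of a family of blocks: functions summing to zero on every block. -/
def dualSet (B : Finset (Finset α)) : Submodule (ZMod 3) (α → ZMod 3) where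
  carrier := {f | ∀ b ∈ B, ∑ j ∈ b, f j = 0}
  add_mem' := by
    intro f g hf hg b hb
    simp only [Pi.add_apply, Finset.sum_add_distrib, hf b hb, hg b hb, add_zero]
  zero_mem' := by intro b hb; simp
  smul_mem' := by
    intro c f hf b hb
    simp only [Pi.smul_apply, smul_eq_mul, ← Finset.mul_sum, hf b hb, mul_zero]

omit [Fintype α] [DecidableEq α] in
lemma mem_dualSet {B : Finset (Finset α)} {f : α → ZMod 3} :
    f ∈ dualSet B ↔ ∀ b ∈ B, ∑ j ∈ b, f j = 0 := Iff.rfl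

lemma dotF_indicator (b : Finset α) (f : α → ZMod 3) :
    dotF α (fun x => if x ∈ b then (1 : ZMod 3) else 0) f = ∑ j ∈ b, f j := by
  rw [dotF_apply]
  simp only [ite_mul, one_mul, zero_mul]
  rw [Finset.sum_ite_mem, Finset.univ_inter]

lemma dualSet_eq_orthogonal (B : Finset (Finset α)) :
    dualSet B = (dotF α).orthogonal (stsCode 3 B) := by
  ext f
  rw [mem_dualSet, LinearMap.BilinForm.mem_orthogonal_iff]
  constructor
  · intro hf u hu
    have hker : stsCode 3 B ≤ LinearMap.ker ((dotF α).flip f) := by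
      rw [stsCode, Submodule.span_le]
      rintro v ⟨b, hb, rfl⟩
      simp only [SetLike.mem_coe, LinearMap.mem_ker]
      show dotF α _ f = 0
      rw [dotF_indicator]
      exact hf b hb
    have := hker hu
    rw [LinearMap.mem_ker] at this
    exact this
  · intro hf b hb
    have hu : (fun x => if x ∈ b then (1 : ZMod 3) else 0) ∈ stsCode 3 B :=
      Submodule.subset_span ⟨b, hb, rfl⟩
    have := hf _ hu
    rwa [dotF_indicator] at this

lemma finrank_code_add_dual (B : Finset (Finset α)) :
    Module.finrank (ZMod 3) (stsCode 3 B) + Module.finrank (ZMod 3) (dualSet B) =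
      Fintype.card α := by
  have horth : (dotF α).orthogonal ⊤ = ⊥ := by
    rw [Submodule.eq_bot_iff]
    intro f hf
    apply dotF_nondeg.1
    intro g
    have := hf g Submodule.mem_top
    rw [← dotF_symm.eq g f]
    simpa using this
  have h := LinearMap.BilinForm.finrank_add_finrank_orthogonal
    (B := dotF α) (dotF_symm.isRefl) (stsCode 3 B)
  rw [horth, inf_bot_eq, finrank_bot, add_zero, ← dualSet_eq_orthogonal] at h
  rw [h, Module.finrank_pi]

end Dual

section Standard
variable {m : ℕ}

abbrev Base (m : ℕ) := Fin m → ZMod 3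
abbrev Vc (m : ℕ) := Base m × ZMod 3
abbrev Pt (m : ℕ) := Base m × Fin 3

/-- The standard AG(m+1,3) design: 3-subsets of GF(3)^{m+1} with zero sum. -/
def B0 (m : ℕ) : Finset (Finset (Vc m)) :=
  Finset.univ.filter (fun s => s.card = 3 ∧ ∑ x ∈ s, x = 0)

lemma mem_B0 {s : Finset (Vc m)} : s ∈ B0 m ↔ s.card = 3 ∧ ∑ x ∈ s, x = 0 := by
  simp [B0]

lemma triple_mem_B0 {x y : Vc m} (hxy : x ≠ y) :
    ({x, y, -x - y} : Finset (Vc m)) ∈ B0 m ∧ -x - y ≠ x ∧ -x - y ≠ y := by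
  have hzx : -x - y ≠ x := by
    intro h
    exact hxy (by linear_combination h + three_add x)
  have hzy : -x - y ≠ y := by
    intro h
    exact hxy (by linear_combination -h - three_add y)
  have hcard : ({x, y, -x - y} : Finset (Vc m)).card = 3 := by
    rw [Finset.card_insert_of_notMem (by simp [hxy, Ne.symm hzx]),
      Finset.card_insert_of_notMem (by simp [Ne.symm hzy]), Finset.card_singleton]
  refine ⟨mem_B0.mpr ⟨hcard, ?_⟩, hzx, hzy⟩
  have := sum_triple hxy (Ne.symm hzx) (Ne.symm hzy) (fun a : Vc m => a)
  rw [this]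
  abel

lemma isSTS_B0 : isSTS (B0 m) := by
  constructor
  · intro b hb; exact (mem_B0.mp hb).1
  · intro x y hxy
    obtain ⟨hmem, hzx, hzy⟩ := triple_mem_B0 hxy
    refine ⟨{x, y, -x - y}, ⟨hmem, by simp, by simp⟩, ?_⟩
    rintro b ⟨hb, hxb, hyb⟩
    obtain ⟨hc, hs⟩ := mem_B0.mp hb
    obtain ⟨z, hzx', hzy', rfl⟩ := exists_third hc hxb hyb hxy
    rw [sum_triple hxy (Ne.symm hzx') (Ne.symm hzy') (fun a : Vc m => a)] at hs
    have hz : z = -x - y := by linear_combination hs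
    rw [hz]

/-- affine functions on Vc m, as the range of an injective linear map -/
noncomputable def thetaV (m : ℕ) :
    (ZMod 3 × Module.Dual (ZMod 3) (Vc m)) →ₗ[ZMod 3] (Vc m → ZMod 3) where
  toFun cl := fun x => cl.1 + cl.2 x
  map_add' cl cl' := by funext x; simp; ring
  map_smul' c cl := by funext x; simp [smul_eq_mul]; ring

lemma thetaV_inj : Function.Injective (thetaV m) := by
  intro ⟨c, l⟩ ⟨c', l'⟩ h
  simp only [thetaV, LinearMap.coe_mk, AddHom.coe_mk] at h
  have h0 := congrFun h 0
  simp only [map_zero, add_zero] at h0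
  subst h0
  have : l = l' := LinearMap.ext fun x => by simpa using congrFun h x
  rw [this]

lemma dualSet_B0 : dualSet (B0 m) = LinearMap.range (thetaV m) := by
  apply le_antisymm
  · intro f hf
    have hblock : ∀ x y : Vc m, x ≠ y → f x + f y + f (-x - y) = 0 := by
      intro x y hxy
      obtain ⟨hmem, hzx, hzy⟩ := triple_mem_B0 hxy
      have := hf _ hmem
      rwa [sum_triple hxy (Ne.symm hzx) (Ne.symm hzy) f] at this
    set p := affineHom f hblock with hp
    have hl : ∀ (c : ZMod 3) (x : Vc m), p (c • x) = c • p x := fun c x => by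
      rw [addhom_zmod_smul p c x, smul_eq_mul]
    refine ⟨(f 0, { toFun := p, map_add' := p.map_add, map_smul' := hl }), ?_⟩
    funext x
    show f 0 + p x = f x
    rw [affineHom_apply]
    abel
  · rintro f ⟨⟨c, l⟩, rfl⟩
    intro b hb
    obtain ⟨hc, hs⟩ := mem_B0.mp hb
    show ∑ x ∈ b, (c + l x) = 0
    rw [Finset.sum_add_distrib, ← map_sum, hs, map_zero, add_zero,
      Finset.sum_const, hc]
    rw [nsmul_eq_mul]
    have h3 : ((3 : ℕ) : ZMod 3) = 0 := by decide
    rw [h3, zero_mul]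

lemma finrank_dualSet_B0 : Module.finrank (ZMod 3) (dualSet (B0 m)) = m + 2 := by
  rw [dualSet_B0, LinearMap.finrank_range_of_inj thetaV_inj]
  rw [Module.finrank_prod, Module.finrank_self, Subspace.dual_finrank_eq,
    Module.finrank_prod, Module.finrank_pi, Module.finrank_self, Fintype.card_fin]
  ring

end Standard

section Designs
variable {m : ℕ}

abbrev Sig (m : ℕ) := Base m → (Fin 3 ≃ ZMod 3)

def phi (σ : Sig m) : Pt m ≃ Vc m := Equiv.prodShear (Equiv.refl (Base m)) σ

lemma phi_apply (σ : Sig m) (p : Pt m) : phi σ p = (p.1, σ p.1 p.2) := rfl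

lemma phi_fst (σ : Sig m) (p : Pt m) : (phi σ p).1 = p.1 := rfl

lemma phi_symm_fst (σ : Sig m) (x : Vc m) : ((phi σ).symm x).1 = x.1 := by
  rw [← phi_fst σ ((phi σ).symm x), Equiv.apply_symm_apply]

lemma map_symm_map {α β : Type*} [DecidableEq α] [DecidableEq β] (e : α ≃ β) (b : Finset α) :
    (b.map e.toEmbedding).map e.symm.toEmbedding = b := by
  rw [Finset.map_map]; ext a; simp

lemma map_map_symm {α β : Type*} [DecidableEq α] [DecidableEq β] (e : α ≃ β) (s : Finset β) :
    (s.map e.symm.toEmbedding).map e.toEmbedding = s := by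
  rw [Finset.map_map]; ext a; simp

/-- the design obtained by pulling back the standard design along `phi σ` -/
def Dsg (σ : Sig m) : Finset (Finset (Pt m)) :=
  (B0 m).image (fun s => s.map (phi σ).symm.toEmbedding)

lemma mem_Dsg {σ : Sig m} {b : Finset (Pt m)} :
    b ∈ Dsg σ ↔ b.map (phi σ).toEmbedding ∈ B0 m := by
  rw [Dsg, Finset.mem_image]
  constructor
  · rintro ⟨s, hs, rfl⟩
    rwa [map_map_symm]
  · intro h
    exact ⟨_, h, by rw [map_symm_map]⟩

lemma isSTS_map {α β : Type*} [DecidableEq α] [DecidableEq β] (e : α ≃ β)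
    {B : Finset (Finset β)} (h : isSTS B) :
    isSTS (B.image (fun s => s.map e.symm.toEmbedding)) := by
  constructor
  · intro b hb
    rw [Finset.mem_image] at hb
    obtain ⟨s, hs, rfl⟩ := hb
    rw [Finset.card_map]
    exact h.1 s hs
  · intro x y hxy
    have hexy : e x ≠ e y := fun hc => hxy (e.injective hc)
    obtain ⟨s, ⟨hs, hxs, hys⟩, huniq⟩ := h.2 (e x) (e y) hexy
    refine ⟨s.map e.symm.toEmbedding, ⟨Finset.mem_image_of_mem _ hs, ?_, ?_⟩, ?_⟩
    · rw [Finset.mem_map]; exact ⟨e x, hxs, e.symm_apply_apply x⟩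
    · rw [Finset.mem_map]; exact ⟨e y, hys, e.symm_apply_apply y⟩
    · rintro b ⟨hb, hxb, hyb⟩
      rw [Finset.mem_image] at hb
      obtain ⟨s', hs', rfl⟩ := hb
      have hxs' : e x ∈ s' := by
        rw [Finset.mem_map] at hxb
        obtain ⟨z, hz, hze⟩ := hxb
        have : z = e x := by rw [← hze]; simp
        rwa [← this]
      have hys' : e y ∈ s' := by
        rw [Finset.mem_map] at hyb
        obtain ⟨z, hz, hze⟩ := hyb
        have : z = e y := by rw [← hze]; simp
        rwa [← this]
      rw [huniq s' ⟨hs', hxs', hys'⟩]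

lemma isSTS_Dsg (σ : Sig m) : isSTS (Dsg σ) := isSTS_map (phi σ) isSTS_B0

lemma sum_fst_Dsg (σ : Sig m) : ∀ b ∈ Dsg σ, ∑ j ∈ b, j.1 = 0 := by
  intro b hb
  rw [Dsg, Finset.mem_image] at hb
  obtain ⟨s, hs, rfl⟩ := hb
  rw [Finset.sum_map]
  have : ∀ x : Vc m, ((phi σ).symm.toEmbedding x).1 = x.1 := fun x => phi_symm_fst σ x
  rw [Finset.sum_congr rfl (fun x _ => this x), ← Prod.fst_sum, (mem_B0.mp hs).2]
  rfl

lemma dualSet_Dsg (σ : Sig m) :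
    dualSet (Dsg σ) =
      (dualSet (B0 m)).map
        (LinearEquiv.funCongrLeft (ZMod 3) (ZMod 3) (phi σ) : (Vc m → ZMod 3) →ₗ[ZMod 3] (Pt m → ZMod 3)) := by
  apply le_antisymm
  · intro g hg
    rw [Submodule.mem_map]
    refine ⟨g ∘ (phi σ).symm, ?_, ?_⟩
    · intro s hs
      have hmem : s.map (phi σ).symm.toEmbedding ∈ Dsg σ := Finset.mem_image_of_mem _ hs
      have := hg _ hmem
      rwa [Finset.sum_map] at this
    · funext p
      simp [LinearEquiv.funCongrLeft]
  · rintro g hg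
    rw [Submodule.mem_map] at hg
    obtain ⟨f, hf, rfl⟩ := hg
    intro b hb
    rw [Dsg, Finset.mem_image] at hb
    obtain ⟨s, hs, rfl⟩ := hb
    rw [Finset.sum_map]
    refine (Finset.sum_congr rfl fun x _ => ?_).trans (hf s hs)
    show f ((phi σ) ((phi σ).symm x)) = f x
    rw [Equiv.apply_symm_apply]

lemma card_Pt : Fintype.card (Pt m) = 3 ^ (m + 1) := by
  rw [Fintype.card_prod, Fintype.card_fun, Fintype.card_fin, ZMod.card, Fintype.card_fin,
    pow_succ]

lemma finrank_code_Dsg (σ : Sig m) :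
    Module.finrank (ZMod 3) (stsCode 3 (Dsg σ)) = 3 ^ (m + 1) - (m + 2) := by
  have h := finrank_code_add_dual (Dsg σ)
  rw [card_Pt, dualSet_Dsg σ, LinearEquiv.finrank_map_eq, finrank_dualSet_B0] at h
  omega

end Designs

section Backward
variable {m : ℕ}

/-- functions on Pt m that are affine in the first coordinate -/
noncomputable def thetaP (m : ℕ) :
    (ZMod 3 × Module.Dual (ZMod 3) (Base m)) →ₗ[ZMod 3] (Pt m → ZMod 3) where
  toFun cl := fun p => cl.1 + cl.2 p.1
  map_add' cl cl' := by funext x; simp; ring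
  map_smul' c cl := by funext x; simp [smul_eq_mul]; ring

lemma fin3_eq_two : ∀ z : Fin 3, z ≠ 0 → z ≠ 1 → z = 2 := by decide

lemma fiber_const_aux : ∀ x : Fin 3 → ZMod 3, x 0 + x 1 + x 2 = 0 →
    (∃ i j, i ≠ j ∧ x i = x j) → ∀ i, x i = x 0 := by decide

lemma u_ne {v w : Base m} (hvw : v ≠ w) : -v - w ≠ v ∧ -v - w ≠ w := by
  constructor
  · intro h
    exact hvw (by linear_combination h + three_add v)
  · intro h
    exact hvw (by linear_combination -h - three_add w)

variable {B : Finset (Finset (Pt m))}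

/-- every fiber is a block -/
lemma fiber_block (hSTS : isSTS B) (hsum : ∀ b ∈ B, ∑ j ∈ b, j.1 = 0) (v : Base m) :
    ({(v, 0), (v, 1), (v, 2)} : Finset (Pt m)) ∈ B := by
  have h01 : ((v, 0) : Pt m) ≠ (v, 1) := by simp
  obtain ⟨b, ⟨hb, h0b, h1b⟩, _⟩ := hSTS.2 (v, 0) (v, 1) h01
  obtain ⟨z, hz0, hz1, rfl⟩ := exists_third (hSTS.1 b hb) h0b h1b h01
  have hsumb := hsum _ hb
  rw [sum_triple h01 (Ne.symm hz0) (Ne.symm hz1) (fun j : Pt m => j.1)] at hsumb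
  have hzv : z.1 = v := by linear_combination hsumb - three_add v
  obtain ⟨z1, z2⟩ := z
  simp only at hzv
  subst hzv
  have h0 : z2 ≠ 0 := fun h => hz0 (by rw [h])
  have h1 : z2 ≠ 1 := fun h => hz1 (by rw [h])
  rw [fin3_eq_two z2 h0 h1] at hb
  exact hb

/-- cross blocks: third point lies in the fiber of `-v-w` -/
lemma cross_block (hSTS : isSTS B) (hsum : ∀ b ∈ B, ∑ j ∈ b, j.1 = 0)
    {v w : Base m} (hvw : v ≠ w) (i j : Fin 3) :
    ∃ k : Fin 3, ({(v, i), (w, j), (-v - w, k)} : Finset (Pt m)) ∈ B := by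
  have hne : ((v, i) : Pt m) ≠ (w, j) := by
    intro h; exact hvw (congrArg Prod.fst h)
  obtain ⟨b, ⟨hb, h0b, h1b⟩, _⟩ := hSTS.2 (v, i) (w, j) hne
  obtain ⟨z, hz0, hz1, rfl⟩ := exists_third (hSTS.1 b hb) h0b h1b hne
  have hsumb := hsum _ hb
  rw [sum_triple hne (Ne.symm hz0) (Ne.symm hz1) (fun j : Pt m => j.1)] at hsumb
  have hzv : z.1 = -v - w := by linear_combination hsumb
  obtain ⟨z1, z2⟩ := z
  simp only at hzv
  subst hzv
  exact ⟨z2, hb⟩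

/-- in a cross configuration the third coordinate map is injective -/
lemma cross_inj (hSTS : isSTS B) {v w : Base m} (hvw : v ≠ w)
    {j : Fin 3} {κ : Fin 3 → Fin 3}
    (hκ : ∀ i, ({(v, i), (w, j), (-v - w, κ i)} : Finset (Pt m)) ∈ B) :
    Function.Injective κ := by
  have hu := u_ne hvw
  intro i i' hii
  by_contra hne
  have hwne : ((w, j) : Pt m) ≠ (-v - w, κ i) := by
    intro h; exact hu.2 (congrArg Prod.fst h).symm
  obtain ⟨b, hb, huniq⟩ := hSTS.2 (w, j) (-v - w, κ i) hwne
  have hbi : ({(v, i), (w, j), (-v - w, κ i)} : Finset (Pt m)) = b :=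
    (huniq _ ⟨hκ i, by simp, by simp⟩).symm ▸ rfl
  have h1 := huniq _ ⟨hκ i, by simp, by simp⟩
  have h2 := huniq _ ⟨hκ i', by rw [hii] at *; simp, by rw [← hii]; simp⟩
  rw [← h2] at h1
  have : ((v, i) : Pt m) ∈ ({(v, i'), (w, j), (-v - w, κ i')} : Finset (Pt m)) := by
    rw [← h1]; simp
  simp only [Finset.mem_insert, Finset.mem_singleton, Prod.mk.injEq] at this
  rcases this with ⟨_, h⟩ | ⟨h, _⟩ | ⟨h, _⟩
  · exact hne (by rw [h])
  · exact hvw h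
  · exact hu.1 h.symm

lemma fiber_sum (hSTS : isSTS B) (hsum : ∀ b ∈ B, ∑ j ∈ b, j.1 = 0)
    {f : Pt m → ZMod 3} (hf : f ∈ dualSet B) (v : Base m) :
    f (v, 0) + f (v, 1) + f (v, 2) = 0 := by
  have hb := fiber_block hSTS hsum v
  have h01 : ((v, 0) : Pt m) ≠ (v, 1) := by simp
  have h02 : ((v, 0) : Pt m) ≠ (v, 2) := by simp
  have h12 : ((v, 1) : Pt m) ≠ (v, 2) := by simp
  have := hf _ hb
  rwa [sum_triple h01 h02 h12 f] at this

lemma sts_eq_of_subset {α : Type*} [DecidableEq α] {B B' : Finset (Finset α)}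
    (h : isSTS B) (h' : isSTS B') (hsub : B ⊆ B') : B = B' := by
  apply Finset.Subset.antisymm hsub
  intro b' hb'
  have hc := h'.1 b' hb'
  obtain ⟨x, hx, y, hy, hxy⟩ := Finset.one_lt_card.mp (by omega : 1 < b'.card)
  obtain ⟨b, ⟨hbB, hxb, hyb⟩, _⟩ := h.2 x y hxy
  obtain ⟨c, hcP, huniq⟩ := h'.2 x y hxy
  have e1 := huniq b' ⟨hb', hx, hy⟩
  have e2 := huniq b ⟨hsub hbB, hxb, hyb⟩
  rw [e1, ← e2]
  exact hbB

lemma backward (hm : 1 ≤ m) (hSTS : isSTS B) (hsum : ∀ b ∈ B, ∑ j ∈ b, j.1 = 0)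
    (hrank : Module.finrank (ZMod 3) (stsCode 3 B) = 3 ^ (m + 1) - (m + 2)) :
    ∃ σ : Sig m, B = Dsg σ := by
  classical
  have hcard := finrank_code_add_dual B
  rw [card_Pt, hrank] at hcard
  have hpow : m + 2 ≤ 3 ^ (m + 1) := Nat.lt_pow_self (n := m + 1) (by norm_num)
  have hdual : Module.finrank (ZMod 3) (dualSet B) = m + 2 := by omega
  -- find an extra parity check f
  have hW : ¬ dualSet B ≤ LinearMap.range (thetaP m) := by
    intro hle
    have h1 := Submodule.finrank_mono (s := dualSet B) hle
    have h2 : Module.finrank (ZMod 3) (LinearMap.range (thetaP m)) ≤ m + 1 := by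
      have h3 := LinearMap.finrank_range_le (thetaP m)
      rw [Module.finrank_prod, Module.finrank_self, Subspace.dual_finrank_eq,
        Module.finrank_pi, Fintype.card_fin] at h3
      omega
    omega
  rw [SetLike.not_le_iff_exists] at hW
  obtain ⟨f, hfD, hfW⟩ := hW
  -- f is injective on every fiber
  have hfinj : ∀ v : Base m, Function.Injective (fun i : Fin 3 => f (v, i)) := by
    by_contra hni
    push_neg at hni
    obtain ⟨v0, hv0⟩ := hni
    have hconst0 : ∀ i, f (v0, i) = f (v0, 0) := by
      apply fiber_const_aux (fun i => f (v0, i)) (fiber_sum hSTS hsum hfD v0)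
      rw [Function.not_injective_iff] at hv0
      obtain ⟨i, j, hij, hne⟩ := hv0
      exact ⟨i, j, hne, hij⟩
    have hconstAll : ∀ p : Pt m, f p = f (p.1, 0) := by
      rintro ⟨u, i⟩
      by_cases huv : u = v0
      · subst huv; exact hconst0 i
      · set w := -v0 - u with hw
        have hwv : v0 ≠ w := by
          intro h
          exact huv (by linear_combination h - three_add v0)
        have huw : -v0 - w = u := by rw [hw]; ring
        have hcb : ∀ i' : Fin 3,
            ∃ k : Fin 3, ({(v0, i'), (w, 0), (-v0 - w, k)} : Finset (Pt m)) ∈ B :=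
          fun i' => cross_block hSTS hsum hwv i' 0
        choose κ hκ using hcb
        have hκinj : Function.Injective κ := cross_inj hSTS hwv hκ
        have hκsurj : Function.Surjective κ := Finite.surjective_of_injective hκinj
        obtain ⟨i', hi'⟩ := hκsurj i
        -- sum over the cross block
        have hne1 : ((v0, i') : Pt m) ≠ (w, 0) := fun h => hwv (congrArg Prod.fst h)
        have hu := u_ne hwv
        have hne2 : ((v0, i') : Pt m) ≠ (-v0 - w, κ i') := fun h => hu.1 (congrArg Prod.fst h).symm
        have hne3 : ((w, 0) : Pt m) ≠ (-v0 - w, κ i') := fun h => hu.2 (congrArg Prod.fst h).symm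
        have hsb := hfD _ (hκ i')
        rw [sum_triple hne1 hne2 hne3 f] at hsb
        -- also the block with i' replaced by 0
        obtain ⟨i'', hi''⟩ := hκsurj 0
        have hne1' : ((v0, i'') : Pt m) ≠ (w, 0) := fun h => hwv (congrArg Prod.fst h)
        have hne2' : ((v0, i'') : Pt m) ≠ (-v0 - w, κ i'') := fun h => hu.1 (congrArg Prod.fst h).symm
        have hne3' : ((w, 0) : Pt m) ≠ (-v0 - w, κ i'') := fun h => hu.2 (congrArg Prod.fst h).symm
        have hsb' := hfD _ (hκ i'')
        rw [sum_triple hne1' hne2' hne3' f] at hsb'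
        rw [hi'] at hsb
        rw [hi''] at hsb'
        rw [hconst0 i', hconst0 i''] at *
        -- hsb : f (v0,0) + f (w,0) + f (u, i) = 0  (after rw huw)
        rw [huw] at hsb hsb'
        show f (u, i) = f (u, 0)
        linear_combination hsb - hsb'
    -- f is affine in the first coordinate: contradiction with hfW
    set h : Base m → ZMod 3 := fun v => f (v, 0) with hh
    have hcross : ∀ v w : Base m, v ≠ w → h v + h w + h (-v - w) = 0 := by
      intro v w hvw
      obtain ⟨k, hk⟩ := cross_block hSTS hsum hvw 0 0
      have hu := u_ne hvw
      have hne1 : ((v, 0) : Pt m) ≠ (w, 0) := fun hx => hvw (congrArg Prod.fst hx)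
      have hne2 : ((v, 0) : Pt m) ≠ (-v - w, k) := fun hx => hu.1 (congrArg Prod.fst hx).symm
      have hne3 : ((w, 0) : Pt m) ≠ (-v - w, k) := fun hx => hu.2 (congrArg Prod.fst hx).symm
      have hsb := hfD _ hk
      rw [sum_triple hne1 hne2 hne3 f] at hsb
      rw [hconstAll (-v - w, k)] at hsb
      exact hsb
    set p := affineHom h hcross with hp
    have hl : ∀ (c : ZMod 3) (x : Base m), p (c • x) = c • p x := fun c x => by
      rw [addhom_zmod_smul p c x, smul_eq_mul]
    apply hfW
    refine ⟨(h 0, { toFun := p, map_add' := p.map_add, map_smul' := hl }), ?_⟩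
    funext q
    show h 0 + p q.1 = f q
    rw [affineHom_apply]
    have : f q = h q.1 := by rw [hh]; exact hconstAll q
    rw [this]
    abel
  -- build σ
  have hbij : ∀ v : Base m, Function.Bijective (fun i : Fin 3 => f (v, i)) := by
    intro v
    rw [Fintype.bijective_iff_injective_and_card]
    exact ⟨hfinj v, by rw [Fintype.card_fin, ZMod.card]⟩
  set σ : Sig m := fun v => Equiv.ofBijective _ (hbij v) with hσ
  refine ⟨σ, ?_⟩
  apply sts_eq_of_subset hSTS (isSTS_Dsg σ)
  intro b hb
  rw [mem_Dsg, mem_B0]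
  constructor
  · rw [Finset.card_map]; exact hSTS.1 b hb
  · rw [Finset.sum_map]
    have hptw : ∀ j : Pt m, ((phi σ).toEmbedding j : Vc m) = (j.1, f j) := by
      rintro ⟨v, i⟩; rfl
    rw [Finset.sum_congr rfl (fun j _ => hptw j)]
    apply Prod.ext
    · rw [Prod.fst_sum]
      simpa using hsum b hb
    · rw [Prod.snd_sum]
      simpa using hfD b hb

end Backward

section Count
variable {m : ℕ}

/-- the affine dot-product functional -/
def dotL (a : Fin m → ZMod 3) : Base m →ₗ[ZMod 3] ZMod 3 where
  toFun v := ∑ k, a k * v k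
  map_add' v w := by simp [mul_add, Finset.sum_add_distrib]
  map_smul' c v := by
    simp only [Pi.smul_apply, smul_eq_mul, RingHom.id_apply, Finset.mul_sum]
    congr 1; ext k; ring

lemma dotL_single (a : Fin m → ZMod 3) (k : Fin m) : dotL a (Pi.single k 1) = a k := by
  have h0 : dotL a (Pi.single k 1) = ∑ j, a j * (Pi.single k 1 : Base m) j := rfl
  rw [h0, Finset.sum_eq_single k]
  · simp
  · intro i _ hik; simp [Pi.single_apply, Ne.symm hik]
  · intro hk; exact absurd (Finset.mem_univ k) hk

abbrev Hty (m : ℕ) := (ZMod 3)ˣ × (Fin m → ZMod 3) × ZMod 3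

/-- fiberwise affine transformation of `Vc m` -/
def theta0 (ε : (ZMod 3)ˣ) (a : Fin m → ZMod 3) (c : ZMod 3) : Vc m ≃ Vc m :=
  Equiv.prodShear (Equiv.refl (Base m))
    (fun v => (Equiv.mulLeft₀ (ε : ZMod 3) ε.ne_zero).trans (Equiv.addRight (dotL a v + c)))

lemma theta0_apply (ε : (ZMod 3)ˣ) (a : Fin m → ZMod 3) (c : ZMod 3) (x : Vc m) :
    theta0 ε a c x = (x.1, (ε : ZMod 3) * x.2 + (dotL a x.1 + c)) := rfl

/-- the action of `Hty m` on labelings -/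
def act (h : Hty m) (σ : Sig m) : Sig m :=
  fun v => (σ v).trans
    ((Equiv.mulLeft₀ ((h.1 : ZMod 3)) h.1.ne_zero).trans (Equiv.addRight (dotL h.2.1 v + h.2.2)))

lemma act_apply (h : Hty m) (σ : Sig m) (v : Base m) (i : Fin 3) :
    act h σ v i = (h.1 : ZMod 3) * σ v i + (dotL h.2.1 v + h.2.2) := rfl

lemma phi_act (h : Hty m) (σ : Sig m) :
    phi (act h σ) = (phi σ).trans (theta0 h.1 h.2.1 h.2.2) := by
  apply Equiv.ext
  rintro ⟨v, i⟩
  rfl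

lemma map_theta0_mem_B0 {ε : (ZMod 3)ˣ} {a : Fin m → ZMod 3} {c : ZMod 3}
    {s : Finset (Vc m)} (hs : s ∈ B0 m) :
    s.map (theta0 ε a c).toEmbedding ∈ B0 m := by
  rw [mem_B0] at hs ⊢
  obtain ⟨hc3, hsum⟩ := hs
  have h1 : ∑ x ∈ s, x.1 = 0 := by rw [← Prod.fst_sum, hsum]; rfl
  have h2 : ∑ x ∈ s, x.2 = 0 := by rw [← Prod.snd_sum, hsum]; rfl
  refine ⟨by rw [Finset.card_map]; exact hc3, ?_⟩
  rw [Finset.sum_map]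
  apply Prod.ext
  · rw [Prod.fst_sum]
    exact h1
  · rw [Prod.snd_sum]
    have he : ∀ x ∈ s, ((theta0 ε a c).toEmbedding x).2
        = (ε : ZMod 3) * x.2 + (dotL a x.1 + c) := fun x _ => rfl
    rw [Finset.sum_congr rfl he, Finset.sum_add_distrib, ← Finset.mul_sum, h2, mul_zero,
      zero_add, Finset.sum_add_distrib, ← map_sum, h1, map_zero, zero_add,
      Finset.sum_const, hc3, nsmul_eq_mul]
    have h3 : ((3 : ℕ) : ZMod 3) = 0 := by decide
    rw [h3, zero_mul]
    rfl

lemma image_theta0_B0 (ε : (ZMod 3)ˣ) (a : Fin m → ZMod 3) (c : ZMod 3) :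
    (B0 m).image (fun s => s.map (theta0 ε a c).toEmbedding) = B0 m := by
  apply Finset.eq_of_subset_of_card_le
  · intro b hb
    rw [Finset.mem_image] at hb
    obtain ⟨s, hs, rfl⟩ := hb
    exact map_theta0_mem_B0 hs
  · rw [Finset.card_image_of_injective _ (Finset.map_injective _)]

lemma image_theta0_symm_B0 (ε : (ZMod 3)ˣ) (a : Fin m → ZMod 3) (c : ZMod 3) :
    (B0 m).image (fun s => s.map (theta0 ε a c).symm.toEmbedding) = B0 m := by
  conv_lhs => rw [← image_theta0_B0 ε a c]
  rw [Finset.image_image]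
  have h1 : (B0 m).image
      ((fun s => Finset.map (theta0 ε a c).symm.toEmbedding s) ∘
        (fun s => Finset.map (theta0 ε a c).toEmbedding s)) = (B0 m).image id :=
    Finset.image_congr (fun s _ => map_symm_map (theta0 ε a c) s)
  rw [h1, Finset.image_id]

lemma Dsg_act (h : Hty m) (σ : Sig m) : Dsg (act h σ) = Dsg σ := by
  rw [Dsg, Dsg]
  have hphi : ∀ s : Finset (Vc m),
      s.map (phi (act h σ)).symm.toEmbedding
        = (s.map (theta0 h.1 h.2.1 h.2.2).symm.toEmbedding).map (phi σ).symm.toEmbedding := by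
    intro s
    rw [Finset.map_map]
    congr 1
  rw [Finset.image_congr (fun s _ => hphi s)]
  have hcomp : (fun s : Finset (Vc m) =>
      Finset.map (phi σ).symm.toEmbedding (Finset.map (theta0 h.1 h.2.1 h.2.2).symm.toEmbedding s))
      = (fun s => Finset.map (phi σ).symm.toEmbedding s) ∘
        (fun s => Finset.map (theta0 h.1 h.2.1 h.2.2).symm.toEmbedding s) := rfl
  rw [hcomp, ← Finset.image_image, image_theta0_symm_B0]

lemma act_injective (σ : Sig m) : Function.Injective (fun h : Hty m => act h σ) := by
  rintro ⟨ε, a, c⟩ ⟨ε', a', c'⟩ hact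
  simp only at hact
  have hpt : ∀ (v : Base m) (t : ZMod 3),
      (ε : ZMod 3) * t + (dotL a v + c) = (ε' : ZMod 3) * t + (dotL a' v + c') := by
    intro v t
    have h1 := congrFun hact v
    have h2 := congrArg (fun e : Fin 3 ≃ ZMod 3 => e ((σ v).symm t)) h1
    simpa [act_apply, Equiv.apply_symm_apply] using h2
  have hd : ∀ v, dotL a v + c = dotL a' v + c' := by
    intro v
    have := hpt v 0
    simpa using this
  have hε : ε = ε' := by
    apply Units.ext
    have h1 := hpt 0 1
    rw [hd 0] at h1
    simpa using h1
  have hc : c = c' := by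
    have := hd 0
    simpa using this
  have ha : a = a' := by
    funext k
    have h1 := hd (Pi.single k 1)
    rw [hc] at h1
    have h2 := add_right_cancel h1
    rwa [dotL_single, dotL_single] at h2
  rw [hε, ha, hc]

lemma exists_act_of_Dsg_eq {σ σ' : Sig m} (hD : Dsg σ = Dsg σ') :
    ∃ h : Hty m, σ' = act h σ := by
  set θ : Vc m ≃ Vc m := (phi σ).symm.trans (phi σ') with hθ
  have θfst : ∀ x : Vc m, (θ x).1 = x.1 := by
    intro x
    rw [hθ, Equiv.trans_apply, phi_fst, phi_symm_fst]
  have hmap : ∀ s ∈ B0 m, s.map θ.toEmbedding ∈ B0 m := by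
    intro s hs
    have h1 : s.map (phi σ).symm.toEmbedding ∈ Dsg σ := Finset.mem_image_of_mem _ hs
    rw [hD, mem_Dsg] at h1
    have h2 : (s.map (phi σ).symm.toEmbedding).map (phi σ').toEmbedding
        = s.map θ.toEmbedding := by
      rw [Finset.map_map]
      congr 1
    rwa [h2] at h1
  have hq : ∀ x y : Vc m, x ≠ y → θ x + θ y + θ (-x - y) = 0 := by
    intro x y hxy
    obtain ⟨hmem, hzx, hzy⟩ := triple_mem_B0 hxy
    have h1 := hmap _ hmem
    have h2 : ({x, y, -x - y} : Finset (Vc m)).map θ.toEmbedding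
        = {θ x, θ y, θ (-x - y)} := by
      simp [Finset.map_insert]
    rw [h2, mem_B0] at h1
    have hd1 : θ x ≠ θ y := fun hc => hxy (θ.injective hc)
    have hd2 : θ x ≠ θ (-x - y) := fun hc => (Ne.symm hzx) (θ.injective hc)
    have hd3 : θ y ≠ θ (-x - y) := fun hc => (Ne.symm hzy) (θ.injective hc)
    have := h1.2
    rwa [sum_triple hd1 hd2 hd3 (fun a : Vc m => a)] at this
  set p := affineHom θ hq with hp
  have hps : ∀ (c : ZMod 3) (x : Vc m), p (c • x) = c • p x := fun c x =>
    addhom_zmod_smul' (affineHom θ hq) c x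
  set c' : ZMod 3 := (θ 0).2 with hc'
  set a : Fin m → ZMod 3 := fun k => (p (Pi.single k 1, 0)).2 with ha
  set e0 : ZMod 3 := (p (0, 1)).2 with he0
  have key : ∀ (v : Base m) (t : ZMod 3), θ (v, t) = (v, e0 * t + (dotL a v + c')) := by
    intro v t
    apply Prod.ext
    · rw [θfst]
    · have hsnd : (θ (v, t)).2 = (p (v, t)).2 + c' := by
        have hpe : p (v, t) = θ (v, t) - θ 0 := affineHom_apply θ hq (v, t)
        rw [hpe, Prod.snd_sub, hc']
        ring
      have hsplit : ((v, t) : Vc m) = (v, 0) + (0, t) := by simp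
      have hv0 : (p (v, 0)).2 = dotL a v := by
        have hdecomp : ((v, 0) : Vc m) = ∑ k, (Pi.single k (v k), (0 : ZMod 3)) := by
          apply Prod.ext
          · rw [Prod.fst_sum]
            exact (Finset.univ_sum_single v).symm
          · rw [Prod.snd_sum]
            simp
        rw [hdecomp, map_sum, Prod.snd_sum]
        have hterm : ∀ k, ((p (Pi.single k (v k), (0 : ZMod 3))).2) = v k * a k := by
          intro k
          have h1 : ((Pi.single k (v k), (0 : ZMod 3)) : Vc m)
              = v k • ((Pi.single k 1, 0) : Vc m) := by
            apply Prod.ext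
            · rw [Prod.smul_fst]
              show Pi.single k (v k) = v k • (Pi.single k 1 : Base m)
              rw [← Pi.single_smul, smul_eq_mul, mul_one]
            · rw [Prod.smul_snd]
              simp
          rw [h1, hps, Prod.smul_snd, smul_eq_mul, ha]
        rw [Finset.sum_congr rfl (fun k _ => hterm k)]
        show ∑ k, v k * a k = dotL a v
        show ∑ k, v k * a k = ∑ k, a k * v k
        exact Finset.sum_congr rfl (fun k _ => mul_comm _ _)
      have h0t : (p ((0 : Base m), t)).2 = e0 * t := by
        have h1 : (((0 : Base m), t) : Vc m) = t • (((0 : Base m), 1) : Vc m) := by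
          apply Prod.ext
          · simp
          · simp
        rw [h1, hps, Prod.smul_snd, smul_eq_mul, he0, mul_comm]
      rw [hsnd, hsplit, map_add, Prod.snd_add, hv0, h0t]
      ring
  have hne : e0 ≠ 0 := by
    intro h0
    have h1 := key 0 0
    have h2 := key 0 1
    rw [h0] at h1 h2
    simp only [zero_mul, zero_add] at h1 h2
    have h3 := θ.injective (h1.trans h2.symm)
    rw [Prod.mk.injEq] at h3
    exact absurd h3.2 (by decide)
  refine ⟨(Units.mk0 e0 hne, a, c'), ?_⟩
  funext v
  apply Equiv.ext
  intro i
  have h1 : θ (v, σ v i) = (v, σ' v i) := by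
    rw [hθ, Equiv.trans_apply]
    have h2 : (phi σ).symm (v, σ v i) = (v, i) := by
      rw [Equiv.symm_apply_eq]
      rfl
    rw [h2]
    rfl
  have h2 := key v (σ v i)
  rw [h1] at h2
  have h3 := congrArg Prod.snd h2
  simp only at h3
  rw [act_apply, Units.val_mk0]
  exact h3

lemma card_Sig : Nat.card (Sig m) = 6 ^ 3 ^ m := by
  rw [Nat.card_eq_fintype_card, Fintype.card_fun]
  have h1 : Fintype.card (Fin 3 ≃ ZMod 3) = 6 := by
    rw [Fintype.card_equiv (Fintype.equivFinOfCardEq (ZMod.card 3)).symm]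
    decide
  have h2 : Fintype.card (Base m) = 3 ^ m := by
    rw [Fintype.card_fun, ZMod.card, Fintype.card_fin]
  rw [h1, h2]

lemma card_Hty : Nat.card (Hty m) = 2 * 3 ^ (m + 1) := by
  rw [Nat.card_eq_fintype_card, Fintype.card_prod, Fintype.card_prod]
  have h1 : Fintype.card (ZMod 3)ˣ = 2 := by
    rw [Fintype.card_units, ZMod.card]
  have h2 : Fintype.card (Fin m → ZMod 3) = 3 ^ m := by
    rw [Fintype.card_fun, ZMod.card, Fintype.card_fin]
  rw [h1, h2, ZMod.card, pow_succ]

def TT (m : ℕ) := {B : Finset (Finset (Pt m)) //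
    isSTS B ∧ (∀ b ∈ B, ∑ j ∈ b, j.1 = 0) ∧
    Module.finrank (ZMod 3) (stsCode 3 B) = 3 ^ (m + 1) - (m + 2)}

noncomputable def secT (hm : 1 ≤ m) (t : TT m) : Sig m :=
  (backward hm t.2.1 t.2.2.1 t.2.2.2).choose

lemma secT_spec (hm : 1 ≤ m) (t : TT m) : t.1 = Dsg (secT hm t) :=
  (backward hm t.2.1 t.2.2.1 t.2.2.2).choose_spec

noncomputable def bigEquiv (hm : 1 ≤ m) : Hty m × TT m ≃ Sig m :=
  Equiv.ofBijective (fun ht => act ht.1 (secT hm ht.2)) (by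
    constructor
    · rintro ⟨h, t⟩ ⟨h', t'⟩ he
      simp only at he
      have hD : Dsg (act h (secT hm t)) = Dsg (act h' (secT hm t')) := by rw [he]
      rw [Dsg_act, Dsg_act] at hD
      have ht2 : t = t' := Subtype.ext (by rw [secT_spec hm t, secT_spec hm t', hD])
      subst ht2
      have hh : h = h' := act_injective (secT hm t) he
      rw [hh]
    · intro σ
      have hmem : isSTS (Dsg σ) ∧ (∀ b ∈ Dsg σ, ∑ j ∈ b, j.1 = 0) ∧
          Module.finrank (ZMod 3) (stsCode 3 (Dsg σ)) = 3 ^ (m + 1) - (m + 2) :=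
        ⟨isSTS_Dsg σ, sum_fst_Dsg σ, finrank_code_Dsg σ⟩
      have hDt : Dsg (secT hm ⟨Dsg σ, hmem⟩) = Dsg σ := (secT_spec hm ⟨Dsg σ, hmem⟩).symm
      obtain ⟨h, hh⟩ := exists_act_of_Dsg_eq hDt
      exact ⟨(h, ⟨Dsg σ, hmem⟩), hh.symm⟩)

lemma main_count (n : ℕ) (hn : 2 ≤ n) :
    Nat.card {B : Finset (Finset (Pt (n - 1))) //
        isSTS B ∧ (∀ b ∈ B, ∑ j ∈ b, j.1 = 0) ∧
        Module.finrank (ZMod 3) (stsCode 3 B) = 3 ^ n - n - 1} =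
      6 ^ 3 ^ (n - 1) / (2 * 3 ^ n) := by
  set m := n - 1 with hm'
  have hm : 1 ≤ m := by omega
  have hn1 : n = m + 1 := by omega
  have hiff : ∀ B : Finset (Finset (Pt m)),
      (isSTS B ∧ (∀ b ∈ B, ∑ j ∈ b, j.1 = 0) ∧
        Module.finrank (ZMod 3) (stsCode 3 B) = 3 ^ n - n - 1)
        ↔ (isSTS B ∧ (∀ b ∈ B, ∑ j ∈ b, j.1 = 0) ∧
        Module.finrank (ZMod 3) (stsCode 3 B) = 3 ^ (m + 1) - (m + 2)) := by
    intro B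
    have he : 3 ^ n - n - 1 = 3 ^ (m + 1) - (m + 2) := by rw [hn1]; omega
    rw [he]
  have hTT : Nat.card (TT m) = 6 ^ 3 ^ m / (2 * 3 ^ (m + 1)) := by
    have h1 := Nat.card_congr (bigEquiv hm)
    rw [Nat.card_prod, card_Hty, card_Sig] at h1
    have hpos : 0 < 2 * 3 ^ (m + 1) := by positivity
    rw [← h1, Nat.mul_div_cancel_left _ hpos]
  calc Nat.card {B : Finset (Finset (Pt m)) //
        isSTS B ∧ (∀ b ∈ B, ∑ j ∈ b, j.1 = 0) ∧
        Module.finrank (ZMod 3) (stsCode 3 B) = 3 ^ n - n - 1}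
      = Nat.card (TT m) := Nat.card_congr (Equiv.subtypeEquivRight hiff)
    _ = 6 ^ 3 ^ m / (2 * 3 ^ (m + 1)) := hTT
    _ = 6 ^ 3 ^ m / (2 * 3 ^ n) := by rw [hn1]

end Count

end S19

theorem stmt19 (n : ℕ) (hn : 2 ≤ n) :
    Nat.card {B : Finset (Finset (terIdx n 1)) //
        isSTS B ∧ (∀ b ∈ B, ∑ j ∈ b, j.1 = 0) ∧
        Module.finrank (ZMod 3) (stsCode 3 B) = 3 ^ n - n - 1} =
      6 ^ 3 ^ (n - 1) / (2 * 3 ^ n) := S19.main_count n hn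
end
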